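/- arXiv:2504.06433 — 5 statements merged into one kernel-verified Lean document; each statement's English description precedes it below -/
import Mathlib

section
/- Let k, m ≥ 1. Work in the polynomial ring over ℂ with one variable x_s for each s ∈ {0,1}^k and one variable z_u for each u ∈ {0,1}^m. Let T_1 = Σ_s c_s·x_s and T_2 = Σ_u d_u·z_u, where the coefficients c_s, d_u ∈ ℂ satisfy: c_𝟙 ≠ 0 and d_𝟙 ≠ 0 (𝟙 denoting the all-ones string of the appropriate length), there exists s ≠ 𝟙 with c_s ≠ 0, and there exists u ≠ 𝟙 with d_u ≠ 0. Fix a nonzero α ∈ ℂ and define P = T_1·T_2 − α·c_𝟙·d_𝟙·x_𝟙·z_𝟙. Then P is irreducible (and in particular indecomposable). -/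
open MvPolynomial

noncomputable section Stmt1Aux

variable {σ : Type*} [DecidableEq σ]

/-- Split off the variable `t`. -/
noncomputable def splitAt (t : σ) :
    MvPolynomial σ ℂ ≃ₐ[ℂ] Polynomial (MvPolynomial {v : σ // v ≠ t} ℂ) :=
  (renameEquiv ℂ (Equiv.optionSubtypeNe t).symm).trans (optionEquivLeft ℂ _)

lemma splitAt_X_self (t : σ) : splitAt t (X t) = Polynomial.X := by
  simp [splitAt, Equiv.optionSubtypeNe_symm_self, optionEquivLeft_X_none]

lemma splitAt_X_ne (t : σ) {v : σ} (h : v ≠ t) :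
    splitAt t (X v) = Polynomial.C (X ⟨v, h⟩) := by
  simp [splitAt, Equiv.optionSubtypeNe_symm_of_ne h, optionEquivLeft_X_some]

lemma splitAt_rename (t : σ) (q : MvPolynomial {v : σ // v ≠ t} ℂ) :
    splitAt t (rename Subtype.val q) = Polynomial.C q := by
  have h : ((splitAt t).toAlgHom.comp
        (rename (Subtype.val : {v : σ // v ≠ t} → σ) : _ →ₐ[ℂ] _)) = Polynomial.CAlgHom := by
    apply algHom_ext
    intro v
    simp only [AlgHom.coe_comp, AlgEquiv.toAlgHom_eq_coe, AlgHom.coe_coe, Function.comp_apply,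
      rename_X, Polynomial.CAlgHom]
    erw [splitAt_X_ne t v.2]
    rfl
  have := congrArg (fun f => f q) (congrArg DFunLike.coe h)
  simpa using this

lemma prime_X_cx (t : σ) : Prime (X t : MvPolynomial σ ℂ) := by
  rw [← MulEquiv.prime_iff (splitAt t).toMulEquiv]
  show Prime (splitAt t (X t))
  rw [splitAt_X_self]
  exact Polynomial.prime_X

lemma coeff_linear_sum {ι τ : Type*} [Fintype ι] [DecidableEq τ] (e : ι → ℂ) (ν : ι → τ)
    (hν : Function.Injective ν) (w : ι) :
    MvPolynomial.coeff (Finsupp.single (ν w) 1) (∑ v : ι, C (e v) * X (ν v)) = e w := by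
  classical
  rw [MvPolynomial.coeff_sum]
  have h : ∀ v : ι, MvPolynomial.coeff (Finsupp.single (ν w) 1) (C (e v) * X (ν v)) =
      if v = w then e v else 0 := by
    intro v
    rw [coeff_C_mul, coeff_X']
    by_cases h : v = w
    · subst h; simp
    · have : ν v ≠ ν w := fun hh => h (hν hh)
      have h2 : ¬ (Finsupp.single (ν v) 1 = Finsupp.single (ν w) (1:ℕ)) := by
        intro hh
        exact this ((Finsupp.single_left_inj one_ne_zero).mp hh)
      simp [h, h2]
  simp_rw [h]
  simp

lemma prime_linear {τ : Type*} [Fintype τ] [DecidableEq τ] (e : τ → ℂ) (v₀ : τ)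
    (he : e v₀ ≠ 0) : Prime (∑ v : τ, C (e v) * X v : MvPolynomial τ ℂ) := by
  classical
  set S : MvPolynomial τ ℂ := ∑ v ∈ Finset.univ.erase v₀, C (e v) * X v with hS
  have hA : (∑ v : τ, C (e v) * X v) = C (e v₀) * X v₀ + S := by
    rw [hS]
    exact (Finset.add_sum_erase _ _ (Finset.mem_univ v₀)).symm
  let ψ : MvPolynomial τ ℂ →ₐ[ℂ] MvPolynomial τ ℂ :=
    aeval (fun v => if v = v₀ then C (e v₀) * X v₀ + S else X v)
  let φ : MvPolynomial τ ℂ →ₐ[ℂ] MvPolynomial τ ℂ :=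
    aeval (fun v => if v = v₀ then C (e v₀)⁻¹ * (X v₀ - S) else X v)
  have hψS : ψ S = S := by
    rw [hS, map_sum]
    refine Finset.sum_congr rfl fun v hv => ?_
    have hne : v ≠ v₀ := (Finset.mem_erase.mp hv).1
    simp [ψ, hne, aeval_X]
  have hφS : φ S = S := by
    rw [hS, map_sum]
    refine Finset.sum_congr rfl fun v hv => ?_
    have hne : v ≠ v₀ := (Finset.mem_erase.mp hv).1
    simp [φ, hne, aeval_X]
  have h1 : ψ.comp φ = AlgHom.id ℂ _ := by
    apply algHom_ext
    intro v
    by_cases h : v = v₀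
    · subst h
      simp only [AlgHom.coe_comp, Function.comp_apply, AlgHom.coe_id, id_eq]
      rw [show φ (X v) = C (e v)⁻¹ * (X v - S) by simp [φ, aeval_X]]
      rw [map_mul, map_sub, hψS]
      rw [show ψ (X v) = C (e v) * X v + S by simp [ψ, aeval_X]]
      rw [show (ψ (C (e v)⁻¹) : MvPolynomial τ ℂ) = C (e v)⁻¹ by simp [ψ]]
      rw [add_sub_cancel_right, ← mul_assoc, ← C_mul, inv_mul_cancel₀ he, C_1, one_mul]
    · simp [ψ, φ, h, aeval_X]
  have h2 : φ.comp ψ = AlgHom.id ℂ _ := by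
    apply algHom_ext
    intro v
    by_cases h : v = v₀
    · subst h
      simp only [AlgHom.coe_comp, Function.comp_apply, AlgHom.coe_id, id_eq]
      rw [show ψ (X v) = C (e v) * X v + S by simp [ψ, aeval_X]]
      rw [map_add, map_mul, hφS]
      rw [show φ (X v) = C (e v)⁻¹ * (X v - S) by simp [φ, aeval_X]]
      rw [show (φ (C (e v)) : MvPolynomial τ ℂ) = C (e v) by simp [φ]]
      rw [← mul_assoc, ← C_mul, mul_inv_cancel₀ he, C_1, one_mul, sub_add_cancel]
    · simp [ψ, φ, h, aeval_X]
  let E : MvPolynomial τ ℂ ≃ₐ[ℂ] MvPolynomial τ ℂ := AlgEquiv.ofAlgHom ψ φ h1 h2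
  have hE : E (X v₀) = ∑ v : τ, C (e v) * X v := by
    rw [hA]
    show ψ (X v₀) = _
    simp [ψ, aeval_X]
  rw [← hE]
  exact (MulEquiv.prime_iff E.toMulEquiv (p := (X v₀ : MvPolynomial τ ℂ))).mpr (prime_X_cx v₀)

lemma mv_isUnit_fin : ∀ (n : ℕ) (g : MvPolynomial (Fin n) ℂ), IsUnit g → ∃ a : ℂ, g = C a := by
  intro n
  induction n with
  | zero =>
    intro g _
    refine ⟨isEmptyAlgEquiv ℂ (Fin 0) g, ?_⟩
    have h := (isEmptyAlgEquiv ℂ (Fin 0)).symm_apply_apply g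
    have h2 : ∀ a : ℂ, (isEmptyAlgEquiv ℂ (Fin 0)).symm a = C a := by
      intro a
      have := (isEmptyAlgEquiv ℂ (Fin 0)).symm.commutes a
      simpa [algebraMap_eq] using this
    conv_lhs => rw [← h, h2]
  | succ n ih =>
    intro g hg
    have h1 : IsUnit (finSuccEquiv ℂ n g) := hg.map (finSuccEquiv ℂ n)
    rw [Polynomial.isUnit_iff] at h1
    obtain ⟨r, hr, hrg⟩ := h1
    obtain ⟨a, ha⟩ := ih r hr
    refine ⟨a, (finSuccEquiv ℂ n).injective ?_⟩
    rw [← hrg, ha]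
    have h2 := DFunLike.congr_fun (finSuccEquiv_comp_C_eq_C (R := ℂ) n) a
    simp only [RingHom.coe_comp, Function.comp_apply, RingHom.coe_coe] at h2
    rw [← h2, AlgEquiv.apply_symm_apply]

lemma mv_isUnit_eq_C {σ : Type*} {g : MvPolynomial σ ℂ} (hg : IsUnit g) : ∃ a : ℂ, g = C a := by
  obtain ⟨h, hh⟩ := hg.exists_right_inv
  obtain ⟨s, g', h', rfl, rfl⟩ := exists_finset_rename₂ g h
  have hinj := rename_injective (R := ℂ) (Subtype.val : {x // x ∈ s} → σ) Subtype.coe_injective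
  have h1 : g' * h' = 1 := by
    apply hinj
    rw [map_mul, map_one, hh]
  have hu : IsUnit g' := IsUnit.of_mul_eq_one _ h1
  have hu2 : IsUnit (renameEquiv ℂ (Fintype.equivFin s) g') := hu.map _
  obtain ⟨a, ha⟩ := mv_isUnit_fin _ _ hu2
  refine ⟨a, ?_⟩
  have : g' = C a := by
    apply (renameEquiv ℂ (Fintype.equivFin s)).injective
    rw [ha]
    simp [renameEquiv_apply, rename_C]
  rw [this, rename_C]

lemma irreducible_linear_poly {R : Type*} [CommRing R] [IsDomain R] {A B : R}
    (hA : Irreducible A) (hAB : ¬ A ∣ B) :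
    Irreducible (Polynomial.C A * Polynomial.X + Polynomial.C B) := by
  have hA0 : A ≠ 0 := hA.ne_zero
  set f : Polynomial R := Polynomial.C A * Polynomial.X + Polynomial.C B with hf
  have hdeg : f.natDegree = 1 := by
    rw [hf]
    exact Polynomial.natDegree_linear hA0
  have hc1 : f.coeff 1 = A := by simp [hf]
  have hc0 : f.coeff 0 = B := by simp [hf]
  have hf0 : f ≠ 0 := fun h => hA0 (by rw [← hc1, h, Polynomial.coeff_zero])
  have key : ∀ g h : Polynomial R, f = g * h → h.natDegree = 0 → IsUnit h := by
    intro g h hfgh h0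
    obtain ⟨r, hr⟩ := Polynomial.natDegree_eq_zero.mp h0
    have hrA : r ∣ A := by
      refine ⟨g.coeff 1, ?_⟩
      rw [← hc1, hfgh, ← hr, Polynomial.coeff_mul_C, mul_comm]
    have hrB : r ∣ B := by
      refine ⟨g.coeff 0, ?_⟩
      rw [← hc0, hfgh, ← hr, Polynomial.coeff_mul_C, mul_comm]
    obtain ⟨s, hs⟩ := hrA
    rcases hA.isUnit_or_isUnit hs with hu | hu
    · rw [← hr]; exact hu.map Polynomial.C
    · exfalso
      apply hAB
      have hassoc : Associated r A := ⟨hu.unit, by rw [hs]; rfl⟩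
      exact (hassoc.symm.dvd).trans hrB
  constructor
  · intro h
    have := Polynomial.natDegree_eq_zero_of_isUnit h
    rw [hdeg] at this
    exact one_ne_zero this
  · intro g h hfgh
    have hg0 : g ≠ 0 := fun hh => hf0 (by rw [hfgh, hh, zero_mul])
    have hh0 : h ≠ 0 := fun hh => hf0 (by rw [hfgh, hh, mul_zero])
    have hsum : g.natDegree + h.natDegree = 1 := by
      rw [← Polynomial.natDegree_mul hg0 hh0, ← hfgh, hdeg]
    rcases Nat.add_eq_one_iff.mp hsum with ⟨hga, _⟩ | ⟨_, hha⟩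
    · exact Or.inl (key h g (by rwa [mul_comm] at hfgh) hga)
    · exact Or.inr (key g h hfgh hha)

end Stmt1Aux

/-- A polynomial is decomposable if it is a product of two nonconstant polynomials
depending on disjoint sets of variables. -/
def Decomposable {σ : Type*} [DecidableEq σ] (f : MvPolynomial σ ℂ) : Prop :=
  ∃ g h : MvPolynomial σ ℂ,
    (¬ ∃ c : ℂ, g = MvPolynomial.C c) ∧ (¬ ∃ c : ℂ, h = MvPolynomial.C c) ∧
    Disjoint g.vars h.vars ∧ f = g * h

theorem stmt1 (k m : ℕ) (hk : 1 ≤ k) (hm : 1 ≤ m)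
    (c : (Fin k → Bool) → ℂ) (d : (Fin m → Bool) → ℂ)
    (hc1 : c (fun _ => true) ≠ 0) (hd1 : d (fun _ => true) ≠ 0)
    (hc2 : ∃ s : Fin k → Bool, s ≠ (fun _ => true) ∧ c s ≠ 0)
    (hd2 : ∃ u : Fin m → Bool, u ≠ (fun _ => true) ∧ d u ≠ 0)
    (α : ℂ) (hα : α ≠ 0)
    (P : MvPolynomial ((Fin k → Bool) ⊕ (Fin m → Bool)) ℂ)
    (hP : P =
      (∑ s : Fin k → Bool, MvPolynomial.C (c s) * MvPolynomial.X (Sum.inl s)) *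
        (∑ u : Fin m → Bool, MvPolynomial.C (d u) * MvPolynomial.X (Sum.inr u)) -
      MvPolynomial.C (α * c (fun _ => true) * d (fun _ => true)) *
        MvPolynomial.X (Sum.inl (fun _ => true)) * MvPolynomial.X (Sum.inr (fun _ => true))) :
    Irreducible P ∧ ¬ Decomposable P := by
  classical
  obtain ⟨s', hs'ne, hs'⟩ := hc2
  obtain ⟨u', hu'ne, hu'⟩ := hd2
  -- the distinguished variable and the remaining variables
  set t : (Fin k → Bool) ⊕ (Fin m → Bool) := Sum.inl (fun _ => true) with ht
  let τ := {v : (Fin k → Bool) ⊕ (Fin m → Bool) // v ≠ t}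
  let ιz : (Fin m → Bool) → τ := fun u => ⟨Sum.inr u, by simp [ht]⟩
  let ιx : {s : Fin k → Bool // s ≠ (fun _ => true)} → τ :=
    fun s => ⟨Sum.inl s.1, by simp [ht, s.2]⟩
  have hιz_inj : Function.Injective ιz := by
    intro a b hab
    exact Sum.inr.inj (congrArg Subtype.val hab)
  -- the pieces
  set T2 : MvPolynomial τ ℂ := ∑ u : Fin m → Bool, C (d u) * X (ιz u) with hT2
  set A : MvPolynomial τ ℂ :=
    C (c (fun _ => true)) * T2 - C (α * c (fun _ => true) * d (fun _ => true)) *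
      X (ιz (fun _ => true)) with hA
  set T1r : MvPolynomial τ ℂ :=
    ∑ s : {s : Fin k → Bool // s ≠ (fun _ => true)}, C (c s.1) * X (ιx s) with hT1r
  set B : MvPolynomial τ ℂ := T1r * T2 with hB
  -- A as a single linear sum
  set eA : τ → ℂ := fun v => Sum.elim (fun _ => 0)
    (fun u => if u = (fun _ => true) then
        c (fun _ => true) * d (fun _ => true) - α * c (fun _ => true) * d (fun _ => true)
      else c (fun _ => true) * d u) v.1 with heA
  have hA_sum : A = ∑ v : τ, C (eA v) * X v := by
    have himg : ∀ v : τ, v ∈ Finset.univ → v ∉ Finset.univ.image ιz → C (eA v) * X v = 0 := by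
      intro v _ hv
      have hz : eA v = 0 := by
        rcases hval : v.1 with s | u
        · simp [heA, hval]
        · exact absurd (Finset.mem_image.mpr ⟨u, Finset.mem_univ _, Subtype.ext hval.symm⟩) hv
      rw [hz, map_zero, zero_mul]
    have step1 : ∑ v : τ, C (eA v) * X v = ∑ u : Fin m → Bool, C (eA (ιz u)) * X (ιz u) := by
      rw [← Finset.sum_image (f := fun v => C (eA v) * X v) (g := ιz)
          (fun a _ b _ hab => hιz_inj hab)]
      exact (Finset.sum_subset (Finset.subset_univ _) himg).symm
    rw [step1]
    have h1 : C (α * c (fun _ => true) * d (fun _ => true)) * X (ιz (fun _ => true)) =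
        ∑ u : Fin m → Bool, if u = (fun _ => true) then
          C (α * c (fun _ => true) * d (fun _ => true)) * X (ιz u) else 0 := by
      rw [Finset.sum_ite_eq' Finset.univ]
      simp
    have h2 : C (c (fun _ => true)) * T2 =
        ∑ u : Fin m → Bool, C (c (fun _ => true) * d u) * X (ιz u) := by
      rw [hT2, Finset.mul_sum]
      exact Finset.sum_congr rfl fun u _ => by rw [← mul_assoc, ← C_mul]
    rw [hA, h2, h1, ← Finset.sum_sub_distrib]
    refine Finset.sum_congr rfl fun u _ => ?_
    have heAz : eA (ιz u) = if u = (fun _ => true) then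
        c (fun _ => true) * d (fun _ => true) - α * c (fun _ => true) * d (fun _ => true)
      else c (fun _ => true) * d u := by
      simp [heA, ιz]
    by_cases h : u = (fun _ => true)
    · rw [if_pos h, heAz, if_pos h, ← sub_mul, ← C_sub, h]
    · rw [if_neg h, heAz, if_neg h, sub_zero]
  have hAprime : Prime A := by
    rw [hA_sum]
    refine prime_linear eA (ιz u') ?_
    have : eA (ιz u') = c (fun _ => true) * d u' := by
      simp [heA, ιz, hu'ne]
    rw [this]
    exact mul_ne_zero hc1 hu'
  have hAirr : Irreducible A := hAprime.irreducible
  -- evaluation point killing A but not B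
  set w : τ → ℂ := fun v => Sum.elim
    (fun s => if s = s' then (1:ℂ) else 0)
    (fun u => if u = (fun _ => true) then d u'
      else if u = u' then -(d (fun _ => true)) * (1 - α) else 0) v.1 with hw
  have hevT2 : eval w T2 = α * d (fun _ => true) * d u' := by
    rw [hT2, map_sum]
    have hterm : ∀ u : Fin m → Bool, eval w (C (d u) * X (ιz u)) =
        (if u = (fun _ => true) then d (fun _ => true) * d u' else 0) +
        (if u = u' then d u' * (-(d (fun _ => true)) * (1 - α)) else 0) := by
      intro u
      rw [map_mul, eval_C, eval_X]
      have hwv : w (ιz u) = if u = (fun _ => true) then d u'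
          else if u = u' then -(d (fun _ => true)) * (1 - α) else 0 := by
        simp [hw, ιz]
      rw [hwv]
      by_cases h1 : u = (fun _ => true)
      · rw [h1]
        have hone : (fun _ => true) ≠ u' := fun hh => hu'ne hh.symm
        simp [hone]
      · by_cases h2 : u = u'
        · rw [h2]
          simp [fun hh => h1 (h2.trans hh), hu'ne]
        · simp [h1, h2]
    rw [Finset.sum_congr rfl (fun u _ => hterm u), Finset.sum_add_distrib,
      Finset.sum_ite_eq' Finset.univ, Finset.sum_ite_eq' Finset.univ]
    simp only [Finset.mem_univ, if_true]
    ring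
  have hevA : eval w A = 0 := by
    rw [hA, map_sub, map_mul, map_mul, eval_C, eval_C, eval_X, hevT2]
    have hwv : w (ιz (fun _ => true)) = d u' := by simp [hw, ιz]
    rw [hwv]
    ring
  have hevT1r : eval w T1r = c s' := by
    rw [hT1r, map_sum]
    have hterm : ∀ s : {s : Fin k → Bool // s ≠ (fun _ => true)},
        eval w (C (c s.1) * X (ιx s)) = if s = ⟨s', hs'ne⟩ then c s' else 0 := by
      intro s
      rw [map_mul, eval_C, eval_X]
      have hwv : w (ιx s) = if s.1 = s' then 1 else 0 := by simp [hw, ιx]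
      rw [hwv]
      by_cases h : s = ⟨s', hs'ne⟩
      · rw [h]
        simp
      · have hne : s.1 ≠ s' := fun hh => h (Subtype.ext hh)
        simp [hne, h]
    rw [Finset.sum_congr rfl (fun s _ => hterm s), Finset.sum_ite_eq' Finset.univ]
    simp
  have hndvd : ¬ A ∣ B := by
    rintro ⟨q, hq⟩
    have h0 := congrArg (eval w) hq
    have h1 : eval w B = eval w A * eval w q := by rw [hq, map_mul]
    rw [hevA, zero_mul, hB, map_mul, hevT1r, hevT2] at h1
    exact mul_ne_zero hs' (mul_ne_zero (mul_ne_zero hα hd1) hu') h1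
  -- decomposition of P
  have hrT2 : rename (Subtype.val : τ → _) T2 =
      ∑ u : Fin m → Bool, C (d u) * X (Sum.inr u) := by
    rw [hT2, map_sum]
    refine Finset.sum_congr rfl fun u _ => ?_
    rw [map_mul, rename_C, rename_X]
  have hrT1r : rename (Subtype.val : τ → _) T1r =
      ∑ s : {s : Fin k → Bool // s ≠ (fun _ => true)}, C (c s.1) * X (Sum.inl s.1) := by
    rw [hT1r, map_sum]
    refine Finset.sum_congr rfl fun s _ => ?_
    rw [map_mul, rename_C, rename_X]
  have hrA : rename (Subtype.val : τ → _) A =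
      C (c (fun _ => true)) * (∑ u : Fin m → Bool, C (d u) * X (Sum.inr u)) -
        C (α * c (fun _ => true) * d (fun _ => true)) * X (Sum.inr (fun _ => true)) := by
    rw [hA, map_sub, map_mul, map_mul, rename_C, rename_C, rename_X, hrT2]
  have hrB : rename (Subtype.val : τ → _) B =
      (∑ s : {s : Fin k → Bool // s ≠ (fun _ => true)}, C (c s.1) * X (Sum.inl s.1)) *
        (∑ u : Fin m → Bool, C (d u) * X (Sum.inr u)) := by
    rw [hB, map_mul, hrT1r, hrT2]
  have hT1 : (∑ s : Fin k → Bool, C (c s) * X (Sum.inl s) :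
        MvPolynomial ((Fin k → Bool) ⊕ (Fin m → Bool)) ℂ) =
      C (c (fun _ => true)) * X t +
        ∑ s : {s : Fin k → Bool // s ≠ (fun _ => true)}, C (c s.1) * X (Sum.inl s.1) := by
    rw [← Finset.add_sum_erase Finset.univ (fun s => C (c s) * X (Sum.inl s))
      (Finset.mem_univ (fun _ => true))]
    congr 1
    exact Finset.sum_subtype _ (by simp) _
  have hPdecomp : P = X t * rename Subtype.val A + rename Subtype.val B := by
    rw [hP, hT1, hrA, hrB]
    ring
  have hPsplit : splitAt t P = Polynomial.C A * Polynomial.X + Polynomial.C B := by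
    rw [hPdecomp, map_add, map_mul, splitAt_X_self, splitAt_rename, splitAt_rename]
    ring
  have hfirr := irreducible_linear_poly hAirr hndvd
  have hPirr : Irreducible P := by
    rw [← (MulEquiv.irreducible_iff (splitAt t) (x := P))]
    show Irreducible (splitAt t P)
    rw [hPsplit]
    exact hfirr
  refine ⟨hPirr, ?_⟩
  rintro ⟨g, h, hgc, hhc, -, hgh⟩
  rcases hPirr.isUnit_or_isUnit hgh with hu | hu
  · exact hgc (mv_isUnit_eq_C hu)
  · exact hhc (mv_isUnit_eq_C hu)
end

section
/- Let k, m, n ≥ 1. Work in the polynomial ring over ℂ with one variable x_s for each s ∈ {0,1}^k, one variable z_u for each u ∈ {0,1}^m, and one variable w_v for each v ∈ {0,1}^n. Let T_1 = Σ_s c_s·x_s and T_2 = Σ_{u,v} d_{u,v}·z_u·w_v, where the coefficients satisfy: c_𝟙 ≠ 0 and d_{𝟙,𝟙} ≠ 0; there exists s ≠ 𝟙 with c_s ≠ 0; there exist u ≠ 𝟙 and v with d_{u,v} ≠ 0; and there exist u and v ≠ 𝟙 with d_{u,v} ≠ 0. Fix a nonzero α ∈ ℂ and define P = T_1·T_2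 − α·c_𝟙·d_{𝟙,𝟙}·x_𝟙·z_𝟙·w_𝟙. Then P is irreducible (and in particular indecomposable). -/
open MvPolynomial

namespace StmtAux

set_option linter.unusedSectionVars false

variable {σ : Type*} [Fintype σ] [DecidableEq σ]

lemma degreeOf_mul_eq' (i : σ) (f g : MvPolynomial σ ℂ) (hf : f ≠ 0) (hg : g ≠ 0) :
    (f * g).degreeOf i = f.degreeOf i + g.degreeOf i := by
  have hne : Nonempty σ := ⟨i⟩
  obtain ⟨n, hn⟩ := Nat.exists_eq_succ_of_ne_zero (Fintype.card_ne_zero (α := σ))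
  let e₀ : σ ≃ Fin (n + 1) := Fintype.equivFinOfCardEq hn
  let e : σ ≃ Fin (n + 1) := e₀.trans (Equiv.swap (e₀ i) 0)
  have hei : e i = 0 := by simp [e, Equiv.swap_apply_left]
  have key : ∀ p : MvPolynomial σ ℂ,
      p.degreeOf i = (MvPolynomial.finSuccEquiv ℂ n (rename e p)).natDegree := by
    intro p
    rw [natDegree_finSuccEquiv, ← hei, degreeOf_rename_of_injective e.injective]
  have hre : ∀ p : MvPolynomial σ ℂ, p ≠ 0 → finSuccEquiv ℂ n (rename e p) ≠ 0 := by
    intro p hp h0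
    apply hp
    have h1 : rename e p = 0 := by
      apply (finSuccEquiv ℂ n).injective
      simpa using h0
    exact rename_injective e e.injective (by simpa using h1)
  rw [key, key f, key g, map_mul, map_mul, Polynomial.natDegree_mul (hre f hf) (hre g hg)]

lemma degreeOf_le_of_dvd (i : σ) {p q : MvPolynomial σ ℂ} (h : p ∣ q) (hq : q ≠ 0) :
    p.degreeOf i ≤ q.degreeOf i := by
  obtain ⟨r, rfl⟩ := h
  have hp : p ≠ 0 := fun h0 => hq (by simp [h0])
  have hr : r ≠ 0 := fun h0 => hq (by simp [h0])
  rw [degreeOf_mul_eq' i p r hp hr]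
  exact Nat.le_add_right _ _

lemma eq_C_of_degreeOf_eq_zero {p : MvPolynomial σ ℂ} (h : ∀ i, p.degreeOf i = 0) :
    ∃ a, p = C a := by
  refine ⟨coeff 0 p, ?_⟩
  ext mexp
  rcases eq_or_ne mexp 0 with rfl | hm
  · simp
  · rw [coeff_C, if_neg (fun hh => hm hh.symm)]
    by_contra hc
    obtain ⟨j, hj⟩ := Finsupp.ne_iff.mp hm
    have hmem : mexp ∈ p.support := mem_support_iff.mpr hc
    have h2 : mexp j ≤ p.degreeOf j := by
      rw [degreeOf_eq_sup]
      exact Finset.le_sup (f := fun m => m j) hmem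
    rw [h j] at h2
    simp at hj
    omega

lemma exists_C_of_isUnit {p : MvPolynomial σ ℂ} (h : IsUnit p) : ∃ a, p = C a := by
  obtain ⟨q, hq⟩ := h.exists_right_inv
  have hp0 : p ≠ 0 := fun h0 => by simp [h0] at hq
  have hq0 : q ≠ 0 := fun h0 => by simp [h0] at hq
  apply eq_C_of_degreeOf_eq_zero
  intro i
  have := degreeOf_mul_eq' i p q hp0 hq0
  rw [hq] at this
  have h1 : (1 : MvPolynomial σ ℂ).degreeOf i = 0 := by
    simpa using degreeOf_C (1 : ℂ) i
  omega

lemma prime_X' (i : σ) : Prime (X i : MvPolynomial σ ℂ) := by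
  have hne : Nonempty σ := ⟨i⟩
  obtain ⟨n, hn⟩ := Nat.exists_eq_succ_of_ne_zero (Fintype.card_ne_zero (α := σ))
  let e₀ : σ ≃ Fin (n + 1) := Fintype.equivFinOfCardEq hn
  let e : σ ≃ Fin (n + 1) := e₀.trans (Equiv.swap (e₀ i) 0)
  have hei : e i = 0 := by simp [e, Equiv.swap_apply_left]
  let E := ((renameEquiv ℂ e).trans (finSuccEquiv ℂ n)).toRingEquiv.toMulEquiv
  have hEX : E (X i) = Polynomial.X := by
    show (finSuccEquiv ℂ n) ((renameEquiv ℂ e) (X i)) = Polynomial.X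
    rw [renameEquiv_apply, rename_X, hei, finSuccEquiv_X_zero]
  rw [← MulEquiv.prime_iff E, hEX]
  exact Polynomial.prime_X

lemma X_dvd_iff_coeff {i : σ} {p : MvPolynomial σ ℂ} :
    X i ∣ p ↔ ∀ m : σ →₀ ℕ, m i = 0 → coeff m p = 0 := by
  rw [X_dvd_iff_modMonomial_eq_zero]
  constructor
  · intro h mexp hm
    have h2 := congrArg (coeff mexp) h
    rwa [coeff_modMonomial_of_not_le, coeff_zero] at h2
    rw [Finsupp.single_le_iff, hm]
    omega
  · intro h
    ext mexp
    by_cases hle : Finsupp.single i 1 ≤ mexp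
    · simp [coeff_modMonomial_of_le _ hle]
    · rw [coeff_modMonomial_of_not_le _ hle, h mexp ?_, coeff_zero]
      rw [Finsupp.single_le_iff] at hle
      omega

lemma degreeOf_le_of_coeff (p : MvPolynomial σ ℂ) (j : σ) (N : ℕ)
    (h : ∀ mexp : σ →₀ ℕ, N < mexp j → coeff mexp p = 0) : p.degreeOf j ≤ N := by
  rw [degreeOf_eq_sup]
  apply Finset.sup_le
  intro mexp hmem
  by_contra hgt
  push_neg at hgt
  exact (mem_support_iff.mp hmem) (h mexp hgt)

end StmtAux

namespace StmtAux2

set_option linter.unusedSectionVars false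
set_option maxHeartbeats 1000000

variable {k m n : ℕ}

abbrev σT (k m n : ℕ) := (Fin k → Bool) ⊕ ((Fin m → Bool) ⊕ (Fin n → Bool))

noncomputable def μf (u : Fin m → Bool) (v : Fin n → Bool) : σT k m n →₀ ℕ :=
  Finsupp.single (Sum.inr (Sum.inl u)) 1 + Finsupp.single (Sum.inr (Sum.inr v)) 1

noncomputable def νf (s : Fin k → Bool) (u : Fin m → Bool) (v : Fin n → Bool) : σT k m n →₀ ℕ :=
  Finsupp.single (Sum.inl s) 1 + μf u v

@[simp] lemma μf_inl (u : Fin m → Bool) (v : Fin n → Bool) (t : Fin k → Bool) :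
    μf (k := k) u v (Sum.inl t) = 0 := by
  simp [μf, Finsupp.single_apply]

@[simp] lemma μf_z (u : Fin m → Bool) (v : Fin n → Bool) (t : Fin m → Bool) :
    μf (k := k) u v (Sum.inr (Sum.inl t)) = if u = t then 1 else 0 := by
  simp [μf, Finsupp.single_apply]

@[simp] lemma μf_w (u : Fin m → Bool) (v : Fin n → Bool) (t : Fin n → Bool) :
    μf (k := k) u v (Sum.inr (Sum.inr t)) = if v = t then 1 else 0 := by
  simp [μf, Finsupp.single_apply]

@[simp] lemma νf_inl (s u v t) :
    νf (k := k) (m := m) (n := n) s u v (Sum.inl t) = if s = t then 1 else 0 := by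
  simp [νf, μf, Finsupp.single_apply]

@[simp] lemma νf_z (s u v t) :
    νf (k := k) (m := m) (n := n) s u v (Sum.inr (Sum.inl t)) = if u = t then 1 else 0 := by
  simp [νf, μf, Finsupp.single_apply]

@[simp] lemma νf_w (s u v t) :
    νf (k := k) (m := m) (n := n) s u v (Sum.inr (Sum.inr t)) = if v = t then 1 else 0 := by
  simp [νf, μf, Finsupp.single_apply]

lemma μf_inj {u v u' v'} (h : μf (k := k) (m := m) (n := n) u v = μf u' v') :
    u = u' ∧ v = v' := by
  constructor
  · by_contra hne
    have h1 := DFunLike.congr_fun h (Sum.inr (Sum.inl u))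
    rw [μf_z, μf_z, if_pos rfl, if_neg (show ¬ (u' = u) from fun hh => hne hh.symm)] at h1
    exact one_ne_zero h1
  · by_contra hne
    have h1 := DFunLike.congr_fun h (Sum.inr (Sum.inr v))
    rw [μf_w, μf_w, if_pos rfl, if_neg (show ¬ (v' = v) from fun hh => hne hh.symm)] at h1
    exact one_ne_zero h1

lemma νf_inj {s u v s' u' v'} (h : νf (k := k) (m := m) (n := n) s u v = νf s' u' v') :
    s = s' ∧ u = u' ∧ v = v' := by
  refine ⟨?_, ?_, ?_⟩
  · by_contra hne
    have h1 := DFunLike.congr_fun h (Sum.inl s)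
    rw [νf_inl, νf_inl, if_pos rfl, if_neg (show ¬ (s' = s) from fun hh => hne hh.symm)] at h1
    exact one_ne_zero h1
  · by_contra hne
    have h1 := DFunLike.congr_fun h (Sum.inr (Sum.inl u))
    rw [νf_z, νf_z, if_pos rfl, if_neg (show ¬ (u' = u) from fun hh => hne hh.symm)] at h1
    exact one_ne_zero h1
  · by_contra hne
    have h1 := DFunLike.congr_fun h (Sum.inr (Sum.inr v))
    rw [νf_w, νf_w, if_pos rfl, if_neg (show ¬ (v' = v) from fun hh => hne hh.symm)] at h1
    exact one_ne_zero h1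

lemma νf_ne_zero (s u v) : νf (k := k) (m := m) (n := n) s u v ≠ 0 := by
  intro h0
  have h1 := DFunLike.congr_fun h0 (Sum.inr (Sum.inl u))
  rw [νf_z, if_pos rfl] at h1
  exact one_ne_zero h1

lemma coeff_sum2 (f : (Fin m → Bool) → (Fin n → Bool) → ℂ) (u : Fin m → Bool) (v : Fin n → Bool) :
    coeff (μf (k := k) u v) (∑ u', ∑ v', monomial (μf u' v') (f u' v')) = f u v := by
  rw [coeff_sum, Finset.sum_eq_single u]
  · rw [coeff_sum, Finset.sum_eq_single v]
    · rw [coeff_monomial, if_pos rfl]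
    · intro v' _ hv'
      rw [coeff_monomial, if_neg (fun hEq => hv' (μf_inj hEq).2)]
    · intro hv; exact absurd (Finset.mem_univ v) hv
  · intro u' _ hu'
    rw [coeff_sum]
    apply Finset.sum_eq_zero
    intro v' _
    rw [coeff_monomial, if_neg (fun hEq => hu' (μf_inj hEq).1)]
  · intro hu; exact absurd (Finset.mem_univ u) hu

lemma coeff_sum3 (f : (Fin k → Bool) → (Fin m → Bool) → (Fin n → Bool) → ℂ) (s u v) :
    coeff (νf (k := k) (m := m) (n := n) s u v)
      (∑ s', ∑ u', ∑ v', monomial (νf s' u' v') (f s' u' v')) = f s u v := by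
  rw [coeff_sum, Finset.sum_eq_single s]
  · rw [coeff_sum, Finset.sum_eq_single u]
    · rw [coeff_sum, Finset.sum_eq_single v]
      · rw [coeff_monomial, if_pos rfl]
      · intro v' _ hv'
        rw [coeff_monomial, if_neg (fun hEq => hv' (νf_inj hEq).2.2)]
      · intro hv; exact absurd (Finset.mem_univ v) hv
    · intro u' _ hu'
      rw [coeff_sum]
      apply Finset.sum_eq_zero
      intro v' _
      rw [coeff_monomial, if_neg (fun hEq => hu' (νf_inj hEq).2.1)]
    · intro hu; exact absurd (Finset.mem_univ u) hu
  · intro s' _ hs'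
    rw [coeff_sum]
    apply Finset.sum_eq_zero
    intro u' _
    rw [coeff_sum]
    apply Finset.sum_eq_zero
    intro v' _
    rw [coeff_monomial, if_neg (fun hEq => hs' (νf_inj hEq).1)]
  · intro hs; exact absurd (Finset.mem_univ s) hs

variable (c : (Fin k → Bool) → ℂ) (d : (Fin m → Bool) → (Fin n → Bool) → ℂ)

noncomputable def T2m : MvPolynomial (σT k m n) ℂ :=
  ∑ u, ∑ v, monomial (μf u v) (d u v)

noncomputable def S3 : MvPolynomial (σT k m n) ℂ :=
  ∑ s, ∑ u, ∑ v, monomial (νf s u v) (c s * d u v)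

noncomputable def T1' : MvPolynomial (σT k m n) ℂ :=
  ∑ s, monomial (Finsupp.single (Sum.inl s) 1) (if s = (fun _ => true) then 0 else c s)

lemma CXX_eq (a : ℂ) (u : Fin m → Bool) (v : Fin n → Bool) :
    C a * X (Sum.inr (Sum.inl u)) * X (Sum.inr (Sum.inr v))
      = (monomial (μf (k := k) u v) a : MvPolynomial (σT k m n) ℂ) := by
  rw [C_mul_X_eq_monomial, ← pow_one (X (Sum.inr (Sum.inr v))), ← monomial_add_single]
  rfl

lemma hT2 : (∑ u, ∑ v, C (d u v) * X (Sum.inr (Sum.inl u)) * X (Sum.inr (Sum.inr v))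
      : MvPolynomial (σT k m n) ℂ) = T2m (k := k) d := by
  refine Finset.sum_congr rfl fun u _ => Finset.sum_congr rfl fun v _ => ?_
  rw [CXX_eq]

lemma hT1T2 :
    (∑ s, C (c s) * X (Sum.inl s) : MvPolynomial (σT k m n) ℂ) *
      (∑ u, ∑ v, C (d u v) * X (Sum.inr (Sum.inl u)) * X (Sum.inr (Sum.inr v))) = S3 c d := by
  rw [hT2, T2m, S3, Finset.sum_mul_sum]
  refine Finset.sum_congr rfl fun s _ => Finset.sum_congr rfl fun u _ => ?_
  rw [Finset.mul_sum]
  refine Finset.sum_congr rfl fun v _ => ?_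
  rw [C_mul_X_eq_monomial, monomial_mul]
  rfl

lemma hMon (γ : ℂ) :
    C γ * X (Sum.inl (fun _ => true) : σT k m n) * X (Sum.inr (Sum.inl (fun _ => true)))
        * X (Sum.inr (Sum.inr (fun _ => true)))
      = monomial (νf (fun _ => true) (fun _ => true) (fun _ => true)) γ := by
  rw [C_mul_X_eq_monomial, ← pow_one (X (Sum.inr (Sum.inl (fun _ => true)))),
    ← monomial_add_single, ← pow_one (X (Sum.inr (Sum.inr (fun _ => true)))),
    ← monomial_add_single, add_assoc]
  rfl

lemma hCT2 (a : ℂ) :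
    C a * T2m (k := k) d = (∑ u, ∑ v, monomial (μf u v) (a * d u v) : MvPolynomial (σT k m n) ℂ) := by
  rw [T2m, Finset.mul_sum]
  refine Finset.sum_congr rfl fun u _ => ?_
  rw [Finset.mul_sum]
  refine Finset.sum_congr rfl fun v _ => ?_
  rw [C_mul_monomial]

lemma hsub (u : Fin m → Bool) (v : Fin n → Bool) :
    νf (k := k) (fun _ => true) u v - Finsupp.single (Sum.inl (fun _ => true)) 1 = μf u v := by
  rw [νf, add_tsub_cancel_left]

lemma hQ (γ : ℂ) :
    pderiv (Sum.inl (fun _ => true) : σT k m n)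
        (S3 c d - monomial (νf (fun _ => true) (fun _ => true) (fun _ => true)) γ)
      = C (c (fun _ => true)) * T2m (k := k) d - monomial (μf (k := k) (fun _ => true) (fun _ => true)) γ := by
  rw [map_sub]
  congr 1
  · rw [S3, map_sum, Finset.sum_eq_single (fun _ => true : Fin k → Bool)]
    · rw [hCT2, map_sum]
      refine Finset.sum_congr rfl fun u _ => ?_
      rw [map_sum]
      refine Finset.sum_congr rfl fun v _ => ?_
      rw [pderiv_monomial, νf_inl, if_pos rfl, Nat.cast_one, mul_one, hsub]
    · intro s _ hs
      rw [map_sum]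
      refine Finset.sum_eq_zero fun u _ => ?_
      rw [map_sum]
      refine Finset.sum_eq_zero fun v _ => ?_
      rw [pderiv_monomial, νf_inl, if_neg hs, Nat.cast_zero, mul_zero, monomial_zero]
    · intro hs; exact absurd (Finset.mem_univ _) hs
  · rw [pderiv_monomial, νf_inl, if_pos rfl, Nat.cast_one, mul_one, hsub]

lemma hR (γ : ℂ) :
    (S3 c d - monomial (νf (fun _ => true) (fun _ => true) (fun _ => true)) γ)
        - X (Sum.inl (fun _ => true) : σT k m n) *
          (C (c (fun _ => true)) * T2m (k := k) d - monomial (μf (k := k) (fun _ => true) (fun _ => true)) γ)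
      = T1' c * T2m (k := k) d := by
  have hXmul : ∀ (u : Fin m → Bool) (v : Fin n → Bool) (a : ℂ),
      X (Sum.inl (fun _ => true) : σT k m n) * monomial (μf u v) a
        = monomial (νf (fun _ => true) u v) a := by
    intro u v a
    rw [← pow_one (X (Sum.inl (fun _ => true) : σT k m n)), ← monomial_single_add]
    rfl
  have hXS2 : X (Sum.inl (fun _ => true) : σT k m n) *
      (C (c (fun _ => true)) * T2m (k := k) d - monomial (μf (k := k) (fun _ => true) (fun _ => true)) γ)
      = (∑ u, ∑ v, monomial (νf (fun _ => true) u v) (c (fun _ => true) * d u v))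
        - monomial (νf (fun _ => true) (fun _ => true) (fun _ => true)) γ := by
    rw [hCT2, mul_sub, hXmul, Finset.mul_sum]
    congr 1
    refine Finset.sum_congr rfl fun u _ => ?_
    rw [Finset.mul_sum]
    refine Finset.sum_congr rfl fun v _ => ?_
    rw [hXmul]
  rw [hXS2, sub_sub_sub_cancel_right]
  have hT1'T2 : T1' c * T2m (k := k) d = ∑ s, ∑ u, ∑ v,
      monomial (νf s u v) ((if s = (fun _ => true) then 0 else c s) * d u v) := by
    rw [T1', T2m, Finset.sum_mul_sum]
    refine Finset.sum_congr rfl fun s _ => Finset.sum_congr rfl fun u _ => ?_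
    rw [Finset.mul_sum]
    refine Finset.sum_congr rfl fun v _ => ?_
    rw [monomial_mul]
    rfl
  rw [hT1'T2, S3]
  have h2 : (∑ u, ∑ v, monomial (νf (k := k) (fun _ => true) u v) (c (fun _ => true) * d u v)
      : MvPolynomial (σT k m n) ℂ)
      = ∑ s, if s = (fun _ => true) then
          (∑ u, ∑ v, monomial (νf s u v) (c s * d u v)) else 0 := by
    rw [Finset.sum_ite_eq' Finset.univ (fun _ => true : Fin k → Bool)
      (fun s => ∑ u, ∑ v, monomial (νf s u v) (c s * d u v)), if_pos (Finset.mem_univ _)]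
  rw [h2, ← Finset.sum_sub_distrib]
  refine Finset.sum_congr rfl fun s _ => ?_
  by_cases hs : s = (fun _ => true)
  · subst hs
    rw [if_pos rfl, sub_self]
    symm
    refine Finset.sum_eq_zero fun u _ => Finset.sum_eq_zero fun v _ => ?_
    rw [if_pos rfl, zero_mul, monomial_zero]
  · rw [if_neg hs, sub_zero]
    refine Finset.sum_congr rfl fun u _ => Finset.sum_congr rfl fun v _ => ?_
    rw [if_neg hs]

lemma coeff_Qp_zero (a γ : ℂ) (s : Fin k → Bool) (mexp : σT k m n →₀ ℕ)
    (hm : mexp (Sum.inl s) ≠ 0) :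
    coeff mexp (C a * T2m (k := k) d - monomial (μf (k := k) (fun _ => true) (fun _ => true)) γ) = 0 := by
  rw [coeff_sub, hCT2]
  have hA : coeff mexp (∑ u, ∑ v, monomial (μf (k := k) u v) (a * d u v)) = 0 := by
    rw [coeff_sum]
    refine Finset.sum_eq_zero fun u _ => ?_
    rw [coeff_sum]
    refine Finset.sum_eq_zero fun v _ => ?_
    rw [coeff_monomial, if_neg]
    intro hEq
    exact hm (by rw [← hEq]; exact μf_inl u v s)
  have hB : coeff mexp (monomial (μf (k := k) (fun _ => true) (fun _ => true)) γ) = 0 := by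
    rw [coeff_monomial, if_neg]
    intro hEq
    exact hm (by rw [← hEq]; exact μf_inl _ _ s)
  rw [hA, hB, sub_zero]

lemma coeff_T1'_zero (t : (Fin m → Bool) ⊕ (Fin n → Bool)) (mexp : σT k m n →₀ ℕ)
    (hm : mexp (Sum.inr t) ≠ 0) : coeff mexp (T1' c) = 0 := by
  rw [T1', coeff_sum]
  refine Finset.sum_eq_zero fun s _ => ?_
  rw [coeff_monomial, if_neg]
  intro hEq
  apply hm
  rw [← hEq, Finsupp.single_apply, if_neg (by simp)]

lemma coeff_P_big (γ : ℂ) (mexp : σT k m n →₀ ℕ)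
    (hm : 1 < mexp (Sum.inl (fun _ => true))) :
    coeff mexp (S3 c d - monomial (νf (fun _ => true) (fun _ => true) (fun _ => true)) γ) = 0 := by
  rw [coeff_sub, S3]
  have hA : coeff mexp (∑ s, ∑ u, ∑ v,
      monomial (νf (k := k) s u v) (c s * d u v)) = 0 := by
    rw [coeff_sum]
    refine Finset.sum_eq_zero fun s _ => ?_
    rw [coeff_sum]
    refine Finset.sum_eq_zero fun u _ => ?_
    rw [coeff_sum]
    refine Finset.sum_eq_zero fun v _ => ?_
    rw [coeff_monomial, if_neg]
    intro hEq
    have h2 : mexp (Sum.inl (fun _ => true)) = if s = (fun _ => true) then 1 else 0 := by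
      rw [← hEq, νf_inl]
    split_ifs at h2 <;> omega
  have hB : coeff mexp
      (monomial (νf (k := k) (fun _ => true) (fun _ => true) (fun _ => true)) γ) = 0 := by
    rw [coeff_monomial, if_neg]
    intro hEq
    have h2 : mexp (Sum.inl (fun _ => true)) = if (fun _ => true : Fin k → Bool) = (fun _ => true)
        then 1 else 0 := by
      rw [← hEq, νf_inl]
    split_ifs at h2 <;> omega
  rw [hA, hB, sub_zero]

lemma coeff_P_val (γ : ℂ) (s₀ : Fin k → Bool) (hs₀ : s₀ ≠ fun _ => true) :
    coeff (νf s₀ (fun _ => true) (fun _ => true))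
      (S3 c d - monomial (νf (fun _ => true) (fun _ => true) (fun _ => true)) γ)
      = c s₀ * d (fun _ => true) (fun _ => true) := by
  rw [coeff_sub, S3, coeff_sum3 (fun s u v => c s * d u v), coeff_monomial, if_neg, sub_zero]
  intro hEq
  exact hs₀ (νf_inj hEq).1.symm

lemma coeff_Qp_val (a γ : ℂ) (u₀ : Fin m → Bool) (v₀ : Fin n → Bool)
    (hne : ¬(u₀ = (fun _ => true) ∧ v₀ = (fun _ => true))) :
    coeff (μf u₀ v₀) (C a * T2m (k := k) d - monomial (μf (k := k) (fun _ => true) (fun _ => true)) γ)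
      = a * d u₀ v₀ := by
  rw [coeff_sub, hCT2, coeff_sum2 (fun u v => a * d u v), coeff_monomial, if_neg, sub_zero]
  intro hEq
  exact hne ⟨(μf_inj hEq).1.symm, (μf_inj hEq).2.symm⟩

lemma coeff_T2m_val (u : Fin m → Bool) (v : Fin n → Bool) :
    coeff (μf (k := k) u v) (T2m (k := k) d) = d u v := by
  rw [T2m]
  exact coeff_sum2 d u v

lemma coeff_T1'_val (s₀ : Fin k → Bool) (hs₀ : s₀ ≠ fun _ => true) :
    coeff (Finsupp.single (Sum.inl s₀) 1 : σT k m n →₀ ℕ) (T1' c) = c s₀ := by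
  rw [T1', coeff_sum, Finset.sum_eq_single s₀]
  · rw [coeff_monomial, if_pos rfl, if_neg hs₀]
  · intro s _ hss
    rw [coeff_monomial, if_neg]
    intro hEq
    apply hss
    have h1 := DFunLike.congr_fun hEq (Sum.inl s)
    rw [Finsupp.single_apply, if_pos rfl, Finsupp.single_apply,
      if_neg (show ¬ (Sum.inl s₀ = Sum.inl s) from fun hh => hss (Sum.inl.inj hh).symm)] at h1
    exact absurd h1 one_ne_zero
  · intro h; exact absurd (Finset.mem_univ _) h

end StmtAux2

open StmtAux StmtAux2 in
theorem stmt2 (k m n : ℕ) (hk : 1 ≤ k) (hm : 1 ≤ m) (hn : 1 ≤ n)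
    (c : (Fin k → Bool) → ℂ) (d : (Fin m → Bool) → (Fin n → Bool) → ℂ)
    (hc1 : c (fun _ => true) ≠ 0) (hd1 : d (fun _ => true) (fun _ => true) ≠ 0)
    (hc2 : ∃ s : Fin k → Bool, s ≠ (fun _ => true) ∧ c s ≠ 0)
    (hd2 : ∃ (u : Fin m → Bool) (v : Fin n → Bool), u ≠ (fun _ => true) ∧ d u v ≠ 0)
    (hd3 : ∃ (u : Fin m → Bool) (v : Fin n → Bool), v ≠ (fun _ => true) ∧ d u v ≠ 0)
    (α : ℂ) (hα : α ≠ 0)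
    (P : MvPolynomial ((Fin k → Bool) ⊕ (Fin m → Bool) ⊕ (Fin n → Bool)) ℂ)
    (hP : P =
      (∑ s : Fin k → Bool, MvPolynomial.C (c s) * MvPolynomial.X (Sum.inl s)) *
        (∑ u : Fin m → Bool, ∑ v : Fin n → Bool,
          MvPolynomial.C (d u v) * MvPolynomial.X (Sum.inr (Sum.inl u)) *
            MvPolynomial.X (Sum.inr (Sum.inr v))) -
      MvPolynomial.C (α * c (fun _ => true) * d (fun _ => true) (fun _ => true)) *
        MvPolynomial.X (Sum.inl (fun _ => true)) *
        MvPolynomial.X (Sum.inr (Sum.inl (fun _ => true))) *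
        MvPolynomial.X (Sum.inr (Sum.inr (fun _ => true)))) :
    Irreducible P ∧ ¬ Decomposable P := by
  classical
  obtain ⟨s₀, hs₀ne, hs₀⟩ := hc2
  obtain ⟨u₀, v₀, hu₀ne, hu₀⟩ := hd2
  obtain ⟨u₁, v₁, hv₁ne, hv₁⟩ := hd3
  have hγ : α * c (fun _ => true) * d (fun _ => true) (fun _ => true) ≠ 0 :=
    mul_ne_zero (mul_ne_zero hα hc1) hd1
  have hPm : P = S3 c d - monomial (νf (fun _ => true) (fun _ => true) (fun _ => true))
      (α * c (fun _ => true) * d (fun _ => true) (fun _ => true)) := by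
    rw [hP, hT1T2, hMon]
  have hPvne : coeff (νf s₀ (fun _ => true) (fun _ => true)) P
      = c s₀ * d (fun _ => true) (fun _ => true) := by
    rw [hPm]
    exact coeff_P_val c d _ s₀ hs₀ne
  have hP0 : P ≠ 0 := by
    intro h0
    rw [h0, coeff_zero] at hPvne
    exact mul_ne_zero hs₀ hd1 hPvne.symm
  have hQp0 : C (c (fun _ => true)) * T2m (k := k) d
      - monomial (μf (k := k) (fun _ => true) (fun _ => true))
        (α * c (fun _ => true) * d (fun _ => true) (fun _ => true)) ≠ 0 := by
    intro h0
    have hv := coeff_Qp_val (k := k) d (c (fun _ => true))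
      (α * c (fun _ => true) * d (fun _ => true) (fun _ => true)) u₀ v₀
      (fun hpair => hu₀ne hpair.1)
    rw [h0, coeff_zero] at hv
    exact mul_ne_zero hc1 hu₀ hv.symm
  -- the key step
  have key : ∀ g h' : MvPolynomial (σT k m n) ℂ, P = g * h' →
      degreeOf (Sum.inl (fun _ => true)) h' = 0 → IsUnit h' := by
    intro g h' hgh hdeg0
    by_contra hu
    have hh0 : h' ≠ 0 := by rintro rfl; rw [mul_zero] at hgh; exact hP0 hgh
    have hg0 : g ≠ 0 := by rintro rfl; rw [zero_mul] at hgh; exact hP0 hgh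
    have hx1h : (Sum.inl (fun _ => true) : σT k m n) ∉ h'.vars := by
      intro hmem
      obtain ⟨mexp, hm1, hm2⟩ := (mem_vars _).mp hmem
      have h2 : mexp (Sum.inl (fun _ => true)) ≤ degreeOf (Sum.inl (fun _ => true)) h' := by
        rw [degreeOf_eq_sup]
        exact Finset.le_sup (f := fun mm => mm (Sum.inl (fun _ => true))) hm1
      rw [hdeg0] at h2
      have h3 := Finsupp.mem_support_iff.mp hm2
      omega
    have hQP : pderiv (Sum.inl (fun _ => true) : σT k m n) P
        = C (c (fun _ => true)) * T2m (k := k) d - monomial (μf (k := k) (fun _ => true) (fun _ => true))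
          (α * c (fun _ => true) * d (fun _ => true) (fun _ => true)) := by
      rw [hPm]
      exact hQ c d _
    have hQgh : pderiv (Sum.inl (fun _ => true) : σT k m n) P
        = pderiv (Sum.inl (fun _ => true)) g * h' := by
      rw [hgh, pderiv_mul, pderiv_eq_zero_of_notMem_vars hx1h, mul_zero, add_zero]
    have hhQ : h' ∣ C (c (fun _ => true)) * T2m (k := k) d
        - monomial (μf (k := k) (fun _ => true) (fun _ => true))
          (α * c (fun _ => true) * d (fun _ => true) (fun _ => true)) := by
      refine ⟨pderiv (Sum.inl (fun _ => true)) g, ?_⟩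
      rw [← hQP, hQgh]
      ring
    have hhR : h' ∣ T1' c * T2m (k := k) d := by
      refine ⟨g - X (Sum.inl (fun _ => true)) * pderiv (Sum.inl (fun _ => true)) g, ?_⟩
      rw [← hR c d (α * c (fun _ => true) * d (fun _ => true) (fun _ => true)), ← hPm, ← hQP, hQgh, hgh]
      ring
    obtain ⟨p, hpirr, hpd⟩ := WfDvdMonoid.exists_irreducible_factor hu hh0
    have hpprime : Prime p := (UniqueFactorizationMonoid.irreducible_iff_prime).mp hpirr
    have hpQ : p ∣ C (c (fun _ => true)) * T2m (k := k) d
        - monomial (μf (k := k) (fun _ => true) (fun _ => true))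
          (α * c (fun _ => true) * d (fun _ => true) (fun _ => true)) := hpd.trans hhQ
    have hpR : p ∣ T1' c * T2m (k := k) d := hpd.trans hhR
    rcases hpprime.2.2 _ _ hpR with hpT1 | hpT2
    · -- p divides T1'
      have hT1'0 : T1' (m := m) (n := n) c ≠ 0 := by
        intro h0
        have hv := coeff_T1'_val (m := m) (n := n) c s₀ hs₀ne
        rw [h0, coeff_zero] at hv
        exact hs₀ hv.symm
      have hdegall : ∀ j, degreeOf j p = 0 := by
        intro j
        rcases j with s | t
        · have h1 := degreeOf_le_of_dvd (Sum.inl s) hpQ hQp0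
          have h2 := degreeOf_le_of_coeff (C (c (fun _ => true)) * T2m (k := k) d
              - monomial (μf (k := k) (fun _ => true) (fun _ => true))
                (α * c (fun _ => true) * d (fun _ => true) (fun _ => true))) (Sum.inl s) 0
            (fun mexp hmm => coeff_Qp_zero (k := k) d _ _ s mexp (by omega))
          omega
        · have h1 := degreeOf_le_of_dvd (Sum.inr t) hpT1 hT1'0
          have h2 := degreeOf_le_of_coeff (T1' c) (Sum.inr t) 0
            (fun mexp hmm => coeff_T1'_zero c t mexp (by omega))
          omega
      obtain ⟨a, rfl⟩ := eq_C_of_degreeOf_eq_zero hdegall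
      have ha : a ≠ 0 := by
        rintro rfl
        rw [map_zero] at hpQ
        exact hQp0 (zero_dvd_iff.mp hpQ)
      exact hpirr.not_isUnit ((isUnit_iff_ne_zero.mpr ha).map
        (C : ℂ →+* MvPolynomial (σT k m n) ℂ))
    · -- p divides T2m
      have h1 : p ∣ C (c (fun _ => true)) * T2m (k := k) d := hpT2.mul_left _
      have h2 : p ∣ monomial (μf (k := k) (fun _ => true) (fun _ => true))
          (α * c (fun _ => true) * d (fun _ => true) (fun _ => true)) := by
        have h3 := dvd_sub h1 hpQ
        rwa [sub_sub_cancel] at h3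
      have h2' : p ∣ C (α * c (fun _ => true) * d (fun _ => true) (fun _ => true)) *
          (X (Sum.inr (Sum.inl (fun _ => true)) : σT k m n) *
            X (Sum.inr (Sum.inr (fun _ => true)))) := by
        rw [← mul_assoc, CXX_eq]
        exact h2
      have h3 : p ∣ X (Sum.inr (Sum.inl (fun _ => true)) : σT k m n) *
          X (Sum.inr (Sum.inr (fun _ => true))) := by
        have h4 := h2'.mul_left
          (C ((α * c (fun _ => true) * d (fun _ => true) (fun _ => true))⁻¹)
            : MvPolynomial (σT k m n) ℂ)
        rwa [← mul_assoc, ← C_mul, inv_mul_cancel₀ hγ, C_1, one_mul] at h4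
      rcases hpprime.2.2 _ _ h3 with h4 | h4
      · have hXz : Prime (X (Sum.inr (Sum.inl (fun _ => true)) : σT k m n) :
            MvPolynomial (σT k m n) ℂ) := prime_X' _
        have hassoc := hpirr.associated_of_dvd hXz.irreducible h4
        have hXdvd : (X (Sum.inr (Sum.inl (fun _ => true)) : σT k m n) :
            MvPolynomial (σT k m n) ℂ) ∣ T2m (k := k) d := hassoc.symm.dvd.trans hpT2
        have h5 := X_dvd_iff_coeff.mp hXdvd (μf u₀ v₀) (by rw [μf_z, if_neg hu₀ne])
        rw [coeff_T2m_val] at h5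
        exact hu₀ h5
      · have hXw : Prime (X (Sum.inr (Sum.inr (fun _ => true)) : σT k m n) :
            MvPolynomial (σT k m n) ℂ) := prime_X' _
        have hassoc := hpirr.associated_of_dvd hXw.irreducible h4
        have hXdvd : (X (Sum.inr (Sum.inr (fun _ => true)) : σT k m n) :
            MvPolynomial (σT k m n) ℂ) ∣ T2m (k := k) d := hassoc.symm.dvd.trans hpT2
        have h5 := X_dvd_iff_coeff.mp hXdvd (μf u₁ v₁) (by rw [μf_w, if_neg hv₁ne])
        rw [coeff_T2m_val] at h5
        exact hv₁ h5
  have hIrr : Irreducible P := by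
    constructor
    · intro hu
      obtain ⟨a, ha⟩ := exists_C_of_isUnit hu
      rw [ha, coeff_C, if_neg (fun h0 => νf_ne_zero s₀ _ _ h0.symm)] at hPvne
      exact mul_ne_zero hs₀ hd1 hPvne.symm
    · intro g h' hgh
      have hh0 : h' ≠ 0 := by rintro rfl; rw [mul_zero] at hgh; exact hP0 hgh
      have hg0 : g ≠ 0 := by rintro rfl; rw [zero_mul] at hgh; exact hP0 hgh
      have hdP : degreeOf (Sum.inl (fun _ => true) : σT k m n) P ≤ 1 := by
        apply degreeOf_le_of_coeff
        intro mexp hmm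
        rw [hPm]
        exact coeff_P_big c d _ mexp hmm
      have hadd := degreeOf_mul_eq' (Sum.inl (fun _ => true) : σT k m n) g h' hg0 hh0
      rw [← hgh] at hadd
      have hcases : degreeOf (Sum.inl (fun _ => true) : σT k m n) h' = 0 ∨
          degreeOf (Sum.inl (fun _ => true) : σT k m n) g = 0 := by omega
      rcases hcases with h0 | h0
      · exact Or.inr (key g h' hgh h0)
      · exact Or.inl (key h' g (by rw [hgh, mul_comm]) h0)
  refine ⟨hIrr, ?_⟩
  rintro ⟨g, h', hgC, hhC, -, hgh⟩
  rcases hIrr.isUnit_or_isUnit hgh with hu | hu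
  · exact hgC (exists_C_of_isUnit hu)
  · exact hhC (exists_C_of_isUnit hu)
end

section
/- Let k, ℓ, m, n ≥ 1. Work in the polynomial ring over ℂ with variables x_s (s ∈ {0,1}^k), y_t (t ∈ {0,1}^ℓ), z_u (u ∈ {0,1}^m), and w_v (v ∈ {0,1}^n). Let T_1 = Σ_{s,t} c_{s,t}·x_s·y_t and T_2 = Σ_{u,v} d_{u,v}·z_u·w_v, where the coefficients satisfy: c_{𝟙,𝟙} ≠ 0 and d_{𝟙,𝟙} ≠ 0; there exist s ≠ 𝟙 and t with c_{s,t} ≠ 0; there exist s and t ≠ 𝟙 with c_{s,t} ≠ 0; there exist u ≠ 𝟙 and v with d_{u,v} ≠ 0; and there exist u and v ≠ 𝟙 with d_{u,v} ≠ 0. Fix a nonzero α ∈ ℂ and define P = T_1·T_2 − α·c_{𝟙,𝟙}·d_{𝟙,𝟙}·x_𝟙·y_𝟙·z_𝟙·w_𝟙. Then P is irreducible (and in particular indecomposable). -/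
open MvPolynomial

noncomputable def psiW {σ : Type*} (w : σ → ℕ) :
    MvPolynomial σ ℂ →+* Polynomial (MvPolynomial σ ℂ) :=
  MvPolynomial.eval₂Hom (Polynomial.C.comp MvPolynomial.C)
    (fun i => Polynomial.C (MvPolynomial.X i) * Polynomial.X ^ w i)

theorem psiW_monomial {σ : Type*} (w : σ → ℕ) (d : σ →₀ ℕ) (r : ℂ) :
    psiW w (monomial d r) =
      Polynomial.C (monomial d r) * Polynomial.X ^ (Finsupp.weight w d) := by
  classical
  rw [psiW, eval₂Hom_monomial]
  rw [Finsupp.prod]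
  simp_rw [mul_pow, ← Polynomial.C_pow, ← pow_mul]
  rw [Finset.prod_mul_distrib, ← map_prod, Finset.prod_pow_eq_pow_sum,
    RingHom.comp_apply, ← mul_assoc, ← Polynomial.C_mul]
  congr 2
  · rw [monomial_eq, Finsupp.prod]
  · rw [Finsupp.weight_apply, Finsupp.sum]
    exact Finset.sum_congr rfl fun i _ => by rw [smul_eq_mul, mul_comm]

theorem psiW_coeff {σ : Type*} (w : σ → ℕ) (f : MvPolynomial σ ℂ) (kk : ℕ) :
    (psiW w f).coeff kk = weightedHomogeneousComponent w kk f := by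
  classical
  induction f using MvPolynomial.induction_on' with
  | monomial d r =>
    rw [psiW_monomial]
    rw [Polynomial.coeff_C_mul, Polynomial.coeff_X_pow]
    by_cases h : Finsupp.weight w d = kk
    · subst h
      rw [IsWeightedHomogeneous.weightedHomogeneousComponent_same
        (isWeightedHomogeneous_monomial w d r rfl)]
      simp
    · rw [IsWeightedHomogeneous.weightedHomogeneousComponent_ne _
        (isWeightedHomogeneous_monomial w d r rfl) (Ne.symm h),
        if_neg (fun hh => h hh.symm), mul_zero]
  | add p q hp hq =>
    rw [map_add, Polynomial.coeff_add, map_add, hp, hq]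

theorem psiW_eval_one {σ : Type*} (w : σ → ℕ) (f : MvPolynomial σ ℂ) :
    Polynomial.eval 1 (psiW w f) = f := by
  have : (Polynomial.evalRingHom (1 : MvPolynomial σ ℂ)).comp (psiW w) = RingHom.id _ := by
    apply MvPolynomial.ringHom_ext
    · intro r; simp [psiW]
    · intro i; simp [psiW]
  exact congrArg (fun φ => φ f) this |>.trans rfl

theorem homog_factor {σ : Type*} (w : σ → ℕ) {g h : MvPolynomial σ ℂ}
    (hg : g ≠ 0) (hh : h ≠ 0) {m : ℕ}
    (hgh : IsWeightedHomogeneous w (g * h) m) :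
    ∃ a b : ℕ, a + b = m ∧ IsWeightedHomogeneous w g a ∧ IsWeightedHomogeneous w h b := by
  classical
  have hgh0 : g * h ≠ 0 := mul_ne_zero hg hh
  have hΨg : psiW w g ≠ 0 := fun hz => hg (by
    have := psiW_eval_one w g; rw [hz] at this; simpa using this.symm)
  have hΨh : psiW w h ≠ 0 := fun hz => hh (by
    have := psiW_eval_one w h; rw [hz] at this; simpa using this.symm)
  have key : psiW w g * psiW w h = Polynomial.monomial m (g * h) := by
    rw [← map_mul]
    ext kk
    rw [psiW_coeff, Polynomial.coeff_monomial]
    by_cases hk : kk = m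
    · subst hk
      rw [IsWeightedHomogeneous.weightedHomogeneousComponent_same hgh, if_pos rfl]
    · rw [IsWeightedHomogeneous.weightedHomogeneousComponent_ne _ hgh hk,
        if_neg (fun hh' => hk hh'.symm)]
  have hdeg : (psiW w g).natDegree + (psiW w h).natDegree = m := by
    rw [← Polynomial.natDegree_mul hΨg hΨh, key, Polynomial.natDegree_monomial,
      if_neg hgh0]
  have htr : (psiW w g).natTrailingDegree + (psiW w h).natTrailingDegree = m := by
    rw [← Polynomial.natTrailingDegree_mul hΨg hΨh, key,
      Polynomial.natTrailingDegree_monomial hgh0]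
  have h1 : (psiW w g).natTrailingDegree ≤ (psiW w g).natDegree :=
    Polynomial.natTrailingDegree_le_natDegree _
  have h2 : (psiW w h).natTrailingDegree ≤ (psiW w h).natDegree :=
    Polynomial.natTrailingDegree_le_natDegree _
  have e1 : (psiW w g).natTrailingDegree = (psiW w g).natDegree := by omega
  have e2 : (psiW w h).natTrailingDegree = (psiW w h).natDegree := by omega
  have hom : ∀ f : MvPolynomial σ ℂ, f ≠ 0 →
      (psiW w f).natTrailingDegree = (psiW w f).natDegree →
      IsWeightedHomogeneous w f (psiW w f).natDegree := by
    intro f hf ef d hd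
    have hc : (psiW w f).coeff (Finsupp.weight w d) ≠ 0 := by
      rw [psiW_coeff]
      intro hz
      apply hd
      have := coeff_weightedHomogeneousComponent (w := w) (Finsupp.weight w d) f d
      rw [hz, if_pos rfl] at this
      · exact this.symm
    have hup : Finsupp.weight w d ≤ (psiW w f).natDegree :=
      Polynomial.le_natDegree_of_ne_zero hc
    have hlo : (psiW w f).natTrailingDegree ≤ Finsupp.weight w d :=
      Polynomial.natTrailingDegree_le_of_ne_zero hc
    omega
  exact ⟨_, _, hdeg, hom g hg e1, hom h hh e2⟩


set_option linter.unusedSectionVars false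

section Gen
variable {S T U V : Type*} [DecidableEq S] [DecidableEq T] [DecidableEq U] [DecidableEq V]

@[reducible] def i1 (s : S) : S ⊕ T ⊕ U ⊕ V := Sum.inl s
@[reducible] def i2 (t : T) : S ⊕ T ⊕ U ⊕ V := Sum.inr (Sum.inl t)
@[reducible] def i3 (u : U) : S ⊕ T ⊕ U ⊕ V := Sum.inr (Sum.inr (Sum.inl u))
@[reducible] def i4 (v : V) : S ⊕ T ⊕ U ⊕ V := Sum.inr (Sum.inr (Sum.inr v))

def w1 : S ⊕ T ⊕ U ⊕ V → ℕ := fun j => match j with | .inl _ => 1 | _ => 0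
def w2 : S ⊕ T ⊕ U ⊕ V → ℕ := fun j => match j with | .inr (.inl _) => 1 | _ => 0
def w3 : S ⊕ T ⊕ U ⊕ V → ℕ := fun j => match j with | .inr (.inr (.inl _)) => 1 | _ => 0
def w4 : S ⊕ T ⊕ U ⊕ V → ℕ := fun j => match j with | .inr (.inr (.inr _)) => 1 | _ => 0

noncomputable def Dm (p q r w : ℕ) (s : S) (t : T) (u : U) (v : V) : (S ⊕ T ⊕ U ⊕ V) →₀ ℕ :=
  Finsupp.single (i1 s) p + Finsupp.single (i2 t) q +
    Finsupp.single (i3 u) r + Finsupp.single (i4 v) w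

theorem weight_single_nat {σ : Type*} (w : σ → ℕ) (i : σ) (nn : ℕ) :
    Finsupp.weight w (Finsupp.single i nn) = nn * w i := by
  simp [Finsupp.weight_apply, Finsupp.sum_single_index]

theorem weight_Dm1 (p q r w : ℕ) (s : S) (t : T) (u : U) (v : V) :
    Finsupp.weight w1 (Dm p q r w s t u v) = p := by
  simp [Dm, map_add, weight_single_nat, w1]

theorem weight_Dm2 (p q r w : ℕ) (s : S) (t : T) (u : U) (v : V) :
    Finsupp.weight w2 (Dm p q r w s t u v) = q := by
  simp [Dm, map_add, weight_single_nat, w2]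

theorem weight_Dm3 (p q r w : ℕ) (s : S) (t : T) (u : U) (v : V) :
    Finsupp.weight w3 (Dm p q r w s t u v) = r := by
  simp [Dm, map_add, weight_single_nat, w3]

theorem weight_Dm4 (p q r w : ℕ) (s : S) (t : T) (u : U) (v : V) :
    Finsupp.weight w4 (Dm p q r w s t u v) = w := by
  simp [Dm, map_add, weight_single_nat, w4]

theorem Dm_app1 (p q r w : ℕ) (s : S) (t : T) (u : U) (v : V) (x : S) :
    (Dm p q r w s t u v) (i1 x) = if s = x then p else 0 := by
  simp [Dm, Finsupp.single_apply]

theorem Dm_app2 (p q r w : ℕ) (s : S) (t : T) (u : U) (v : V) (x : T) :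
    (Dm p q r w s t u v) (i2 x) = if t = x then q else 0 := by
  simp [Dm, Finsupp.single_apply]

theorem Dm_app3 (p q r w : ℕ) (s : S) (t : T) (u : U) (v : V) (x : U) :
    (Dm p q r w s t u v) (i3 x) = if u = x then r else 0 := by
  simp [Dm, Finsupp.single_apply]

theorem Dm_app4 (p q r w : ℕ) (s : S) (t : T) (u : U) (v : V) (x : V) :
    (Dm p q r w s t u v) (i4 x) = if v = x then w else 0 := by
  simp [Dm, Finsupp.single_apply]

theorem Dm_eq_iff (s s' : S) (t t' : T) (u u' : U) (v v' : V) :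
    Dm 1 1 1 1 s' t' u' v' = Dm 1 1 1 1 s t u v ↔ (s' = s ∧ t' = t ∧ u' = u ∧ v' = v) := by
  constructor
  · intro hh
    have h1 := Finsupp.ext_iff.mp hh (i1 s')
    have h2 := Finsupp.ext_iff.mp hh (i2 t')
    have h3 := Finsupp.ext_iff.mp hh (i3 u')
    have h4 := Finsupp.ext_iff.mp hh (i4 v')
    simp only [Dm_app1, Dm_app2, Dm_app3, Dm_app4, if_pos rfl] at h1 h2 h3 h4
    refine ⟨?_, ?_, ?_, ?_⟩
    · by_contra hne; rw [if_neg (show ¬ s = s' from fun he => hne he.symm)] at h1; exact one_ne_zero h1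
    · by_contra hne; rw [if_neg (show ¬ t = t' from fun he => hne he.symm)] at h2; exact one_ne_zero h2
    · by_contra hne; rw [if_neg (show ¬ u = u' from fun he => hne he.symm)] at h3; exact one_ne_zero h3
    · by_contra hne; rw [if_neg (show ¬ v = v' from fun he => hne he.symm)] at h4; exact one_ne_zero h4
  · rintro ⟨rfl, rfl, rfl, rfl⟩; rfl

end Gen

section Gen2
variable {S T U V : Type*} [DecidableEq S] [DecidableEq T] [DecidableEq U] [DecidableEq V]
set_option linter.unusedSectionVars false

theorem CXX2 {σ : Type*} (a : ℂ) (i j : σ) :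
    (C a : MvPolynomial σ ℂ) * X i * X j =
      monomial (Finsupp.single i 1 + Finsupp.single j 1) a := by
  rw [C_apply, ← pow_one (X i), ← pow_one (X j), X_pow_eq_monomial, X_pow_eq_monomial,
    monomial_mul, monomial_mul, zero_add, mul_one, mul_one]

theorem CXX4 {σ : Type*} (a : ℂ) (i j k l : σ) :
    (C a : MvPolynomial σ ℂ) * X i * X j * X k * X l =
      monomial (Finsupp.single i 1 + Finsupp.single j 1 + Finsupp.single k 1 +
        Finsupp.single l 1) a := by
  rw [C_apply, ← pow_one (X i), ← pow_one (X j), ← pow_one (X k), ← pow_one (X l),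
    X_pow_eq_monomial, X_pow_eq_monomial, X_pow_eq_monomial, X_pow_eq_monomial,
    monomial_mul, monomial_mul, monomial_mul, monomial_mul,
    zero_add, mul_one, mul_one, mul_one, mul_one]

theorem coeff_TT [Fintype S] [Fintype T] [Fintype U] [Fintype V]
    (c : S → T → ℂ) (d : U → V → ℂ) (s : S) (t : T) (u : U) (v : V) :
    MvPolynomial.coeff (Dm 1 1 1 1 s t u v)
      ((∑ s' : S, ∑ t' : T, C (c s' t') * X (i1 s') * X (i2 t')) *
        (∑ u' : U, ∑ v' : V, C (d u' v') * X (i3 u') * X (i4 v'))) = c s t * d u v := by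
  simp_rw [CXX2]
  rw [Finset.sum_mul_sum]
  simp_rw [Finset.sum_mul, Finset.mul_sum, monomial_mul]
  have hDm : ∀ (s' : S) (t' : T) (u' : U) (v' : V),
      Finsupp.single (i1 s') 1 + Finsupp.single (i2 t') 1 +
        (Finsupp.single (i3 u') 1 + Finsupp.single (i4 v') 1) =
        Dm 1 1 1 1 s' t' u' v' := by
    intro s' t' u' v'; simp [Dm, add_assoc]
  simp_rw [hDm, coeff_sum, coeff_monomial, Dm_eq_iff]
  simp [ite_and, Finset.sum_ite_eq']

end Gen2

section Gen3
variable {S T U V : Type*} [DecidableEq S] [DecidableEq T] [DecidableEq U] [DecidableEq V]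
set_option linter.unusedSectionVars false

theorem Dm_add (p q r w p' q' r' w' : ℕ) (s : S) (t : T) (u : U) (v : V) :
    Dm p q r w s t u v + Dm p' q' r' w' s t u v
      = Dm (p + p') (q + q') (r + r') (w + w') s t u v := by
  ext j
  rcases j with x | x | x | x
  · rw [Finsupp.add_apply, Dm_app1, Dm_app1, Dm_app1]; split_ifs <;> omega
  · rw [Finsupp.add_apply, Dm_app2, Dm_app2, Dm_app2]; split_ifs <;> omega
  · rw [Finsupp.add_apply, Dm_app3, Dm_app3, Dm_app3]; split_ifs <;> omega
  · rw [Finsupp.add_apply, Dm_app4, Dm_app4, Dm_app4]; split_ifs <;> omega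

theorem point_eq {σ : Type*} (w : σ → ℕ) (j : σ) (hj : w j = 1) (e e' D : σ →₀ ℕ)
    (hsum : e + e' = D) (a b : ℕ) (hwe : Finsupp.weight w e = a)
    (hwe' : Finsupp.weight w e' = b) (hDj : D j = a + b) :
    e j = a ∧ e' j = b := by
  have h1 : e j ≤ a := hwe ▸ Finsupp.le_weight w (by omega) e
  have h2 : e' j ≤ b := hwe' ▸ Finsupp.le_weight w (by omega) e'
  have h3 : e j + e' j = a + b := by rw [← hDj, ← hsum, Finsupp.add_apply]
  omega

theorem coeff_mul_split (g h : MvPolynomial (S ⊕ T ⊕ U ⊕ V) ℂ)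
    (a₁ a₂ a₃ a₄ b₁ b₂ b₃ b₄ : ℕ)
    (e₁ : a₁ + b₁ = 1) (e₂ : a₂ + b₂ = 1) (e₃ : a₃ + b₃ = 1) (e₄ : a₄ + b₄ = 1)
    (hg1 : IsWeightedHomogeneous w1 g a₁) (hg2 : IsWeightedHomogeneous w2 g a₂)
    (hg3 : IsWeightedHomogeneous w3 g a₃) (hg4 : IsWeightedHomogeneous w4 g a₄)
    (hh1 : IsWeightedHomogeneous w1 h b₁) (hh2 : IsWeightedHomogeneous w2 h b₂)
    (hh3 : IsWeightedHomogeneous w3 h b₃) (hh4 : IsWeightedHomogeneous w4 h b₄)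
    (s : S) (t : T) (u : U) (v : V) :
    MvPolynomial.coeff (Dm 1 1 1 1 s t u v) (g * h) =
      MvPolynomial.coeff (Dm a₁ a₂ a₃ a₄ s t u v) g *
        MvPolynomial.coeff (Dm b₁ b₂ b₃ b₄ s t u v) h := by
  classical
  have hadd : Dm a₁ a₂ a₃ a₄ s t u v + Dm b₁ b₂ b₃ b₄ s t u v = Dm 1 1 1 1 s t u v := by
    rw [Dm_add, e₁, e₂, e₃, e₄]
  rw [MvPolynomial.coeff_mul]
  rw [Finset.sum_eq_single (Dm a₁ a₂ a₃ a₄ s t u v, Dm b₁ b₂ b₃ b₄ s t u v)]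
  · intro p hp hne
    by_contra hprod
    have hg0 : MvPolynomial.coeff p.1 g ≠ 0 := left_ne_zero_of_mul hprod
    have hh0 : MvPolynomial.coeff p.2 h ≠ 0 := right_ne_zero_of_mul hprod
    have hsum : p.1 + p.2 = Dm 1 1 1 1 s t u v := Finset.HasAntidiagonal.mem_antidiagonal.mp hp
    have k1 := point_eq w1 (i1 s) rfl p.1 p.2 _ hsum a₁ b₁ (hg1 hg0) (hh1 hh0)
      (by rw [Dm_app1, if_pos rfl]; omega)
    have k2 := point_eq w2 (i2 t) rfl p.1 p.2 _ hsum a₂ b₂ (hg2 hg0) (hh2 hh0)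
      (by rw [Dm_app2, if_pos rfl]; omega)
    have k3 := point_eq w3 (i3 u) rfl p.1 p.2 _ hsum a₃ b₃ (hg3 hg0) (hh3 hh0)
      (by rw [Dm_app3, if_pos rfl]; omega)
    have k4 := point_eq w4 (i4 v) rfl p.1 p.2 _ hsum a₄ b₄ (hg4 hg0) (hh4 hh0)
      (by rw [Dm_app4, if_pos rfl]; omega)
    have hzero : ∀ j, (Dm 1 1 1 1 s t u v) j = 0 → p.1 j = 0 ∧ p.2 j = 0 := by
      intro j hj
      have hh' := Finsupp.ext_iff.mp hsum j
      rw [Finsupp.add_apply, hj] at hh'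
      omega
    apply hne
    have hp1 : p.1 = Dm a₁ a₂ a₃ a₄ s t u v := by
      ext j
      rcases j with x | x | x | x
      · rw [Dm_app1]; by_cases hx : s = x
        · subst hx; rw [if_pos rfl]; exact k1.1
        · rw [if_neg hx]; exact (hzero (i1 x) (by rw [Dm_app1, if_neg hx])).1
      · rw [Dm_app2]; by_cases hx : t = x
        · subst hx; rw [if_pos rfl]; exact k2.1
        · rw [if_neg hx]; exact (hzero (i2 x) (by rw [Dm_app2, if_neg hx])).1
      · rw [Dm_app3]; by_cases hx : u = x
        · subst hx; rw [if_pos rfl]; exact k3.1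
        · rw [if_neg hx]; exact (hzero (i3 x) (by rw [Dm_app3, if_neg hx])).1
      · rw [Dm_app4]; by_cases hx : v = x
        · subst hx; rw [if_pos rfl]; exact k4.1
        · rw [if_neg hx]; exact (hzero (i4 x) (by rw [Dm_app4, if_neg hx])).1
    have hp2 : p.2 = Dm b₁ b₂ b₃ b₄ s t u v := by
      ext j
      rcases j with x | x | x | x
      · rw [Dm_app1]; by_cases hx : s = x
        · subst hx; rw [if_pos rfl]; exact k1.2
        · rw [if_neg hx]; exact (hzero (i1 x) (by rw [Dm_app1, if_neg hx])).2
      · rw [Dm_app2]; by_cases hx : t = x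
        · subst hx; rw [if_pos rfl]; exact k2.2
        · rw [if_neg hx]; exact (hzero (i2 x) (by rw [Dm_app2, if_neg hx])).2
      · rw [Dm_app3]; by_cases hx : u = x
        · subst hx; rw [if_pos rfl]; exact k3.2
        · rw [if_neg hx]; exact (hzero (i3 x) (by rw [Dm_app3, if_neg hx])).2
      · rw [Dm_app4]; by_cases hx : v = x
        · subst hx; rw [if_pos rfl]; exact k4.2
        · rw [if_neg hx]; exact (hzero (i4 x) (by rw [Dm_app4, if_neg hx])).2
    exact Prod.ext hp1 hp2
  · intro hnot
    exact absurd (Finset.HasAntidiagonal.mem_antidiagonal.mpr hadd) hnot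

theorem eq_C_of_homog0 (g : MvPolynomial (S ⊕ T ⊕ U ⊕ V) ℂ)
    (h1 : IsWeightedHomogeneous w1 g 0) (h2 : IsWeightedHomogeneous w2 g 0)
    (h3 : IsWeightedHomogeneous w3 g 0) (h4 : IsWeightedHomogeneous w4 g 0) :
    g = MvPolynomial.C (MvPolynomial.coeff 0 g) := by
  ext dd
  rw [MvPolynomial.coeff_C]
  by_cases hdd : (0 : (S ⊕ T ⊕ U ⊕ V) →₀ ℕ) = dd
  · rw [if_pos hdd, ← hdd]
  · rw [if_neg hdd]
    by_contra hnz
    apply hdd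
    have k1 := h1 hnz; have k2 := h2 hnz; have k3 := h3 hnz; have k4 := h4 hnz
    ext j
    rcases j with x | x | x | x
    · have := Finsupp.le_weight w1 (s := Sum.inl x) (by simp [w1]) dd; rw [k1] at this; simp only [Finsupp.coe_zero, Pi.zero_apply]; omega
    · have := Finsupp.le_weight w2 (s := Sum.inr (Sum.inl x)) (by simp [w2]) dd; rw [k2] at this; simp only [Finsupp.coe_zero, Pi.zero_apply]; omega
    · have := Finsupp.le_weight w3 (s := Sum.inr (Sum.inr (Sum.inl x))) (by simp [w3]) dd; rw [k3] at this; simp only [Finsupp.coe_zero, Pi.zero_apply]; omega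
    · have := Finsupp.le_weight w4 (s := Sum.inr (Sum.inr (Sum.inr x))) (by simp [w4]) dd; rw [k4] at this; simp only [Finsupp.coe_zero, Pi.zero_apply]; omega

end Gen3

theorem alg1 (α c1 d1 p q r s A B Γ2 Δ G0 D0 : ℂ)
    (R1 : A * B = p * d1) (R2 : Γ2 * Δ = c1 * q) (R3 : A * Δ = r * s)
    (R4 : A * D0 = r * d1) (R5 : G0 * Δ = c1 * s)
    (R6 : G0 * D0 = (1 - α) * (c1 * d1))
    (hp : p ≠ 0) (hq : q ≠ 0) (hc1 : c1 ≠ 0) (hd1 : d1 ≠ 0) (hα : α ≠ 0) : False := by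
  have hA : A ≠ 0 := fun hz => by
    rw [hz, zero_mul] at R1; exact (mul_ne_zero hp hd1) R1.symm
  have hΔ : Δ ≠ 0 := fun hz => by
    rw [hz, mul_zero] at R2; exact (mul_ne_zero hc1 hq) R2.symm
  have hrs : r * s ≠ 0 := R3 ▸ mul_ne_zero hA hΔ
  have e1 : (A * D0) * (G0 * Δ) = (A * Δ) * (G0 * D0) := by ring
  rw [R3, R4, R5, R6] at e1
  have hz : α * (r * s * (c1 * d1)) = 0 := by linear_combination e1
  rcases mul_eq_zero.mp hz with hx | hx
  · exact hα hx
  · exact (mul_ne_zero hrs (mul_ne_zero hc1 hd1)) hx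

theorem alg2 (α c1 d1 p q r s A B Γ2 Δ G0 D0 : ℂ)
    (R1 : A * B = c1 * p) (R2 : Γ2 * Δ = q * d1) (R3 : A * Δ = s * r)
    (R4 : A * D0 = c1 * r) (R5 : G0 * Δ = s * d1)
    (R6 : G0 * D0 = (1 - α) * (c1 * d1))
    (hp : p ≠ 0) (hq : q ≠ 0) (hc1 : c1 ≠ 0) (hd1 : d1 ≠ 0) (hα : α ≠ 0) : False := by
  have hA : A ≠ 0 := fun hz => by
    rw [hz, zero_mul] at R1; exact (mul_ne_zero hc1 hp) R1.symm
  have hΔ : Δ ≠ 0 := fun hz => by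
    rw [hz, mul_zero] at R2; exact (mul_ne_zero hq hd1) R2.symm
  have hrs : s * r ≠ 0 := R3 ▸ mul_ne_zero hA hΔ
  have e1 : (A * D0) * (G0 * Δ) = (A * Δ) * (G0 * D0) := by ring
  rw [R3, R4, R5, R6] at e1
  have hz : α * (s * r * (c1 * d1)) = 0 := by linear_combination e1
  rcases mul_eq_zero.mp hz with hx | hx
  · exact hα hx
  · exact (mul_ne_zero hrs (mul_ne_zero hc1 hd1)) hx

section Gen4
variable {S T U V : Type*} [DecidableEq S] [DecidableEq T] [DecidableEq U] [DecidableEq V]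
  [Fintype S] [Fintype T] [Fintype U] [Fintype V]
set_option linter.unusedSectionVars false

theorem coeff_P (c : S → T → ℂ) (d : U → V → ℂ) (α : ℂ) (os : S) (ot : T) (ou : U) (ov : V)
    (s : S) (t : T) (u : U) (v : V) :
    MvPolynomial.coeff (Dm 1 1 1 1 s t u v)
      ((∑ s' : S, ∑ t' : T, C (c s' t') * X (i1 s') * X (i2 t')) *
          (∑ u' : U, ∑ v' : V, C (d u' v') * X (i3 u') * X (i4 v')) -
        C (α * c os ot * d ou ov) * X (i1 os) * X (i2 ot) * X (i3 ou) * X (i4 ov)) =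
      c s t * d u v -
        (if os = s ∧ ot = t ∧ ou = u ∧ ov = v then α * c os ot * d ou ov else 0) := by
  rw [MvPolynomial.coeff_sub, coeff_TT, CXX4]
  congr 1
  rw [show (Finsupp.single (i1 os) 1 + Finsupp.single (i2 ot) 1 + Finsupp.single (i3 ou) 1 +
      Finsupp.single (i4 ov) 1 : (S ⊕ T ⊕ U ⊕ V) →₀ ℕ) = Dm 1 1 1 1 os ot ou ov from rfl,
    MvPolynomial.coeff_monomial]
  simp only [Dm_eq_iff]

theorem P_homog (w : (S ⊕ T ⊕ U ⊕ V) → ℕ) (m12 m34 : ℕ)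
    (h12 : ∀ (s : S) (t : T),
      Finsupp.weight w (Finsupp.single (i1 s) 1 + Finsupp.single (i2 t) 1) = m12)
    (h34 : ∀ (u : U) (v : V),
      Finsupp.weight w (Finsupp.single (i3 u) 1 + Finsupp.single (i4 v) 1) = m34)
    (hm : m12 + m34 = 1)
    (c : S → T → ℂ) (d : U → V → ℂ) (α : ℂ) (os : S) (ot : T) (ou : U) (ov : V) :
    IsWeightedHomogeneous w
      ((∑ s' : S, ∑ t' : T, C (c s' t') * X (i1 s') * X (i2 t')) *
          (∑ u' : U, ∑ v' : V, C (d u' v') * X (i3 u') * X (i4 v')) -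
        C (α * c os ot * d ou ov) * X (i1 os) * X (i2 ot) * X (i3 ou) * X (i4 ov)) 1 := by
  have hT1 : IsWeightedHomogeneous w
      (∑ s' : S, ∑ t' : T, C (c s' t') * X (i1 s') * X (i2 t')) m12 :=
    IsWeightedHomogeneous.sum _ _ _ (fun s' _ =>
      IsWeightedHomogeneous.sum _ _ _ (fun t' _ => by
        rw [CXX2]; exact isWeightedHomogeneous_monomial _ _ _ (h12 s' t')))
  have hT2 : IsWeightedHomogeneous w
      (∑ u' : U, ∑ v' : V, C (d u' v') * X (i3 u') * X (i4 v')) m34 :=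
    IsWeightedHomogeneous.sum _ _ _ (fun u' _ =>
      IsWeightedHomogeneous.sum _ _ _ (fun v' _ => by
        rw [CXX2]; exact isWeightedHomogeneous_monomial _ _ _ (h34 u' v')))
  have hM : IsWeightedHomogeneous w
      (C (α * c os ot * d ou ov) * X (i1 os) * X (i2 ot) * X (i3 ou) * X (i4 ov)) 1 := by
    rw [CXX4]
    apply isWeightedHomogeneous_monomial
    have e1 : (Finsupp.single (i1 os) 1 + Finsupp.single (i2 ot) 1 + Finsupp.single (i3 ou) 1 +
        Finsupp.single (i4 ov) 1 : (S ⊕ T ⊕ U ⊕ V) →₀ ℕ) =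
        (Finsupp.single (i1 os) 1 + Finsupp.single (i2 ot) 1) +
          (Finsupp.single (i3 ou) 1 + Finsupp.single (i4 ov) 1) := by
      rw [add_assoc, add_assoc]
    rw [e1, map_add, h12, h34, hm]
  have hprod := hT1.mul hT2
  rw [hm] at hprod
  have := Submodule.sub_mem (weightedHomogeneousSubmodule ℂ w 1)
    ((mem_weightedHomogeneousSubmodule _ _ _ _).2 hprod)
    ((mem_weightedHomogeneousSubmodule _ _ _ _).2 hM)
  exact (mem_weightedHomogeneousSubmodule _ _ _ _).1 this

theorem unit_imp_C (g : MvPolynomial (S ⊕ T ⊕ U ⊕ V) ℂ) (hu : IsUnit g) :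
    ∃ e : ℂ, g = MvPolynomial.C e := by
  obtain ⟨gi, hgi⟩ := isUnit_iff_exists_inv.mp hu
  have hg0 : g ≠ 0 := fun hz => by rw [hz, zero_mul] at hgi; exact one_ne_zero hgi.symm
  have hgi0 : gi ≠ 0 := fun hz => by rw [hz, mul_zero] at hgi; exact one_ne_zero hgi.symm
  have hone : ∀ w : (S ⊕ T ⊕ U ⊕ V) → ℕ, IsWeightedHomogeneous w (g * gi) 0 := by
    intro w; rw [hgi]; exact isWeightedHomogeneous_one ℂ w
  have get0 : ∀ w : (S ⊕ T ⊕ U ⊕ V) → ℕ, IsWeightedHomogeneous w g 0 := by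
    intro w
    obtain ⟨a, b, hab, hga, _⟩ := homog_factor w hg0 hgi0 (hone w)
    have : a = 0 := by omega
    exact this ▸ hga
  exact ⟨_, eq_C_of_homog0 g (get0 w1) (get0 w2) (get0 w3) (get0 w4)⟩

end Gen4
theorem main_general {S T U V : Type*} [DecidableEq S] [DecidableEq T] [DecidableEq U]
    [DecidableEq V] [Fintype S] [Fintype T] [Fintype U] [Fintype V]
    (os : S) (ot : T) (ou : U) (ov : V)
    (c : S → T → ℂ) (d : U → V → ℂ)
    (hc1 : c os ot ≠ 0) (hd1 : d ou ov ≠ 0)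
    (hc2 : ∃ s t, s ≠ os ∧ c s t ≠ 0) (hc3 : ∃ s t, t ≠ ot ∧ c s t ≠ 0)
    (hd2 : ∃ u v, u ≠ ou ∧ d u v ≠ 0) (hd3 : ∃ u v, v ≠ ov ∧ d u v ≠ 0)
    (α : ℂ) (hα : α ≠ 0) :
    Irreducible ((∑ s' : S, ∑ t' : T, C (c s' t') * X (i1 s') * X (i2 t')) *
          (∑ u' : U, ∑ v' : V, C (d u' v') * X (i3 u') * X (i4 v')) -
        C (α * c os ot * d ou ov) * X (i1 os) * X (i2 ot) * X (i3 ou) * X (i4 ov)) := by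
  set P : MvPolynomial (S ⊕ T ⊕ U ⊕ V) ℂ :=
    (∑ s' : S, ∑ t' : T, C (c s' t') * X (i1 s') * X (i2 t')) *
        (∑ u' : U, ∑ v' : V, C (d u' v') * X (i3 u') * X (i4 v')) -
      C (α * c os ot * d ou ov) * X (i1 os) * X (i2 ot) * X (i3 ou) * X (i4 ov) with hPdef
  have hcoeff : ∀ (s : S) (t : T) (u : U) (v : V),
      MvPolynomial.coeff (Dm 1 1 1 1 s t u v) P = c s t * d u v -
        (if os = s ∧ ot = t ∧ ou = u ∧ ov = v then α * c os ot * d ou ov else 0) :=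
    fun s t u v => coeff_P c d α os ot ou ov s t u v
  have hne0 : P ≠ 0 := by
    obtain ⟨s₀, t₀, hs₀, hcs⟩ := hc2
    intro hz
    have hco := hcoeff s₀ t₀ ou ov
    rw [hz, MvPolynomial.coeff_zero, if_neg (fun he => hs₀ he.1.symm), sub_zero] at hco
    exact (mul_ne_zero hcs hd1) hco.symm
  have hw1 : IsWeightedHomogeneous w1 P 1 :=
    P_homog w1 1 0 (fun s t => by simp [map_add, weight_single_nat, w1])
      (fun u v => by simp [map_add, weight_single_nat, w1]) rfl c d α os ot ou ov
  have hw2 : IsWeightedHomogeneous w2 P 1 :=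
    P_homog w2 1 0 (fun s t => by simp [map_add, weight_single_nat, w2])
      (fun u v => by simp [map_add, weight_single_nat, w2]) rfl c d α os ot ou ov
  have hw3 : IsWeightedHomogeneous w3 P 1 :=
    P_homog w3 0 1 (fun s t => by simp [map_add, weight_single_nat, w3])
      (fun u v => by simp [map_add, weight_single_nat, w3]) rfl c d α os ot ou ov
  have hw4 : IsWeightedHomogeneous w4 P 1 :=
    P_homog w4 0 1 (fun s t => by simp [map_add, weight_single_nat, w4])
      (fun u v => by simp [map_add, weight_single_nat, w4]) rfl c d α os ot ou ov
  constructor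
  · intro hu
    obtain ⟨e, he⟩ := unit_imp_C P hu
    have hcc : MvPolynomial.coeff 0 P ≠ 0 := by
      rw [he, MvPolynomial.coeff_zero_C]
      intro hz
      exact hne0 (by rw [he, hz, map_zero])
    have h01 := hw1 hcc
    simp at h01
  · intro g h hgh
    by_contra hcon
    push_neg at hcon
    obtain ⟨hgu, hhu⟩ := hcon
    have hg0 : g ≠ 0 := fun hz => hne0 (by rw [hgh, hz, zero_mul])
    have hh0 : h ≠ 0 := fun hz => hne0 (by rw [hgh, hz, mul_zero])
    obtain ⟨a₁, b₁, e₁, hg1, hh1⟩ := homog_factor w1 hg0 hh0 (hgh ▸ hw1)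
    obtain ⟨a₂, b₂, e₂, hg2, hh2⟩ := homog_factor w2 hg0 hh0 (hgh ▸ hw2)
    obtain ⟨a₃, b₃, e₃, hg3, hh3⟩ := homog_factor w3 hg0 hh0 (hgh ▸ hw3)
    obtain ⟨a₄, b₄, e₄, hg4, hh4⟩ := homog_factor w4 hg0 hh0 (hgh ▸ hw4)
    have hsplit : ∀ (s : S) (t : T) (u : U) (v : V),
        MvPolynomial.coeff (Dm a₁ a₂ a₃ a₄ s t u v) g *
          MvPolynomial.coeff (Dm b₁ b₂ b₃ b₄ s t u v) h = c s t * d u v -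
          (if os = s ∧ ot = t ∧ ou = u ∧ ov = v then α * c os ot * d ou ov else 0) := by
      intro s t u v
      rw [← coeff_mul_split g h a₁ a₂ a₃ a₄ b₁ b₂ b₃ b₄ e₁ e₂ e₃ e₄ hg1 hg2 hg3 hg4
        hh1 hh2 hh3 hh4 s t u v, ← hgh]
      exact hcoeff s t u v
    have hoff : ∀ (s : S) (t : T) (u : U) (v : V),
        ¬(os = s ∧ ot = t ∧ ou = u ∧ ov = v) →
        MvPolynomial.coeff (Dm a₁ a₂ a₃ a₄ s t u v) g *
          MvPolynomial.coeff (Dm b₁ b₂ b₃ b₄ s t u v) h = c s t * d u v := by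
      intro s t u v hcond
      rw [hsplit s t u v, if_neg hcond, sub_zero]
    have hone : MvPolynomial.coeff (Dm a₁ a₂ a₃ a₄ os ot ou ov) g *
        MvPolynomial.coeff (Dm b₁ b₂ b₃ b₄ os ot ou ov) h =
        (1 - α) * (c os ot * d ou ov) := by
      rw [hsplit os ot ou ov, if_pos ⟨rfl, rfl, rfl, rfl⟩]; ring
    clear hsplit hcoeff hne0 hw1 hw2 hw3 hw4 hgh hPdef
    have A1 : a₁ = 0 ∧ b₁ = 1 ∨ a₁ = 1 ∧ b₁ = 0 := by omega
    have A2 : a₂ = 0 ∧ b₂ = 1 ∨ a₂ = 1 ∧ b₂ = 0 := by omega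
    have A3 : a₃ = 0 ∧ b₃ = 1 ∨ a₃ = 1 ∧ b₃ = 0 := by omega
    have A4 : a₄ = 0 ∧ b₄ = 1 ∨ a₄ = 1 ∧ b₄ = 0 := by omega
    rcases A1 with ⟨rfl, rfl⟩ | ⟨rfl, rfl⟩
    · rcases A2 with ⟨rfl, rfl⟩ | ⟨rfl, rfl⟩
      · rcases A3 with ⟨rfl, rfl⟩ | ⟨rfl, rfl⟩
        · rcases A4 with ⟨rfl, rfl⟩ | ⟨rfl, rfl⟩
          · -- 0000 : g constant
            apply hgu
            have hC := eq_C_of_homog0 g hg1 hg2 hg3 hg4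
            rw [hC]
            exact (isUnit_iff_ne_zero.mpr (fun hz => hg0 (by rw [hC, hz, map_zero]))).map C
          · -- 0001 : alg2, z₁ = hd3, z₂ = hc2
            obtain ⟨u₁, v₁, hv₁, hds⟩ := hd3
            obtain ⟨s₀, t₀, hs₀, hcs⟩ := hc2
            simp only [Dm, Finsupp.single_zero, add_zero, zero_add] at hoff hone
            exact alg2 α (c os ot) (d ou ov) _ _ _ _ _ _ _ _ _ _
              (hoff os ot u₁ v₁ (fun he => hv₁ he.2.2.2.symm))
              (hoff s₀ t₀ ou ov (fun he => hs₀ he.1.symm))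
              (hoff s₀ t₀ ou v₁ (fun he => hv₁ he.2.2.2.symm))
              (hoff os ot ou v₁ (fun he => hv₁ he.2.2.2.symm))
              (hoff s₀ t₀ ou ov (fun he => hs₀ he.1.symm))
              hone hds hcs hc1 hd1 hα
        · rcases A4 with ⟨rfl, rfl⟩ | ⟨rfl, rfl⟩
          · -- 0010 : alg2, z₁ = hd2, z₂ = hc2
            obtain ⟨u₀, v₀, hu₀, hds⟩ := hd2
            obtain ⟨s₀, t₀, hs₀, hcs⟩ := hc2
            simp only [Dm, Finsupp.single_zero, add_zero, zero_add] at hoff hone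
            exact alg2 α (c os ot) (d ou ov) _ _ _ _ _ _ _ _ _ _
              (hoff os ot u₀ v₀ (fun he => hu₀ he.2.2.1.symm))
              (hoff s₀ t₀ ou ov (fun he => hs₀ he.1.symm))
              (hoff s₀ t₀ u₀ ov (fun he => hu₀ he.2.2.1.symm))
              (hoff os ot u₀ ov (fun he => hu₀ he.2.2.1.symm))
              (hoff s₀ t₀ ou ov (fun he => hs₀ he.1.symm))
              hone hds hcs hc1 hd1 hα
          · -- 0011 : alg2, z₁ = hd2, z₂ = hc2
            obtain ⟨u₀, v₀, hu₀, hds⟩ := hd2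
            obtain ⟨s₀, t₀, hs₀, hcs⟩ := hc2
            simp only [Dm, Finsupp.single_zero, add_zero, zero_add] at hoff hone
            exact alg2 α (c os ot) (d ou ov) _ _ _ _ _ _ _ _ _ _
              (hoff os ot u₀ v₀ (fun he => hu₀ he.2.2.1.symm))
              (hoff s₀ t₀ ou ov (fun he => hs₀ he.1.symm))
              (hoff s₀ t₀ u₀ v₀ (fun he => hu₀ he.2.2.1.symm))
              (hoff os ot u₀ v₀ (fun he => hu₀ he.2.2.1.symm))
              (hoff s₀ t₀ ou ov (fun he => hs₀ he.1.symm))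
              hone hds hcs hc1 hd1 hα
      · rcases A3 with ⟨rfl, rfl⟩ | ⟨rfl, rfl⟩
        · rcases A4 with ⟨rfl, rfl⟩ | ⟨rfl, rfl⟩
          · -- 0100 : alg1, z₁ = hc3, z₂ = hd2
            obtain ⟨s₁, t₁, ht₁, hcs⟩ := hc3
            obtain ⟨u₀, v₀, hu₀, hds⟩ := hd2
            simp only [Dm, Finsupp.single_zero, add_zero, zero_add] at hoff hone
            exact alg1 α (c os ot) (d ou ov) _ _ _ _ _ _ _ _ _ _
              (hoff s₁ t₁ ou ov (fun he => ht₁ he.2.1.symm))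
              (hoff os ot u₀ v₀ (fun he => hu₀ he.2.2.1.symm))
              (hoff os t₁ u₀ v₀ (fun he => ht₁ he.2.1.symm))
              (hoff os t₁ ou ov (fun he => ht₁ he.2.1.symm))
              (hoff os ot u₀ v₀ (fun he => hu₀ he.2.2.1.symm))
              hone hcs hds hc1 hd1 hα
          · -- 0101 : alg1, z₁ = hc3, z₂ = hd2
            obtain ⟨s₁, t₁, ht₁, hcs⟩ := hc3
            obtain ⟨u₀, v₀, hu₀, hds⟩ := hd2
            simp only [Dm, Finsupp.single_zero, add_zero, zero_add] at hoff hone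
            exact alg1 α (c os ot) (d ou ov) _ _ _ _ _ _ _ _ _ _
              (hoff s₁ t₁ ou ov (fun he => ht₁ he.2.1.symm))
              (hoff os ot u₀ v₀ (fun he => hu₀ he.2.2.1.symm))
              (hoff os t₁ u₀ ov (fun he => ht₁ he.2.1.symm))
              (hoff os t₁ ou ov (fun he => ht₁ he.2.1.symm))
              (hoff os ot u₀ ov (fun he => hu₀ he.2.2.1.symm))
              hone hcs hds hc1 hd1 hα
        · rcases A4 with ⟨rfl, rfl⟩ | ⟨rfl, rfl⟩
          · -- 0110 : alg1, z₁ = hc3, z₂ = hd3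
            obtain ⟨s₁, t₁, ht₁, hcs⟩ := hc3
            obtain ⟨u₁, v₁, hv₁, hds⟩ := hd3
            simp only [Dm, Finsupp.single_zero, add_zero, zero_add] at hoff hone
            exact alg1 α (c os ot) (d ou ov) _ _ _ _ _ _ _ _ _ _
              (hoff s₁ t₁ ou ov (fun he => ht₁ he.2.1.symm))
              (hoff os ot u₁ v₁ (fun he => hv₁ he.2.2.2.symm))
              (hoff os t₁ ou v₁ (fun he => ht₁ he.2.1.symm))
              (hoff os t₁ ou ov (fun he => ht₁ he.2.1.symm))
              (hoff os ot ou v₁ (fun he => hv₁ he.2.2.2.symm))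
              hone hcs hds hc1 hd1 hα
          · -- 0111 : alg2, z₁ = hd2, z₂ = hc2
            obtain ⟨u₀, v₀, hu₀, hds⟩ := hd2
            obtain ⟨s₀, t₀, hs₀, hcs⟩ := hc2
            simp only [Dm, Finsupp.single_zero, add_zero, zero_add] at hoff hone
            exact alg2 α (c os ot) (d ou ov) _ _ _ _ _ _ _ _ _ _
              (hoff os ot u₀ v₀ (fun he => hu₀ he.2.2.1.symm))
              (hoff s₀ t₀ ou ov (fun he => hs₀ he.1.symm))
              (hoff s₀ ot u₀ v₀ (fun he => hs₀ he.1.symm))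
              (hoff os ot u₀ v₀ (fun he => hu₀ he.2.2.1.symm))
              (hoff s₀ ot ou ov (fun he => hs₀ he.1.symm))
              hone hds hcs hc1 hd1 hα
    · rcases A2 with ⟨rfl, rfl⟩ | ⟨rfl, rfl⟩
      · rcases A3 with ⟨rfl, rfl⟩ | ⟨rfl, rfl⟩
        · rcases A4 with ⟨rfl, rfl⟩ | ⟨rfl, rfl⟩
          · -- 1000 : alg1, z₁ = hc2, z₂ = hd2
            obtain ⟨s₀, t₀, hs₀, hcs⟩ := hc2
            obtain ⟨u₀, v₀, hu₀, hds⟩ := hd2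
            simp only [Dm, Finsupp.single_zero, add_zero, zero_add] at hoff hone
            exact alg1 α (c os ot) (d ou ov) _ _ _ _ _ _ _ _ _ _
              (hoff s₀ t₀ ou ov (fun he => hs₀ he.1.symm))
              (hoff os ot u₀ v₀ (fun he => hu₀ he.2.2.1.symm))
              (hoff s₀ ot u₀ v₀ (fun he => hs₀ he.1.symm))
              (hoff s₀ ot ou ov (fun he => hs₀ he.1.symm))
              (hoff os ot u₀ v₀ (fun he => hu₀ he.2.2.1.symm))
              hone hcs hds hc1 hd1 hα
          · -- 1001 : alg1, z₁ = hc2, z₂ = hd2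
            obtain ⟨s₀, t₀, hs₀, hcs⟩ := hc2
            obtain ⟨u₀, v₀, hu₀, hds⟩ := hd2
            simp only [Dm, Finsupp.single_zero, add_zero, zero_add] at hoff hone
            exact alg1 α (c os ot) (d ou ov) _ _ _ _ _ _ _ _ _ _
              (hoff s₀ t₀ ou ov (fun he => hs₀ he.1.symm))
              (hoff os ot u₀ v₀ (fun he => hu₀ he.2.2.1.symm))
              (hoff s₀ ot u₀ ov (fun he => hs₀ he.1.symm))
              (hoff s₀ ot ou ov (fun he => hs₀ he.1.symm))
              (hoff os ot u₀ ov (fun he => hu₀ he.2.2.1.symm))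
              hone hcs hds hc1 hd1 hα
        · rcases A4 with ⟨rfl, rfl⟩ | ⟨rfl, rfl⟩
          · -- 1010 : alg1, z₁ = hc2, z₂ = hd3
            obtain ⟨s₀, t₀, hs₀, hcs⟩ := hc2
            obtain ⟨u₁, v₁, hv₁, hds⟩ := hd3
            simp only [Dm, Finsupp.single_zero, add_zero, zero_add] at hoff hone
            exact alg1 α (c os ot) (d ou ov) _ _ _ _ _ _ _ _ _ _
              (hoff s₀ t₀ ou ov (fun he => hs₀ he.1.symm))
              (hoff os ot u₁ v₁ (fun he => hv₁ he.2.2.2.symm))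
              (hoff s₀ ot ou v₁ (fun he => hs₀ he.1.symm))
              (hoff s₀ ot ou ov (fun he => hs₀ he.1.symm))
              (hoff os ot ou v₁ (fun he => hv₁ he.2.2.2.symm))
              hone hcs hds hc1 hd1 hα
          · -- 1011 : alg2, z₁ = hd2, z₂ = hc3
            obtain ⟨u₀, v₀, hu₀, hds⟩ := hd2
            obtain ⟨s₁, t₁, ht₁, hcs⟩ := hc3
            simp only [Dm, Finsupp.single_zero, add_zero, zero_add] at hoff hone
            exact alg2 α (c os ot) (d ou ov) _ _ _ _ _ _ _ _ _ _
              (hoff os ot u₀ v₀ (fun he => hu₀ he.2.2.1.symm))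
              (hoff s₁ t₁ ou ov (fun he => ht₁ he.2.1.symm))
              (hoff os t₁ u₀ v₀ (fun he => ht₁ he.2.1.symm))
              (hoff os ot u₀ v₀ (fun he => hu₀ he.2.2.1.symm))
              (hoff os t₁ ou ov (fun he => ht₁ he.2.1.symm))
              hone hds hcs hc1 hd1 hα
      · rcases A3 with ⟨rfl, rfl⟩ | ⟨rfl, rfl⟩
        · rcases A4 with ⟨rfl, rfl⟩ | ⟨rfl, rfl⟩
          · -- 1100 : alg1, z₁ = hc2, z₂ = hd2
            obtain ⟨s₀, t₀, hs₀, hcs⟩ := hc2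
            obtain ⟨u₀, v₀, hu₀, hds⟩ := hd2
            simp only [Dm, Finsupp.single_zero, add_zero, zero_add] at hoff hone
            exact alg1 α (c os ot) (d ou ov) _ _ _ _ _ _ _ _ _ _
              (hoff s₀ t₀ ou ov (fun he => hs₀ he.1.symm))
              (hoff os ot u₀ v₀ (fun he => hu₀ he.2.2.1.symm))
              (hoff s₀ t₀ u₀ v₀ (fun he => hs₀ he.1.symm))
              (hoff s₀ t₀ ou ov (fun he => hs₀ he.1.symm))
              (hoff os ot u₀ v₀ (fun he => hu₀ he.2.2.1.symm))
              hone hcs hds hc1 hd1 hα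
          · -- 1101 : alg1, z₁ = hc2, z₂ = hd2
            obtain ⟨s₀, t₀, hs₀, hcs⟩ := hc2
            obtain ⟨u₀, v₀, hu₀, hds⟩ := hd2
            simp only [Dm, Finsupp.single_zero, add_zero, zero_add] at hoff hone
            exact alg1 α (c os ot) (d ou ov) _ _ _ _ _ _ _ _ _ _
              (hoff s₀ t₀ ou ov (fun he => hs₀ he.1.symm))
              (hoff os ot u₀ v₀ (fun he => hu₀ he.2.2.1.symm))
              (hoff s₀ t₀ u₀ ov (fun he => hs₀ he.1.symm))
              (hoff s₀ t₀ ou ov (fun he => hs₀ he.1.symm))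
              (hoff os ot u₀ ov (fun he => hu₀ he.2.2.1.symm))
              hone hcs hds hc1 hd1 hα
        · rcases A4 with ⟨rfl, rfl⟩ | ⟨rfl, rfl⟩
          · -- 1110 : alg1, z₁ = hc2, z₂ = hd3
            obtain ⟨s₀, t₀, hs₀, hcs⟩ := hc2
            obtain ⟨u₁, v₁, hv₁, hds⟩ := hd3
            simp only [Dm, Finsupp.single_zero, add_zero, zero_add] at hoff hone
            exact alg1 α (c os ot) (d ou ov) _ _ _ _ _ _ _ _ _ _
              (hoff s₀ t₀ ou ov (fun he => hs₀ he.1.symm))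
              (hoff os ot u₁ v₁ (fun he => hv₁ he.2.2.2.symm))
              (hoff s₀ t₀ ou v₁ (fun he => hs₀ he.1.symm))
              (hoff s₀ t₀ ou ov (fun he => hs₀ he.1.symm))
              (hoff os ot ou v₁ (fun he => hv₁ he.2.2.2.symm))
              hone hcs hds hc1 hd1 hα
          · -- 1111 : h constant
            apply hhu
            have hC := eq_C_of_homog0 h hh1 hh2 hh3 hh4
            rw [hC]
            exact (isUnit_iff_ne_zero.mpr (fun hz => hh0 (by rw [hC, hz, map_zero]))).map C

theorem stmt3 (k l m n : ℕ) (hk : 1 ≤ k) (hl : 1 ≤ l) (hm : 1 ≤ m) (hn : 1 ≤ n)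
    (c : (Fin k → Bool) → (Fin l → Bool) → ℂ) (d : (Fin m → Bool) → (Fin n → Bool) → ℂ)
    (hc1 : c (fun _ => true) (fun _ => true) ≠ 0)
    (hd1 : d (fun _ => true) (fun _ => true) ≠ 0)
    (hc2 : ∃ (s : Fin k → Bool) (t : Fin l → Bool), s ≠ (fun _ => true) ∧ c s t ≠ 0)
    (hc3 : ∃ (s : Fin k → Bool) (t : Fin l → Bool), t ≠ (fun _ => true) ∧ c s t ≠ 0)
    (hd2 : ∃ (u : Fin m → Bool) (v : Fin n → Bool), u ≠ (fun _ => true) ∧ d u v ≠ 0)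
    (hd3 : ∃ (u : Fin m → Bool) (v : Fin n → Bool), v ≠ (fun _ => true) ∧ d u v ≠ 0)
    (α : ℂ) (hα : α ≠ 0)
    (P : MvPolynomial
      ((Fin k → Bool) ⊕ (Fin l → Bool) ⊕ (Fin m → Bool) ⊕ (Fin n → Bool)) ℂ)
    (hP : P =
      (∑ s : Fin k → Bool, ∑ t : Fin l → Bool,
          MvPolynomial.C (c s t) * MvPolynomial.X (Sum.inl s) *
            MvPolynomial.X (Sum.inr (Sum.inl t))) *
        (∑ u : Fin m → Bool, ∑ v : Fin n → Bool,
          MvPolynomial.C (d u v) * MvPolynomial.X (Sum.inr (Sum.inr (Sum.inl u))) *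
            MvPolynomial.X (Sum.inr (Sum.inr (Sum.inr v)))) -
      MvPolynomial.C (α * c (fun _ => true) (fun _ => true) * d (fun _ => true) (fun _ => true)) *
        MvPolynomial.X (Sum.inl (fun _ => true)) *
        MvPolynomial.X (Sum.inr (Sum.inl (fun _ => true))) *
        MvPolynomial.X (Sum.inr (Sum.inr (Sum.inl (fun _ => true)))) *
        MvPolynomial.X (Sum.inr (Sum.inr (Sum.inr (fun _ => true))))) :
    Irreducible P ∧ ¬ Decomposable P := by
  have hirr : Irreducible P := by
    rw [hP]
    exact main_general (fun _ => true) (fun _ => true) (fun _ => true) (fun _ => true)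
      c d hc1 hd1 hc2 hc3 hd2 hd3 α hα
  refine ⟨hirr, ?_⟩
  rintro ⟨g, h, hgc, hhc, -, hmul⟩
  rcases hirr.isUnit_or_isUnit hmul with hu | hu
  · exact hgc (unit_imp_C g hu)
  · exact hhc (unit_imp_C h hu)
end

section
/- Let k = k_1 + k_2 and m = m_1 + m_2 with k_1, m_1 ≥ 1. Work in the polynomial ring over ℂ with variables x_s (s ∈ {0,1}^k) and z_u (u ∈ {0,1}^m). Write each s ∈ {0,1}^k as s = s_1 ∘ s_2 with s_1 ∈ {0,1}^{k_1}, s_2 ∈ {0,1}^{k_2}, and each u ∈ {0,1}^m as u = u_1 ∘ u_2 with u_1 ∈ {0,1}^{m_1}, u_2 ∈ {0,1}^{m_2}. Let T_1 = Σ_s c_s·x_s and T_2 = Σ_u d_u·z_u, where the coefficients satisfy: there exists s_2 with c_{𝟙∘s_2} ≠ 0; there exists u_2 with d_{𝟙∘u_2} ≠ 0; there exist s_1 ≠ 𝟙 and s_2 with c_{s_1∘s_2} ≠ 0; and there exist u_1 ≠ 𝟙 and u_2 with d_{u_1∘u_2} ≠ 0. Fix a nonzero α ∈ ℂ and define P =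 T_1·T_2 − α·Σ_{s : s_1 = 𝟙} Σ_{u : u_1 = 𝟙} c_s·d_u·x_s·z_u. Then P is irreducible (and in particular indecomposable). -/
open MvPolynomial

set_option linter.unusedSectionVars false
set_option maxHeartbeats 1000000

namespace Stmt4Aux
variable {σ : Type*} [DecidableEq σ]

lemma sum_eq_degree (m : σ →₀ ℕ) : (m.sum fun _ e => e) = Finsupp.degree m := rfl

lemma degree_single (v : σ) : Finsupp.degree (Finsupp.single v (1:ℕ)) = 1 := by
  simp [Finsupp.degree_apply, Finsupp.support_single_ne_zero v one_ne_zero]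

lemma degree_add (m n : σ →₀ ℕ) :
    Finsupp.degree (m + n) = Finsupp.degree m + Finsupp.degree n := by
  simp only [Finsupp.degree_eq_weight_one, map_add]

lemma single_one_add_single_one_eq {p q r s : σ}
    (h : Finsupp.single p (1:ℕ) + Finsupp.single q 1 = Finsupp.single r 1 + Finsupp.single s 1) :
    (p = r ∧ q = s) ∨ (p = s ∧ q = r) := by
  have := (Finsupp.single_add_single_eq_single_add_single (M := ℕ)
    (one_ne_zero) (one_ne_zero)).mp h
  rcases this with h | h | h
  · exact Or.inl h
  · exact Or.inr h.2
  · omega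

/-! ### total degree is multiplicative -/

noncomputable def Φ : MvPolynomial σ ℂ →+* Polynomial (MvPolynomial σ ℂ) :=
  eval₂Hom (Polynomial.C.comp C) fun v => Polynomial.C (X v) * Polynomial.X

lemma Φ_monomial (d : σ →₀ ℕ) (a : ℂ) :
    Φ (monomial d a) = Polynomial.C (monomial d a) * Polynomial.X ^ (Finsupp.degree d) := by
  rw [Φ, eval₂Hom_monomial]
  have : (d.prod fun v n => (Polynomial.C (X v : MvPolynomial σ ℂ) * Polynomial.X) ^ n)
      = Polynomial.C (d.prod fun v n => (X v : MvPolynomial σ ℂ) ^ n)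
        * Polynomial.X ^ (Finsupp.degree d) := by
    rw [Finsupp.prod, Finsupp.prod, Finsupp.degree_apply]
    rw [← Finset.prod_pow_eq_pow_sum, map_prod, ← Finset.prod_mul_distrib]
    apply Finset.prod_congr rfl
    intro v _
    rw [mul_pow, map_pow]
  rw [this, RingHom.comp_apply, ← mul_assoc, ← map_mul, ← monomial_eq]

lemma coeff_Φ (p : MvPolynomial σ ℂ) (n : ℕ) :
    (Φ p).coeff n = homogeneousComponent n p := by
  have hrep := p.support_sum_monomial_coeff
  conv_lhs => rw [← hrep]
  conv_rhs => rw [← hrep]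
  rw [map_sum, Polynomial.finset_sum_coeff, map_sum]
  apply Finset.sum_congr rfl
  intro d _
  rw [Φ_monomial, Polynomial.coeff_C_mul, Polynomial.coeff_X_pow]
  ext m
  rw [coeff_homogeneousComponent]
  by_cases hd : Finsupp.degree d = n
  · rw [if_pos hd.symm, mul_one]
    split_ifs with h
    · rfl
    · by_cases hm : d = m
      · subst hm; exact absurd hd h
      · simp [MvPolynomial.coeff_monomial, hm]
  · rw [if_neg (fun h => hd h.symm), mul_zero, MvPolynomial.coeff_zero]
    split_ifs with h
    · by_cases hm : d = m
      · subst hm; exact absurd h hd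
      · simp [MvPolynomial.coeff_monomial, hm]
    · rfl

lemma homogeneousComponent_totalDegree_ne_zero {p : MvPolynomial σ ℂ} (hp : p ≠ 0) :
    homogeneousComponent p.totalDegree p ≠ 0 := by
  obtain ⟨d, hd, hdeg⟩ := Finset.exists_mem_eq_sup p.support
    (support_nonempty.mpr hp) fun m => m.sum fun _ e => e
  intro h0
  have := coeff_homogeneousComponent (φ := p) p.totalDegree d
  rw [h0, MvPolynomial.coeff_zero] at this
  rw [if_pos (by rw [← sum_eq_degree, ← hdeg]; rfl)] at this
  exact (mem_support_iff.mp hd) this.symm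

lemma natDegree_Φ {p : MvPolynomial σ ℂ} (hp : p ≠ 0) :
    (Φ p).natDegree = p.totalDegree := by
  apply le_antisymm
  · apply Polynomial.natDegree_le_iff_coeff_eq_zero.mpr
    intro n hn
    rw [coeff_Φ]
    exact homogeneousComponent_eq_zero n p hn
  · apply Polynomial.le_natDegree_of_ne_zero
    rw [coeff_Φ]
    exact homogeneousComponent_totalDegree_ne_zero hp

lemma Φ_ne_zero {p : MvPolynomial σ ℂ} (hp : p ≠ 0) : Φ p ≠ 0 := by
  intro h
  apply homogeneousComponent_totalDegree_ne_zero hp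
  rw [← coeff_Φ, h, Polynomial.coeff_zero]

lemma totalDegree_mul_eq {g h : MvPolynomial σ ℂ} (hg : g ≠ 0) (hh : h ≠ 0) :
    (g * h).totalDegree = g.totalDegree + h.totalDegree := by
  rw [← natDegree_Φ (mul_ne_zero hg hh), map_mul,
    Polynomial.natDegree_mul (Φ_ne_zero hg) (Φ_ne_zero hh), natDegree_Φ hg, natDegree_Φ hh]

lemma eq_C_of_totalDegree_eq_zero {p : MvPolynomial σ ℂ} (h : p.totalDegree = 0) :
    p = C (coeff 0 p) := by
  have hall := (totalDegree_eq_zero_iff _ p).mp h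
  ext m
  by_cases hm : m = 0
  · subst hm; rw [coeff_C, if_pos rfl]
  · rw [coeff_C, if_neg (fun he => hm he.symm)]
    by_contra hc
    exact hm (Finsupp.ext (hall m (mem_support_iff.mpr hc)))

/-! ### affine representation -/

noncomputable def eo : Option σ → (σ →₀ ℕ) :=
  fun t => t.elim 0 (fun v => Finsupp.single v 1)

@[simp] lemma eo_none : eo (none : Option σ) = 0 := rfl
@[simp] lemma eo_some (v : σ) : eo (some v) = Finsupp.single v 1 := rfl

lemma degree_eo_le (t : Option σ) : Finsupp.degree (eo t) ≤ 1 := by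
  cases t with
  | none => simp
  | some v => rw [eo_some, degree_single]

lemma eo_injective : Function.Injective (eo (σ := σ)) := by
  intro t t' h
  cases t with
  | none => cases t' with
    | none => rfl
    | some w => exact absurd h.symm (fun hc => one_ne_zero (Finsupp.single_eq_zero.mp hc))
  | some v => cases t' with
    | none => exact absurd h (fun hc => one_ne_zero (Finsupp.single_eq_zero.mp hc))
    | some w =>
        rw [eo_some, eo_some] at h
        obtain ⟨h1, -⟩ := (Finsupp.single_eq_single_iff _ _ _ _).mp h |>.resolve_right
          (fun hc => one_ne_zero hc.1)
        rw [h1]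

lemma shape (m : σ →₀ ℕ) (h : Finsupp.degree m ≤ 1) : ∃ t : Option σ, m = eo t := by
  by_cases h0 : m = 0
  · exact ⟨none, h0⟩
  · obtain ⟨v, hv⟩ := Finsupp.ne_iff.mp h0
    rw [Finsupp.coe_zero, Pi.zero_apply] at hv
    refine ⟨some v, ?_⟩
    have hle := Finsupp.le_degree v m
    have hv1 : m v = 1 := by omega
    ext w
    rw [eo_some, Finsupp.single_apply]
    by_cases hw : v = w
    · subst hw; rw [if_pos rfl, hv1]
    · rw [if_neg hw]
      by_contra hc
      have hwle : m v + m w ≤ Finsupp.degree m := by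
        rw [Finsupp.degree]
        have hsub : ({v, w} : Finset σ) ⊆ m.support := by
          intro x hx
          simp only [Finset.mem_insert, Finset.mem_singleton] at hx
          rcases hx with rfl | rfl
          · exact Finsupp.mem_support_iff.mpr (by omega)
          · exact Finsupp.mem_support_iff.mpr hc
        calc m v + m w = ∑ x ∈ ({v, w} : Finset σ), m x := by
              rw [Finset.sum_insert (by simpa using hw), Finset.sum_singleton]
          _ ≤ ∑ x ∈ m.support, m x := Finset.sum_le_sum_of_subset hsub
      omega

lemma affine [Fintype σ] {p : MvPolynomial σ ℂ} (hp : p.totalDegree ≤ 1) :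
    p = ∑ t : Option σ, monomial (eo t) (coeff (eo t) p) := by
  ext m
  rw [MvPolynomial.coeff_sum]
  simp only [MvPolynomial.coeff_monomial]
  by_cases hm : ∃ t, m = eo t
  · obtain ⟨t, rfl⟩ := hm
    rw [Finset.sum_eq_single t]
    · rw [if_pos rfl]
    · intro t' _ hne
      exact if_neg (fun h => hne (eo_injective h))
    · intro h; exact absurd (Finset.mem_univ t) h
  · have h0 : coeff m p = 0 := by
      by_contra hc
      have hmem : m ∈ p.support := mem_support_iff.mpr hc
      have := le_totalDegree hmem
      rw [sum_eq_degree] at this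
      exact hm (shape m (this.trans hp))
    rw [h0, Finset.sum_eq_zero]
    intro t _
    exact if_neg (fun he => hm ⟨t, he.symm⟩)

/-! ### conditions -/

lemma cond_zero {t t' : Option σ} (h : eo t + eo t' = 0) : t = none ∧ t' = none := by
  have hd := congrArg Finsupp.degree h
  rw [degree_add, map_zero] at hd
  constructor
  · cases t with
    | none => rfl
    | some v => rw [eo_some, degree_single] at hd; omega
  · cases t' with
    | none => rfl
    | some v =>
      rw [eo_some, degree_single] at hd
      cases t with
      | none => rw [eo_none, map_zero] at hd; omega
      | some u => rw [eo_some, degree_single] at hd; omega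

lemma cond_one {t t' : Option σ} {v : σ} (h : eo t + eo t' = Finsupp.single v 1) :
    (t = none ∧ t' = some v) ∨ (t = some v ∧ t' = none) := by
  have hd := congrArg Finsupp.degree h
  rw [degree_add, degree_single] at hd
  cases t with
  | none =>
    left
    cases t' with
    | none => rw [eo_none, map_zero] at hd; omega
    | some w =>
      rw [eo_none, eo_some, zero_add] at h
      obtain ⟨h1, -⟩ := (Finsupp.single_eq_single_iff _ _ _ _).mp h |>.resolve_right
        (fun hc => one_ne_zero hc.1)
      exact ⟨rfl, by rw [h1]⟩
  | some w =>
    right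
    cases t' with
    | some u => rw [eo_some, eo_some, degree_single, degree_single] at hd; omega
    | none =>
      rw [eo_some, eo_none, add_zero] at h
      obtain ⟨h1, -⟩ := (Finsupp.single_eq_single_iff _ _ _ _).mp h |>.resolve_right
        (fun hc => one_ne_zero hc.1)
      exact ⟨by rw [h1], rfl⟩

lemma cond_two {t t' : Option σ} {v w : σ}
    (h : eo t + eo t' = Finsupp.single v 1 + Finsupp.single w 1) :
    (t = some v ∧ t' = some w) ∨ (t = some w ∧ t' = some v) := by
  have hd := congrArg Finsupp.degree h
  rw [degree_add, degree_add, degree_single, degree_single] at hd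
  cases t with
  | none =>
    rw [eo_none, map_zero] at hd
    have := degree_eo_le t'
    omega
  | some x =>
    cases t' with
    | none =>
      rw [eo_some, eo_none, degree_single, map_zero] at hd; omega
    | some y =>
      rw [eo_some, eo_some] at h
      rcases single_one_add_single_one_eq h with ⟨h1, h2⟩ | ⟨h1, h2⟩
      · exact Or.inl ⟨by rw [h1], by rw [h2]⟩
      · exact Or.inr ⟨by rw [h1], by rw [h2]⟩

lemma dich {ι : Type*} (f g : ι → ℂ) (hd : ∀ x, f x * g x = 0)
    (ho : ∀ x y, x ≠ y → f x * g y + f y * g x = 0) :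
    (∀ x, f x = 0) ∨ (∀ x, g x = 0) := by
  by_cases hf : ∀ x, f x = 0
  · exact Or.inl hf
  · right
    push_neg at hf
    obtain ⟨x0, hx0⟩ := hf
    have hgx0 : g x0 = 0 := (mul_eq_zero.mp (hd x0)).resolve_left hx0
    intro y
    by_cases hy : y = x0
    · rw [hy, hgx0]
    · have h1 := ho x0 y (fun h => hy h.symm)
      rw [hgx0, mul_zero, add_zero] at h1
      exact (mul_eq_zero.mp h1).resolve_left hx0

section Bilin
variable {A B : Type*} [Fintype A] [Fintype B] [DecidableEq A] [DecidableEq B]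

noncomputable def E : A × B → ((A ⊕ B) →₀ ℕ) :=
  fun q => Finsupp.single (Sum.inl q.1) 1 + Finsupp.single (Sum.inr q.2) 1

lemma E_def (q : A × B) :
    E q = Finsupp.single (Sum.inl q.1) 1 + Finsupp.single (Sum.inr q.2) 1 := rfl

lemma E_injective : Function.Injective (E (A := A) (B := B)) := by
  intro q q' h
  rcases single_one_add_single_one_eq h with ⟨h1, h2⟩ | ⟨h1, h2⟩
  · exact Prod.ext (Sum.inl_injective h1) (Sum.inr_injective h2)
  · exact absurd h1 Sum.inl_ne_inr

lemma degree_E (q : A × B) : Finsupp.degree (E q) = 2 := by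
  rw [E_def, degree_add, degree_single, degree_single]

lemma bilin_irred (M : A → B → ℂ) (a₀ a₁ : A) (b₀ b₁ : B)
    (hmin : M a₀ b₀ * M a₁ b₁ ≠ M a₀ b₁ * M a₁ b₀) :
    Irreducible (∑ q : A × B, monomial (E q) (M q.1 q.2) : MvPolynomial (A ⊕ B) ℂ) := by
  set Q : MvPolynomial (A ⊕ B) ℂ := ∑ q : A × B, monomial (E q) (M q.1 q.2) with hQdef
  have hcoeff : ∀ m, coeff m Q
      = ∑ q ∈ Finset.univ.filter (fun q : A × B => E q = m), M q.1 q.2 := by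
    intro m
    rw [hQdef, MvPolynomial.coeff_sum, Finset.sum_filter]
    exact Finset.sum_congr rfl fun q _ => MvPolynomial.coeff_monomial _ _ _
  have hex : ∃ ab : A × B, M ab.1 ab.2 ≠ 0 := by
    by_cases hz : M a₀ b₁ * M a₁ b₀ = 0
    · have hnz : M a₀ b₀ * M a₁ b₁ ≠ 0 := fun h => hmin (h.trans hz.symm)
      exact ⟨(a₀, b₀), (mul_ne_zero_iff.mp hnz).1⟩
    · exact ⟨(a₀, b₁), (mul_ne_zero_iff.mp hz).1⟩
  obtain ⟨⟨as, bs⟩, hMs⟩ := hex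
  have hQE : ∀ a b, coeff (E (a, b)) Q = M a b := by
    intro a b
    rw [hcoeff]
    have hf : Finset.univ.filter (fun q : A × B => E q = E (a, b)) = {(a, b)} := by
      ext q
      simp only [Finset.mem_filter, Finset.mem_univ, true_and, Finset.mem_singleton]
      exact ⟨fun h => E_injective h, fun h => by rw [h]⟩
    rw [hf, Finset.sum_singleton]
  have hQne : Q ≠ 0 := fun h0 => hMs (by rw [← hQE as bs, h0, MvPolynomial.coeff_zero])
  have hQ0 : coeff 0 Q = 0 := by
    rw [hcoeff, Finset.filter_false_of_mem, Finset.sum_empty]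
    intro q _ hE
    have hdq := congrArg Finsupp.degree hE
    rw [degree_E, map_zero] at hdq
    omega
  have hQ1 : ∀ v : A ⊕ B, coeff (Finsupp.single v 1) Q = 0 := by
    intro v
    rw [hcoeff, Finset.filter_false_of_mem, Finset.sum_empty]
    intro q _ hE
    have hdq := congrArg Finsupp.degree hE
    rw [degree_E, degree_single] at hdq
    omega
  have hQll : ∀ x y : A,
      coeff (Finsupp.single (Sum.inl x) 1 + Finsupp.single (Sum.inl y) 1) Q = 0 := by
    intro x y
    rw [hcoeff, Finset.filter_false_of_mem, Finset.sum_empty]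
    intro q _ hE
    rw [E_def] at hE
    rcases single_one_add_single_one_eq hE with ⟨-, h2⟩ | ⟨-, h2⟩
    · exact Sum.inr_ne_inl h2
    · exact Sum.inr_ne_inl h2
  have hQrr : ∀ x y : B,
      coeff (Finsupp.single (Sum.inr x) 1 + Finsupp.single (Sum.inr y) 1) Q = 0 := by
    intro x y
    rw [hcoeff, Finset.filter_false_of_mem, Finset.sum_empty]
    intro q _ hE
    rw [E_def] at hE
    rcases single_one_add_single_one_eq hE with ⟨h1, -⟩ | ⟨h1, -⟩
    · exact Sum.inl_ne_inr h1
    · exact Sum.inl_ne_inr h1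
  constructor
  · intro hu
    have hcc := hu.map (constantCoeff (σ := A ⊕ B) (R := ℂ))
    have h0 : constantCoeff Q = 0 := hQ0
    rw [h0] at hcc
    exact not_isUnit_zero hcc
  · intro g h hgh
    by_contra hcon
    push_neg at hcon
    obtain ⟨hgu, hhu⟩ := hcon
    have hg0 : g ≠ 0 := fun h0 => hQne (by rw [hgh, h0, zero_mul])
    have hh0 : h ≠ 0 := fun h0 => hQne (by rw [hgh, h0, mul_zero])
    have htd : Q.totalDegree = 2 := by
      apply le_antisymm
      · apply totalDegree_finsetSum_le
        intro q _
        refine (totalDegree_monomial_le _ _).trans ?_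
        have hid : ((E q).sum fun _ => id) = Finsupp.degree (E q) := rfl
        rw [hid, degree_E]
      · have hmem : E (as, bs) ∈ Q.support := mem_support_iff.mpr (by rw [hQE]; exact hMs)
        have hle := le_totalDegree hmem
        rwa [sum_eq_degree, degree_E] at hle
    by_cases hgc : g.totalDegree = 0
    · refine hgu ?_
      have hgC := eq_C_of_totalDegree_eq_zero hgc
      rw [hgC]
      refine (isUnit_iff_ne_zero.mpr fun hc0 => hg0 ?_).map (C : ℂ →+* _)
      rw [hgC, hc0, map_zero]
    by_cases hhc : h.totalDegree = 0
    · refine hhu ?_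
      have hhC := eq_C_of_totalDegree_eq_zero hhc
      rw [hhC]
      refine (isUnit_iff_ne_zero.mpr fun hc0 => hh0 ?_).map (C : ℂ →+* _)
      rw [hhC, hc0, map_zero]
    have hsum : g.totalDegree + h.totalDegree = 2 := by
      rw [← totalDegree_mul_eq hg0 hh0, ← hgh, htd]
    have hg1 : g.totalDegree = 1 := by omega
    have hh1 : h.totalDegree = 1 := by omega
    set gr : Option (A ⊕ B) → ℂ := fun t => coeff (eo t) g with hgrdef
    set hr : Option (A ⊕ B) → ℂ := fun t => coeff (eo t) h with hhrdef
    have hga : g = ∑ t : Option (A ⊕ B), monomial (eo t) (gr t) := affine (le_of_eq hg1)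
    have hha : h = ∑ t : Option (A ⊕ B), monomial (eo t) (hr t) := affine (le_of_eq hh1)
    have hmulc : ∀ m, coeff m Q =
        ∑ p ∈ Finset.univ.filter
          (fun p : Option (A ⊕ B) × Option (A ⊕ B) => eo p.1 + eo p.2 = m),
          gr p.1 * hr p.2 := by
      intro m
      conv_lhs => rw [hgh, hga, hha]
      rw [Finset.sum_mul_sum]
      simp only [monomial_mul]
      rw [Finset.sum_filter]
      rw [Fintype.sum_prod_type]
      simp only [MvPolynomial.coeff_sum, MvPolynomial.coeff_monomial]
    -- filter computations
    have f0 : Finset.univ.filter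
        (fun p : Option (A ⊕ B) × Option (A ⊕ B) => eo p.1 + eo p.2 = 0)
        = {((none : Option (A ⊕ B)), (none : Option (A ⊕ B)))} := by
      ext p
      simp only [Finset.mem_filter, Finset.mem_univ, true_and, Finset.mem_singleton]
      constructor
      · intro hp
        obtain ⟨h1, h2⟩ := cond_zero hp
        exact Prod.ext h1 h2
      · rintro rfl; simp
    have f1 : ∀ v : A ⊕ B, Finset.univ.filter
        (fun p : Option (A ⊕ B) × Option (A ⊕ B) => eo p.1 + eo p.2 = Finsupp.single v 1)
        = {((none : Option (A ⊕ B)), some v), (some v, (none : Option (A ⊕ B)))} := by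
      intro v
      ext p
      simp only [Finset.mem_filter, Finset.mem_univ, true_and, Finset.mem_insert,
        Finset.mem_singleton]
      constructor
      · intro hp
        rcases cond_one hp with ⟨h1, h2⟩ | ⟨h1, h2⟩
        · exact Or.inl (Prod.ext h1 h2)
        · exact Or.inr (Prod.ext h1 h2)
      · rintro (rfl | rfl) <;> simp
    have f2 : ∀ v w : A ⊕ B, v ≠ w → Finset.univ.filter
        (fun p : Option (A ⊕ B) × Option (A ⊕ B) =>
          eo p.1 + eo p.2 = Finsupp.single v 1 + Finsupp.single w 1)
        = {(some v, some w), (some w, some v)} := by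
      intro v w _
      ext p
      simp only [Finset.mem_filter, Finset.mem_univ, true_and, Finset.mem_insert,
        Finset.mem_singleton]
      constructor
      · intro hp
        rcases cond_two hp with ⟨h1, h2⟩ | ⟨h1, h2⟩
        · exact Or.inl (Prod.ext h1 h2)
        · exact Or.inr (Prod.ext h1 h2)
      · rintro (rfl | rfl)
        · simp
        · simp [add_comm]
    have fd : ∀ v : A ⊕ B, Finset.univ.filter
        (fun p : Option (A ⊕ B) × Option (A ⊕ B) =>
          eo p.1 + eo p.2 = Finsupp.single v 1 + Finsupp.single v 1)
        = {(some v, some v)} := by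
      intro v
      ext p
      simp only [Finset.mem_filter, Finset.mem_univ, true_and, Finset.mem_singleton]
      constructor
      · intro hp
        rcases cond_two hp with ⟨h1, h2⟩ | ⟨h1, h2⟩ <;> exact Prod.ext h1 h2
      · rintro rfl; simp
    -- the equations
    have EqA : gr none * hr none = 0 := by
      have hq := hmulc 0
      rw [hQ0, f0, Finset.sum_singleton] at hq
      exact hq.symm
    have EqB : ∀ v : A ⊕ B, gr none * hr (some v) + gr (some v) * hr none = 0 := by
      intro v
      have hq := hmulc (Finsupp.single v 1)
      rw [hQ1, f1, Finset.sum_pair (by simp)] at hq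
      exact hq.symm
    have EqC : ∀ (a : A) (b : B), M a b
        = gr (some (Sum.inl a)) * hr (some (Sum.inr b))
          + gr (some (Sum.inr b)) * hr (some (Sum.inl a)) := by
      intro a b
      have hq := hmulc (Finsupp.single (Sum.inl a) 1 + Finsupp.single (Sum.inr b) 1)
      rw [← E_def (a, b), hQE] at hq
      rw [E_def, f2 _ _ (by simp), Finset.sum_pair (by simp)] at hq
      exact hq
    have Eqll : ∀ x y : A, Sum.inl x ≠ (Sum.inl y : A ⊕ B) →
        gr (some (Sum.inl x)) * hr (some (Sum.inl y))
          + gr (some (Sum.inl y)) * hr (some (Sum.inl x)) = 0 := by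
      intro x y hxy
      have hq := hmulc (Finsupp.single (Sum.inl x) 1 + Finsupp.single (Sum.inl y) 1)
      rw [hQll, f2 _ _ hxy, Finset.sum_pair
        (fun hp => hxy (Option.some_injective _ (congrArg Prod.fst hp)))] at hq
      exact hq.symm
    have Eqlld : ∀ x : A, gr (some (Sum.inl x)) * hr (some (Sum.inl x)) = 0 := by
      intro x
      have hq := hmulc (Finsupp.single (Sum.inl x) 1 + Finsupp.single (Sum.inl x) 1)
      rw [hQll, fd, Finset.sum_singleton] at hq
      exact hq.symm
    have Eqrr : ∀ x y : B, Sum.inr x ≠ (Sum.inr y : A ⊕ B) →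
        gr (some (Sum.inr x)) * hr (some (Sum.inr y))
          + gr (some (Sum.inr y)) * hr (some (Sum.inr x)) = 0 := by
      intro x y hxy
      have hq := hmulc (Finsupp.single (Sum.inr x) 1 + Finsupp.single (Sum.inr y) 1)
      rw [hQrr, f2 _ _ hxy, Finset.sum_pair
        (fun hp => hxy (Option.some_injective _ (congrArg Prod.fst hp)))] at hq
      exact hq.symm
    have Eqrrd : ∀ x : B, gr (some (Sum.inr x)) * hr (some (Sum.inr x)) = 0 := by
      intro x
      have hq := hmulc (Finsupp.single (Sum.inr x) 1 + Finsupp.single (Sum.inr x) 1)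
      rw [hQrr, fd, Finset.sum_singleton] at hq
      exact hq.symm
    -- constant coefficients vanish
    have hzero_of_gr : (∀ t, gr t = 0) → False := by
      intro hall
      apply hg0
      rw [hga, Finset.sum_eq_zero]
      intro t _
      rw [hall t, map_zero]
    have hzero_of_hr : (∀ t, hr t = 0) → False := by
      intro hall
      apply hh0
      rw [hha, Finset.sum_eq_zero]
      intro t _
      rw [hall t, map_zero]
    have hnone : gr none = 0 ∧ hr none = 0 := by
      rcases mul_eq_zero.mp EqA with hgn | hhn
      · refine ⟨hgn, ?_⟩
        by_contra hhn
        apply hzero_of_gr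
        intro t
        cases t with
        | none => exact hgn
        | some v =>
          have hB := EqB v
          rw [hgn, zero_mul, zero_add] at hB
          exact (mul_eq_zero.mp hB).resolve_right hhn
      · refine ⟨?_, hhn⟩
        by_contra hgn
        apply hzero_of_hr
        intro t
        cases t with
        | none => exact hhn
        | some v =>
          have hB := EqB v
          rw [hhn, mul_zero, add_zero] at hB
          exact (mul_eq_zero.mp hB).resolve_left hgn
    -- dichotomies
    have dA := dich (fun x : A => gr (some (Sum.inl x))) (fun x : A => hr (some (Sum.inl x)))
      (fun x => Eqlld x) (fun x y hxy => Eqll x y (fun h => hxy (Sum.inl_injective h)))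
    have dB := dich (fun x : B => gr (some (Sum.inr x))) (fun x : B => hr (some (Sum.inr x)))
      (fun x => Eqrrd x) (fun x y hxy => Eqrr x y (fun h => hxy (Sum.inr_injective h)))
    rcases dA with hA | hA <;> rcases dB with hB | hB
    · -- g = 0
      apply hzero_of_gr
      intro t
      rcases t with - | (x | x)
      · exact hnone.1
      · exact hA x
      · exact hB x
    · -- hA : gr inl ≡ 0, hB : hr inr ≡ 0
      apply hmin
      have hA' : ∀ x : A, gr (some (Sum.inl x)) = 0 := hA
      have hM : ∀ a b, M a b = gr (some (Sum.inr b)) * hr (some (Sum.inl a)) := by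
        intro a b
        rw [EqC a b, hA' a, zero_mul, zero_add]
      rw [hM, hM, hM, hM]
      ring
    · -- hA : hr inl ≡ 0, hB : gr inr ≡ 0
      apply hmin
      have hA' : ∀ x : A, hr (some (Sum.inl x)) = 0 := hA
      have hM : ∀ a b, M a b = gr (some (Sum.inl a)) * hr (some (Sum.inr b)) := by
        intro a b
        rw [EqC a b, hA' a, mul_zero, add_zero]
      rw [hM, hM, hM, hM]
      ring
    · -- h = 0
      apply hzero_of_hr
      intro t
      rcases t with - | (x | x)
      · exact hnone.2
      · exact hA x
      · exact hB x

end Bilin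
end Stmt4Aux

namespace Stmt4Aux

lemma exists_C_of_isUnit {σ : Type*} [DecidableEq σ] {p : MvPolynomial σ ℂ} (h : IsUnit p) :
    ∃ r : ℂ, p = C r := by
  obtain ⟨q, hq⟩ := h.exists_right_inv
  have hp0 : p ≠ 0 := fun h0 => by rw [h0, zero_mul] at hq; exact one_ne_zero hq.symm
  have hq0 : q ≠ 0 := fun h0 => by rw [h0, mul_zero] at hq; exact one_ne_zero hq.symm
  have hdeg := totalDegree_mul_eq hp0 hq0
  rw [hq, totalDegree_one] at hdeg
  exact ⟨_, eq_C_of_totalDegree_eq_zero (by omega)⟩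

section Top
variable {k₁ k₂ : ℕ}

def IsTop (k₁ k₂ : ℕ) (s : Fin (k₁ + k₂) → Bool) : Prop :=
  ∀ i : Fin k₁, s (Fin.castAdd k₂ i) = true

instance (k₁ k₂ : ℕ) : DecidablePred (IsTop k₁ k₂) := fun s =>
  inferInstanceAs (Decidable (∀ i : Fin k₁, s (Fin.castAdd k₂ i) = true))

lemma isTop_append (s₂ : Fin k₂ → Bool) :
    IsTop k₁ k₂ (Fin.append (fun _ => true) s₂) := fun i => Fin.append_left _ _ i

lemma not_isTop_append {s₁ : Fin k₁ → Bool} (hs₁ : s₁ ≠ fun _ => true) (s₂ : Fin k₂ → Bool) :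
    ¬ IsTop k₁ k₂ (Fin.append s₁ s₂) := fun htop => hs₁ (funext fun i => by
      have h1 := htop i
      rwa [Fin.append_left] at h1)

lemma append_top_injective : Function.Injective
    (fun s₂ : Fin k₂ → Bool => Fin.append (fun _ => true : Fin k₁ → Bool) s₂) := by
  intro x y hxy
  funext j
  have h1 := congrFun hxy (Fin.natAdd k₁ j)
  simpa only [Fin.append_right] using h1

lemma image_append_top :
    Finset.univ.image (fun s₂ : Fin k₂ → Bool => Fin.append (fun _ => true : Fin k₁ → Bool) s₂)
      = Finset.univ.filter (IsTop k₁ k₂) := by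
  ext s
  simp only [Finset.mem_image, Finset.mem_filter, Finset.mem_univ, true_and]
  constructor
  · rintro ⟨s₂, -, rfl⟩
    exact isTop_append s₂
  · intro hs
    refine ⟨fun j => s (Fin.natAdd k₁ j), ?_⟩
    funext i
    refine Fin.addCases (fun i₁ => ?_) (fun j => ?_) i
    · rw [Fin.append_left, hs i₁]
    · rw [Fin.append_right]

end Top

noncomputable def Mmat {k₁ k₂ m₁ m₂ : ℕ} (c : (Fin (k₁ + k₂) → Bool) → ℂ)
    (d : (Fin (m₁ + m₂) → Bool) → ℂ) (α : ℂ)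
    (s : Fin (k₁ + k₂) → Bool) (u : Fin (m₁ + m₂) → Bool) : ℂ :=
  c s * d u - if IsTop k₁ k₂ s ∧ IsTop m₁ m₂ u then α * (c s * d u) else 0

lemma Mmat_def {k₁ k₂ m₁ m₂ : ℕ} (c : (Fin (k₁ + k₂) → Bool) → ℂ)
    (d : (Fin (m₁ + m₂) → Bool) → ℂ) (α : ℂ)
    (s : Fin (k₁ + k₂) → Bool) (u : Fin (m₁ + m₂) → Bool) :
    Mmat c d α s u
      = c s * d u - if IsTop k₁ k₂ s ∧ IsTop m₁ m₂ u then α * (c s * d u) else 0 := rfl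

end Stmt4Aux

theorem stmt4 (k₁ k₂ m₁ m₂ : ℕ) (hk : 1 ≤ k₁) (hm : 1 ≤ m₁)
    (c : (Fin (k₁ + k₂) → Bool) → ℂ) (d : (Fin (m₁ + m₂) → Bool) → ℂ)
    (hc1 : ∃ s₂ : Fin k₂ → Bool, c (Fin.append (fun _ => true) s₂) ≠ 0)
    (hd1 : ∃ u₂ : Fin m₂ → Bool, d (Fin.append (fun _ => true) u₂) ≠ 0)
    (hc2 : ∃ (s₁ : Fin k₁ → Bool) (s₂ : Fin k₂ → Bool),
      s₁ ≠ (fun _ => true) ∧ c (Fin.append s₁ s₂) ≠ 0)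
    (hd2 : ∃ (u₁ : Fin m₁ → Bool) (u₂ : Fin m₂ → Bool),
      u₁ ≠ (fun _ => true) ∧ d (Fin.append u₁ u₂) ≠ 0)
    (α : ℂ) (hα : α ≠ 0)
    (P : MvPolynomial ((Fin (k₁ + k₂) → Bool) ⊕ (Fin (m₁ + m₂) → Bool)) ℂ)
    (hP : P =
      (∑ s : Fin (k₁ + k₂) → Bool, MvPolynomial.C (c s) * MvPolynomial.X (Sum.inl s)) *
        (∑ u : Fin (m₁ + m₂) → Bool, MvPolynomial.C (d u) * MvPolynomial.X (Sum.inr u)) -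
      MvPolynomial.C α *
        ∑ s₂ : Fin k₂ → Bool, ∑ u₂ : Fin m₂ → Bool,
          MvPolynomial.C (c (Fin.append (fun _ => true) s₂) * d (Fin.append (fun _ => true) u₂)) *
            MvPolynomial.X (Sum.inl (Fin.append (fun _ => true) s₂)) *
            MvPolynomial.X (Sum.inr (Fin.append (fun _ => true) u₂))) :
    Irreducible P ∧ ¬ Decomposable P := by
  have key : P = ∑ q : (Fin (k₁ + k₂) → Bool) × (Fin (m₁ + m₂) → Bool),
      MvPolynomial.monomial (Stmt4Aux.E q) (Stmt4Aux.Mmat c d α q.1 q.2) := by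
    rw [hP]
    have part1 : (∑ s : Fin (k₁ + k₂) → Bool, MvPolynomial.C (c s) * MvPolynomial.X (Sum.inl s)) *
        (∑ u : Fin (m₁ + m₂) → Bool, MvPolynomial.C (d u) * MvPolynomial.X (Sum.inr u))
        = ∑ q : (Fin (k₁ + k₂) → Bool) × (Fin (m₁ + m₂) → Bool),
            MvPolynomial.monomial (Stmt4Aux.E q) (c q.1 * d q.2) := by
      rw [Finset.sum_mul_sum, Fintype.sum_prod_type]
      apply Finset.sum_congr rfl
      intro s _
      apply Finset.sum_congr rfl
      intro u _
      rw [MvPolynomial.C_mul_X_eq_monomial, MvPolynomial.C_mul_X_eq_monomial,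
        MvPolynomial.monomial_mul, Stmt4Aux.E_def]
    have part2 : MvPolynomial.C α *
        (∑ s₂ : Fin k₂ → Bool, ∑ u₂ : Fin m₂ → Bool,
          MvPolynomial.C (c (Fin.append (fun _ => true) s₂) * d (Fin.append (fun _ => true) u₂)) *
            MvPolynomial.X (Sum.inl (Fin.append (fun _ => true) s₂)) *
            MvPolynomial.X (Sum.inr (Fin.append (fun _ => true) u₂)))
        = ∑ q : (Fin (k₁ + k₂) → Bool) × (Fin (m₁ + m₂) → Bool),
            MvPolynomial.monomial (Stmt4Aux.E q)
            (if Stmt4Aux.IsTop k₁ k₂ q.1 ∧ Stmt4Aux.IsTop m₁ m₂ q.2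
              then α * (c q.1 * d q.2) else 0) := by
      have hterm : ∀ (s : Fin (k₁ + k₂) → Bool) (u : Fin (m₁ + m₂) → Bool),
          MvPolynomial.C α *
          (MvPolynomial.C (c s * d u) * MvPolynomial.X (Sum.inl s)
            * MvPolynomial.X (Sum.inr u)
            : MvPolynomial ((Fin (k₁ + k₂) → Bool) ⊕ (Fin (m₁ + m₂) → Bool)) ℂ)
          = MvPolynomial.monomial (Stmt4Aux.E (s, u)) (α * (c s * d u)) := by
        intro s u
        rw [Stmt4Aux.E_def]
        simp only [MvPolynomial.C_apply, MvPolynomial.X, MvPolynomial.monomial_mul, mul_one,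
          zero_add, one_mul]
      have step1 : (∑ q : (Fin (k₁ + k₂) → Bool) × (Fin (m₁ + m₂) → Bool),
            MvPolynomial.monomial (Stmt4Aux.E q)
            (if Stmt4Aux.IsTop k₁ k₂ q.1 ∧ Stmt4Aux.IsTop m₁ m₂ q.2
              then α * (c q.1 * d q.2) else 0))
          = ∑ q : (Fin (k₁ + k₂) → Bool) × (Fin (m₁ + m₂) → Bool),
            (if Stmt4Aux.IsTop k₁ k₂ q.1 ∧ Stmt4Aux.IsTop m₁ m₂ q.2
              then MvPolynomial.monomial (Stmt4Aux.E q) (α * (c q.1 * d q.2)) else 0) :=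
        Finset.sum_congr rfl fun q _ => by
          rw [apply_ite (MvPolynomial.monomial (Stmt4Aux.E q)), map_zero]
      rw [step1]
      conv_rhs => rw [← Finset.sum_filter]
      rw [show (Finset.univ : Finset ((Fin (k₁ + k₂) → Bool) × (Fin (m₁ + m₂) → Bool)))
        = Finset.univ ×ˢ Finset.univ from (Finset.univ_product_univ).symm]
      rw [Finset.filter_product (Stmt4Aux.IsTop k₁ k₂) (Stmt4Aux.IsTop m₁ m₂),
        Finset.sum_product]
      rw [← Stmt4Aux.image_append_top, ← Stmt4Aux.image_append_top]
      rw [Finset.sum_image (fun x _ y _ h => Stmt4Aux.append_top_injective h)]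
      rw [Finset.mul_sum]
      apply Finset.sum_congr rfl
      intro s₂ _
      rw [Finset.sum_image (fun x _ y _ h => Stmt4Aux.append_top_injective h)]
      rw [Finset.mul_sum]
      apply Finset.sum_congr rfl
      intro u₂ _
      exact hterm (Fin.append (fun _ => true) s₂) (Fin.append (fun _ => true) u₂)
    rw [part1, part2, ← Finset.sum_sub_distrib]
    apply Finset.sum_congr rfl
    intro q _
    rw [← map_sub, Stmt4Aux.Mmat_def]
  obtain ⟨s₂c, hcs⟩ := hc1
  obtain ⟨u₂c, hds⟩ := hd1
  obtain ⟨s₁n, s₂n, hs₁ne, hcn⟩ := hc2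
  obtain ⟨u₁n, u₂n, hu₁ne, hdn⟩ := hd2
  have hmin : Stmt4Aux.Mmat c d α (Fin.append (fun _ => true) s₂c) (Fin.append (fun _ => true) u₂c)
        * Stmt4Aux.Mmat c d α (Fin.append s₁n s₂n) (Fin.append u₁n u₂n)
      ≠ Stmt4Aux.Mmat c d α (Fin.append (fun _ => true) s₂c) (Fin.append u₁n u₂n)
        * Stmt4Aux.Mmat c d α (Fin.append s₁n s₂n) (Fin.append (fun _ => true) u₂c) := by
    rw [Stmt4Aux.Mmat_def, Stmt4Aux.Mmat_def, Stmt4Aux.Mmat_def, Stmt4Aux.Mmat_def]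
    rw [if_pos ⟨Stmt4Aux.isTop_append s₂c, Stmt4Aux.isTop_append u₂c⟩,
      if_neg (fun hcon => Stmt4Aux.not_isTop_append hs₁ne s₂n hcon.1),
      if_neg (fun hcon => Stmt4Aux.not_isTop_append hu₁ne u₂n hcon.2),
      if_neg (fun hcon => Stmt4Aux.not_isTop_append hs₁ne s₂n hcon.1),
      sub_zero, sub_zero, sub_zero]
    intro heq
    have hprod : α * (c (Fin.append (fun _ => true) s₂c) * (d (Fin.append (fun _ => true) u₂c)
        * (c (Fin.append s₁n s₂n) * d (Fin.append u₁n u₂n)))) ≠ 0 :=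
      mul_ne_zero hα (mul_ne_zero hcs (mul_ne_zero hds (mul_ne_zero hcn hdn)))
    exact hprod (by linear_combination -heq)
  have hirr : Irreducible P := by
    rw [key]
    exact Stmt4Aux.bilin_irred (Stmt4Aux.Mmat c d α) _ _ _ _ hmin
  refine ⟨hirr, ?_⟩
  rintro ⟨g, h, hgc, hhc, -, hgh⟩
  rcases hirr.isUnit_or_isUnit hgh with hu | hu
  · exact hgc (Stmt4Aux.exists_C_of_isUnit hu)
  · exact hhc (Stmt4Aux.exists_C_of_isUnit hu)
end

section
/- Let k = k_1 + k_2, m = m_1 + m_2, and n = n_1 + n_2 with k_1, m_1, n_1 ≥ 1. Work in the polynomial ring over ℂ with variables x_s (s ∈ {0,1}^k), z_u (u ∈ {0,1}^m), and w_v (v ∈ {0,1}^n). Write s = s_1 ∘ s_2, u = u_1 ∘ u_2, v = v_1 ∘ v_2 with s_i ∈ {0,1}^{k_i}, u_i ∈ {0,1}^{m_i}, v_i ∈ {0,1}^{n_i}. Let T_1 = Σ_s c_s·x_s and T_2 = Σ_{u,v} d_{u,v}·z_u·w_v, where the coefficients satisfy: there exists s_2 with c_{𝟙∘s_2} ≠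 0; there exist u_2, v_2 with d_{𝟙∘u_2, 𝟙∘v_2} ≠ 0; there exist s_1 ≠ 𝟙 and s_2 with c_{s_1∘s_2} ≠ 0; there exist u_1 ≠ 𝟙, u_2, and v with d_{u_1∘u_2, v} ≠ 0; and there exist u, v_1 ≠ 𝟙, and v_2 with d_{u, v_1∘v_2} ≠ 0. Fix a nonzero α ∈ ℂ and define P = T_1·T_2 − α·Σ_{s : s_1 = 𝟙} Σ_{u : u_1 = 𝟙} Σ_{v : v_1 = 𝟙} c_s·d_{u,v}·x_s·z_u·w_v. Then P is irreducible (and in particular indecomposable). -/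
open MvPolynomial

namespace Stmt5Aux

noncomputable def psi (A : Type*) (R : Type*) [CommRing R] :
    MvPolynomial A R →+* Polynomial (MvPolynomial A R) :=
  MvPolynomial.eval₂Hom (Polynomial.C.comp MvPolynomial.C)
    (fun a => Polynomial.X * Polynomial.C (MvPolynomial.X a))

variable {R : Type*} [CommRing R] {A : Type*}

@[simp] lemma psi_C (r : R) : psi A R (C r) = Polynomial.C (C r) := eval₂_C _ _ _
@[simp] lemma psi_X (a : A) : psi A R (X a) = Polynomial.X * Polynomial.C (X a) := eval₂_X _ _ _

lemma eval_one_psi (p : MvPolynomial A R) : (psi A R p).eval 1 = p := by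
  have h : (Polynomial.evalRingHom (1 : MvPolynomial A R)).comp (psi A R) = RingHom.id _ := by
    apply MvPolynomial.ringHom_ext <;> intro a <;> simp
  exact RingHom.congr_fun h p

lemma psi_injective : Function.Injective (psi A R) :=
  Function.LeftInverse.injective eval_one_psi

lemma eval_zero_psi (p : MvPolynomial A R) :
    (psi A R p).eval 0 = C (constantCoeff p) := by
  have h : (Polynomial.evalRingHom (0 : MvPolynomial A R)).comp (psi A R)
      = (MvPolynomial.C).comp (constantCoeff) := by
    apply MvPolynomial.ringHom_ext <;> intro a <;> simp
  exact RingHom.congr_fun h p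

lemma eq_C_of_psi_natDegree_zero {g : MvPolynomial A R} (h : (psi A R g).natDegree = 0) :
    g = C (constantCoeff g) := by
  have hs : psi A R g = Polynomial.C ((psi A R g).coeff 0) :=
    Polynomial.eq_C_of_natDegree_eq_zero h
  have h1 := eval_one_psi g
  have h0 := eval_zero_psi g
  rw [hs, Polynomial.eval_C] at h1 h0
  rw [← h1, h0]
  simp

lemma psi_lin {A' : Type*} [Fintype A'] (j : A' → A) (q : A' → R) :
    psi A R (∑ a, C (q a) * X (j a))
      = Polynomial.X * Polynomial.C (∑ a, C (q a) * X (j a)) := by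
  rw [map_sum, map_sum, Finset.mul_sum]
  refine Finset.sum_congr rfl fun a _ => ?_
  rw [map_mul, psi_C, psi_X, map_mul]
  ring

lemma factor_const {A' : Type*} [Fintype A'] [IsDomain R] (j : A' → A) (q : A' → R)
    (hq0 : (∑ a, C (q a) * X (j a) : MvPolynomial A R) ≠ 0)
    {g h : MvPolynomial A R} (hgh : (∑ a, C (q a) * X (j a)) = g * h) :
    g = C (constantCoeff g) ∨ h = C (constantCoeff h) := by
  have hg : g ≠ 0 := by rintro rfl; rw [zero_mul] at hgh; exact hq0 hgh
  have hh : h ≠ 0 := by rintro rfl; rw [mul_zero] at hgh; exact hq0 hgh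
  have hpg : psi A R g ≠ 0 := fun hz => hg (psi_injective (by simpa using hz))
  have hph : psi A R h ≠ 0 := fun hz => hh (psi_injective (by simpa using hz))
  have hd : (psi A R g).natDegree + (psi A R h).natDegree = 1 := by
    have hps := psi_lin j q
    rw [hgh, map_mul] at hps
    have hd' := congrArg Polynomial.natDegree hps
    rw [Polynomial.natDegree_mul hpg hph, mul_comm,
      Polynomial.natDegree_C_mul_X _ (hgh ▸ hq0)] at hd'
    exact hd'
  rcases Nat.eq_zero_or_pos (psi A R g).natDegree with h0 | hpos
  · exact Or.inl (eq_C_of_psi_natDegree_zero h0)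
  · right
    apply eq_C_of_psi_natDegree_zero
    omega


lemma coeff_CX [DecidableEq A] (r : R) (i b : A) :
    coeff (Finsupp.single b 1) (C r * X i : MvPolynomial A R) = if i = b then r else 0 := by
  rw [coeff_C_mul, coeff_X']
  by_cases h : i = b
  · subst h; simp
  · rw [if_neg (fun hh => h ((Finsupp.single_left_inj one_ne_zero).1 hh)), mul_zero, if_neg h]

lemma coeff_linsum {A' : Type*} [Fintype A'] [DecidableEq A] (j : A' → A) (q : A' → R) (b : A) :
    coeff (Finsupp.single b 1) (∑ a, C (q a) * X (j a) : MvPolynomial A R)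
      = ∑ a, if j a = b then q a else 0 := by
  rw [coeff_sum]
  exact Finset.sum_congr rfl fun a _ => coeff_CX _ _ _

lemma coeff_linsum_apply {A' : Type*} [Fintype A'] [DecidableEq A] [DecidableEq A'] {j : A' → A}
    (hj : Function.Injective j) (q : A' → R) (a₀ : A') :
    coeff (Finsupp.single (j a₀) 1) (∑ a, C (q a) * X (j a) : MvPolynomial A R) = q a₀ := by
  rw [coeff_linsum, Finset.sum_eq_single a₀]
  · rw [if_pos rfl]
  · exact fun a _ hne => if_neg (fun h => hne (hj h))
  · simp

lemma coeff_linsum_zero {A' : Type*} [Fintype A'] [DecidableEq A] {j : A' → A} (q : A' → R)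
    {b : A} (hb : ∀ a, j a ≠ b) :
    coeff (Finsupp.single b 1) (∑ a, C (q a) * X (j a) : MvPolynomial A R) = 0 := by
  rw [coeff_linsum]
  exact Finset.sum_eq_zero fun a _ => if_neg (hb a)

lemma C_dvd_coeff (ρ : R) {f : MvPolynomial A R} (h : C ρ ∣ f) (m : A →₀ ℕ) :
    ρ ∣ coeff m f := by
  obtain ⟨g, rfl⟩ := h
  exact ⟨coeff m g, coeff_C_mul m ρ g⟩

lemma key [Fintype A] [DecidableEq A] [IsDomain R] (q : A → R)
    (h0 : ∃ a, q a ≠ 0) (hgcd : ∀ r : R, (∀ a, r ∣ q a) → IsUnit r) :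
    Irreducible (∑ a, C (q a) * X a : MvPolynomial A R) := by
  obtain ⟨a₀, ha₀⟩ := h0
  have hco : ∀ a : A, coeff (Finsupp.single a 1) (∑ a, C (q a) * X a : MvPolynomial A R) = q a :=
    fun a => coeff_linsum_apply (Function.injective_id) q a
  have hf0 : (∑ a, C (q a) * X a : MvPolynomial A R) ≠ 0 := by
    intro h
    have hx := hco a₀
    rw [h, coeff_zero] at hx
    exact ha₀ hx.symm
  constructor
  · intro hu
    have hups := hu.map (psi A R)
    rw [show (∑ a, C (q a) * X a : MvPolynomial A R) = ∑ a, C (q a) * X (id a) from rfl,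
      psi_lin id] at hups
    have hdeg := Polynomial.natDegree_eq_zero_of_isUnit hups
    rw [mul_comm, Polynomial.natDegree_C_mul_X _ (show (∑ a, C (q a) * X (id a) : MvPolynomial A R) ≠ 0 from hf0)] at hdeg
    exact one_ne_zero hdeg
  · intro g h hgh
    rcases factor_const id q hf0 hgh with hg | hh
    · left
      have hdvd : ∀ a, constantCoeff g ∣ q a := by
        intro a
        refine ⟨coeff (Finsupp.single a 1) h, ?_⟩
        rw [← hco a, hgh, hg, coeff_C_mul, constantCoeff_C]
      rw [hg]
      exact (hgcd _ hdvd).map MvPolynomial.C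
    · right
      have hdvd : ∀ a, constantCoeff h ∣ q a := by
        intro a
        refine ⟨coeff (Finsupp.single a 1) g, ?_⟩
        rw [← hco a, hgh, hh, mul_comm, coeff_C_mul, constantCoeff_C]
      rw [hh]
      exact (hgcd _ hdvd).map MvPolynomial.C

lemma div_lin {A' : Type*} [Fintype A'] [IsDomain R] (j : A' → A) (q : A' → R)
    (h0 : (∑ a, C (q a) * X (j a) : MvPolynomial A R) ≠ 0)
    {r : MvPolynomial A R} (hr : r ∣ ∑ a, C (q a) * X (j a)) :
    (∃ ρ, r = C ρ) ∨
      ∃ t : R, t ≠ 0 ∧ (∑ a, C (q a) * X (j a) : MvPolynomial A R) = C t * r := by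
  obtain ⟨m, hm⟩ := hr
  rcases factor_const j q h0 hm with h | h
  · exact Or.inl ⟨_, h⟩
  · right
    refine ⟨constantCoeff m, fun ht => ?_, ?_⟩
    · rw [hm, h, ht, map_zero, mul_zero] at h0
      exact h0 rfl
    · rw [hm, h, mul_comm, constantCoeff_C]

lemma coeff_linsum_id [Fintype A] [DecidableEq A] (q : A → R) (a₀ : A) :
    coeff (Finsupp.single a₀ 1) (∑ a, C (q a) * X a : MvPolynomial A R) = q a₀ :=
  coeff_linsum_apply Function.injective_id q a₀

lemma div_lin_id [Fintype A] [IsDomain R] (q : A → R)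
    (h0 : (∑ a, C (q a) * X a : MvPolynomial A R) ≠ 0)
    {r : MvPolynomial A R} (hr : r ∣ ∑ a, C (q a) * X a) :
    (∃ ρ, r = C ρ) ∨
      ∃ t : R, t ≠ 0 ∧ (∑ a, C (q a) * X a : MvPolynomial A R) = C t * r :=
  div_lin id q h0 hr

lemma irreducible_of_map {S : Type*} [CommRing S] (e : R ≃+* S) {p : R}
    (h : Irreducible (e p)) : Irreducible p := by
  constructor
  · exact fun hu => h.not_isUnit (hu.map e)
  · intro a b hab
    rcases h.isUnit_or_isUnit (by rw [hab, map_mul]) with hu | hu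
    · left; simpa using hu.map e.symm.toRingHom
    · right; simpa using hu.map e.symm.toRingHom

lemma sumRingEquiv_eq_sumToIter {S₁ S₂ : Type*} (p : MvPolynomial (S₁ ⊕ S₂) R) :
    sumRingEquiv R S₁ S₂ p = sumToIter R S₁ S₂ p := by
  have h : (sumRingEquiv R S₁ S₂ : MvPolynomial (S₁ ⊕ S₂) R →+* _) = sumToIter R S₁ S₂ := by
    apply MvPolynomial.ringHom_ext
    · intro r; simp [sumToIter_C]
    · intro a; cases a <;> simp [sumToIter_Xl, sumToIter_Xr]
  exact RingHom.congr_fun h p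

lemma append_true_inj {k₁ k₂ : ℕ} :
    Function.Injective
      (fun s₂ : Fin k₂ → Bool => Fin.append (fun _ => true : Fin k₁ → Bool) s₂) := by
  intro a b h
  funext i
  have := congrFun h (Fin.natAdd k₁ i)
  simpa [Fin.append_right] using this

lemma eq_append_of_pk {k₁ k₂ : ℕ} {s : Fin (k₁ + k₂) → Bool}
    (hs : ∀ i : Fin k₁, s (Fin.castAdd k₂ i) = true) :
    Fin.append (fun _ => true) (fun i => s (Fin.natAdd k₁ i)) = s := by
  funext x
  induction x using Fin.addCases with
  | left i => rw [Fin.append_left, hs i]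
  | right i => rw [Fin.append_right]

lemma sum_append_eq {k₁ k₂ : ℕ} {M : Type*} [AddCommMonoid M]
    (F : (Fin (k₁ + k₂) → Bool) → M) :
    ∑ s₂ : Fin k₂ → Bool, F (Fin.append (fun _ => true) s₂)
      = ∑ s : Fin (k₁ + k₂) → Bool,
          if ∀ i : Fin k₁, s (Fin.castAdd k₂ i) = true then F s else 0 := by
  classical
  rw [← Finset.sum_filter]
  refine Finset.sum_nbij' (fun s₂ => Fin.append (fun _ => true) s₂)
    (fun s => fun i => s (Fin.natAdd k₁ i)) ?_ ?_ ?_ ?_ ?_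
  · intro a _
    simp only [Finset.mem_filter, Finset.mem_univ, true_and]
    intro i
    rw [Fin.append_left]
  · intro a _; exact Finset.mem_univ _
  · intro a _
    funext i
    simp [Fin.append_right]
  · intro s hs
    simp only [Finset.mem_filter, Finset.mem_univ, true_and] at hs
    exact eq_append_of_pk hs
  · intro a _; rfl


lemma eq_C_of_isUnit [IsDomain R] {g : MvPolynomial A R} (h : IsUnit g) :
    g = C (constantCoeff g) :=
  eq_C_of_psi_natDegree_zero (Polynomial.natDegree_eq_zero_of_isUnit (h.map (psi A R)))

lemma pk_append_true {k₁ k₂ : ℕ} (s₂ : Fin k₂ → Bool) (i : Fin k₁) :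
    Fin.append (fun _ => true) s₂ (Fin.castAdd k₂ i) = true :=
  Fin.append_left _ _ i

lemma not_pk_append {k₁ k₂ : ℕ} {s₁ : Fin k₁ → Bool} (h : s₁ ≠ fun _ => true)
    (s₂ : Fin k₂ → Bool) :
    ¬ (∀ i : Fin k₁, Fin.append s₁ s₂ (Fin.castAdd k₂ i) = true) := by
  intro hp
  apply h
  funext i
  rw [← Fin.append_left s₁ s₂ i]
  exact hp i

lemma append_ne {n₁ n₂ : ℕ} {v₁ : Fin n₁ → Bool} (h : v₁ ≠ fun _ => true)
    (v₂ v₂' : Fin n₂ → Bool) :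
    Fin.append (fun _ => true) v₂ ≠ Fin.append v₁ v₂' := by
  intro he
  apply h
  funext i
  have := congrFun he (Fin.castAdd n₂ i)
  rw [Fin.append_left, Fin.append_left] at this
  exact this.symm

end Stmt5Aux

namespace Stmt5Aux

noncomputable section Stage2

variable (m₁ m₂ n₁ n₂ : ℕ)
  (d : (Fin (m₁ + m₂) → Bool) → (Fin (n₁ + n₂) → Bool) → ℂ)

def T2v : MvPolynomial ((Fin (m₁ + m₂) → Bool) ⊕ (Fin (n₁ + n₂) → Bool)) ℂ :=
  ∑ u : Fin (m₁ + m₂) → Bool, ∑ v : Fin (n₁ + n₂) → Bool,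
    C (d u v) * X (Sum.inl u) * X (Sum.inr v)

def SSv : MvPolynomial ((Fin (m₁ + m₂) → Bool) ⊕ (Fin (n₁ + n₂) → Bool)) ℂ :=
  ∑ u₂ : Fin m₂ → Bool, ∑ v₂ : Fin n₂ → Bool,
    C (d (Fin.append (fun _ => true) u₂) (Fin.append (fun _ => true) v₂)) *
      X (Sum.inl (Fin.append (fun _ => true) u₂)) *
      X (Sum.inr (Fin.append (fun _ => true) v₂))

def Lf (u : Fin (m₁ + m₂) → Bool) : MvPolynomial (Fin (n₁ + n₂) → Bool) ℂ :=
  ∑ v : Fin (n₁ + n₂) → Bool, C (d u v) * X v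

def Lf' (u : Fin (m₁ + m₂) → Bool) : MvPolynomial (Fin (n₁ + n₂) → Bool) ℂ :=
  if ∀ i : Fin m₁, u (Fin.castAdd m₂ i) = true then
    ∑ v₂ : Fin n₂ → Bool,
      C (d u (Fin.append (fun _ => true) v₂)) * X (Fin.append (fun _ => true) v₂)
  else 0

lemma hFcalc :
    sumToIter ℂ _ _ (T2v m₁ m₂ n₁ n₂ d)
      = ∑ u : Fin (m₁ + m₂) → Bool, C (Lf m₁ m₂ n₁ n₂ d u) * X u := by
  rw [T2v, map_sum]
  refine Finset.sum_congr rfl fun u _ => ?_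
  rw [map_sum, Lf, map_sum, Finset.sum_mul]
  refine Finset.sum_congr rfl fun v _ => ?_
  rw [map_mul, map_mul, sumToIter_C, sumToIter_Xl, sumToIter_Xr, map_mul]
  ring

lemma hGcalc :
    sumToIter ℂ _ _ (SSv m₁ m₂ n₁ n₂ d)
      = ∑ u : Fin (m₁ + m₂) → Bool, C (Lf' m₁ m₂ n₁ n₂ d u) * X u := by
  have happ := sum_append_eq (k₁ := m₁) (k₂ := m₂)
    (M := MvPolynomial (Fin (m₁ + m₂) → Bool) (MvPolynomial (Fin (n₁ + n₂) → Bool) ℂ))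
    (F := fun u => C (∑ v₂ : Fin n₂ → Bool,
      C (d u (Fin.append (fun _ => true) v₂)) * X (Fin.append (fun _ => true) v₂)) * X u)
  beta_reduce at happ
  have step : ∀ u₂ ∈ (Finset.univ : Finset (Fin m₂ → Bool)),
      sumToIter ℂ (Fin (m₁ + m₂) → Bool) (Fin (n₁ + n₂) → Bool) (∑ v₂ : Fin n₂ → Bool,
        C (d (Fin.append (fun _ => true) u₂) (Fin.append (fun _ => true) v₂)) *
          X (Sum.inl (Fin.append (fun _ => true) u₂)) *
          X (Sum.inr (Fin.append (fun _ => true) v₂)))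
      = C (∑ v₂ : Fin n₂ → Bool,
          C (d (Fin.append (fun _ => true) u₂) (Fin.append (fun _ => true) v₂)) *
            X (Fin.append (fun _ => true) v₂)) *
          (X (Fin.append (fun _ => true) u₂) :
            MvPolynomial (Fin (m₁ + m₂) → Bool) (MvPolynomial (Fin (n₁ + n₂) → Bool) ℂ)) := by
    intro u₂ _
    rw [map_sum, map_sum, Finset.sum_mul]
    refine Finset.sum_congr rfl fun v₂ _ => ?_
    rw [map_mul, map_mul, sumToIter_C, sumToIter_Xl, sumToIter_Xr, map_mul]
    ring
  rw [SSv, map_sum, Finset.sum_congr rfl step, happ]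
  refine Finset.sum_congr rfl fun u _ => ?_
  rw [Lf']
  by_cases hp : ∀ i : Fin m₁, u (Fin.castAdd m₂ i) = true
  · rw [if_pos hp, if_pos hp]
  · rw [if_neg hp, if_neg hp, map_zero, zero_mul]

lemma stage2
    (hd1 : ∃ (u₂ : Fin m₂ → Bool) (v₂ : Fin n₂ → Bool),
      d (Fin.append (fun _ => true) u₂) (Fin.append (fun _ => true) v₂) ≠ 0)
    (hd2 : ∃ (u₁ : Fin m₁ → Bool) (u₂ : Fin m₂ → Bool) (v : Fin (n₁ + n₂) → Bool),
      u₁ ≠ (fun _ => true) ∧ d (Fin.append u₁ u₂) v ≠ 0)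
    (hd3 : ∃ (u : Fin (m₁ + m₂) → Bool) (v₁ : Fin n₁ → Bool) (v₂ : Fin n₂ → Bool),
      v₁ ≠ (fun _ => true) ∧ d u (Fin.append v₁ v₂) ≠ 0)
    (r : MvPolynomial ((Fin (m₁ + m₂) → Bool) ⊕ (Fin (n₁ + n₂) → Bool)) ℂ)
    (hrT : r ∣ T2v m₁ m₂ n₁ n₂ d) (hrS : r ∣ SSv m₁ m₂ n₁ n₂ d) : IsUnit r := by
  classical
  obtain ⟨u₂₀, v₂₀, hd1⟩ := hd1
  obtain ⟨u₁', u₂', v₀, hu₁', hd2⟩ := hd2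
  obtain ⟨u₀, v₁', v₂', hv₁', hd3⟩ := hd3
  set e₂ := sumRingEquiv ℂ (Fin (m₁ + m₂) → Bool) (Fin (n₁ + n₂) → Bool) with he₂
  have he₂app : ∀ p, e₂ p = sumToIter ℂ _ _ p := fun p => sumRingEquiv_eq_sumToIter p
  set u' : Fin (m₁ + m₂) → Bool := Fin.append u₁' u₂' with hu'def
  set u₁ : Fin (m₁ + m₂) → Bool := Fin.append (fun _ => true) u₂₀ with hu₁def
  set v' : Fin (n₁ + n₂) → Bool := Fin.append v₁' v₂' with hv'def
  have hLco : ∀ (u : Fin (m₁ + m₂) → Bool) (v : Fin (n₁ + n₂) → Bool),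
      coeff (Finsupp.single v 1) (Lf m₁ m₂ n₁ n₂ d u) = d u v := fun u v =>
    coeff_linsum_id (fun v => d u v) v
  have hLu' : Lf m₁ m₂ n₁ n₂ d u' ≠ 0 := by
    intro h
    have := hLco u' v₀
    rw [h, coeff_zero] at this
    exact hd2 this.symm
  have hLu₀ : Lf m₁ m₂ n₁ n₂ d u₀ ≠ 0 := by
    intro h
    have := hLco u₀ v'
    rw [h, coeff_zero] at this
    exact hd3 this.symm
  have hnpu' : ¬ (∀ i : Fin m₁, u' (Fin.castAdd m₂ i) = true) := not_pk_append hu₁' u₂'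
  have hLf'u' : Lf' m₁ m₂ n₁ n₂ d u' = 0 := if_neg hnpu'
  have hpu₁ : ∀ i : Fin m₁, u₁ (Fin.castAdd m₂ i) = true := pk_append_true u₂₀
  have hLf'u₁ : Lf' m₁ m₂ n₁ n₂ d u₁ = ∑ v₂ : Fin n₂ → Bool,
      C (d u₁ (Fin.append (fun _ => true) v₂)) * X (Fin.append (fun _ => true) v₂) :=
    if_pos hpu₁
  have hLu₁' : Lf' m₁ m₂ n₁ n₂ d u₁ ≠ 0 := by
    intro h
    have := coeff_linsum_apply (R := ℂ) (append_true_inj (k₁ := n₁))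
      (fun v₂ => d u₁ (Fin.append (fun _ => true) v₂)) v₂₀
    rw [← hLf'u₁, h, coeff_zero] at this
    exact hd1 this.symm
  have hcoF : ∀ u, coeff (Finsupp.single u 1)
      (∑ u : Fin (m₁ + m₂) → Bool, C (Lf m₁ m₂ n₁ n₂ d u) * X u) = Lf m₁ m₂ n₁ n₂ d u :=
    fun u => coeff_linsum_id (fun u => Lf m₁ m₂ n₁ n₂ d u) u
  have hcoG : ∀ u, coeff (Finsupp.single u 1)
      (∑ u : Fin (m₁ + m₂) → Bool, C (Lf' m₁ m₂ n₁ n₂ d u) * X u) = Lf' m₁ m₂ n₁ n₂ d u :=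
    fun u => coeff_linsum_id (fun u => Lf' m₁ m₂ n₁ n₂ d u) u
  have hF0 : (∑ u : Fin (m₁ + m₂) → Bool, C (Lf m₁ m₂ n₁ n₂ d u) * X u) ≠ 0 := by
    intro h
    have := hcoF u'
    rw [h, coeff_zero] at this
    exact hLu' this.symm
  have hG0 : (∑ u : Fin (m₁ + m₂) → Bool, C (Lf' m₁ m₂ n₁ n₂ d u) * X u) ≠ 0 := by
    intro h
    have := hcoG u₁
    rw [h, coeff_zero] at this
    exact hLu₁' this.symm
  have hrF : e₂ r ∣ ∑ u, C (Lf m₁ m₂ n₁ n₂ d u) * X u := by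
    rw [← hFcalc, ← he₂app]
    exact map_dvd e₂ hrT
  have hrG : e₂ r ∣ ∑ u, C (Lf' m₁ m₂ n₁ n₂ d u) * X u := by
    rw [← hGcalc, ← he₂app]
    exact map_dvd e₂ hrS
  have hunit : IsUnit (e₂ r) := by
    rcases div_lin_id (fun u => Lf m₁ m₂ n₁ n₂ d u) hF0 hrF with ⟨ρ, hρ⟩ | ⟨t, ht0, htF⟩
    · -- e₂ r = C ρ : common constant-in-z divisor
      have hρ0 : ρ ≠ 0 := by
        rintro rfl
        rw [map_zero] at hρ
        obtain ⟨m, hm⟩ := hrF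
        rw [hρ, zero_mul] at hm
        exact hF0 hm
      have hρL : ∀ u, ρ ∣ Lf m₁ m₂ n₁ n₂ d u := fun u => by
        have := C_dvd_coeff ρ (hρ ▸ hrF) (Finsupp.single u 1)
        rwa [hcoF u] at this
      have hρL' : ∀ u, ρ ∣ Lf' m₁ m₂ n₁ n₂ d u := fun u => by
        have := C_dvd_coeff ρ (hρ ▸ hrG) (Finsupp.single u 1)
        rwa [hcoG u] at this
      have hρunit : IsUnit ρ := by
        rcases div_lin_id (fun v => d u₀ v) hLu₀ (hρL u₀) with ⟨ρ₀, hρ₀⟩ | ⟨t, ht0, htL⟩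
        · have hρ₀0 : ρ₀ ≠ 0 := by rintro rfl; rw [map_zero] at hρ₀; exact hρ0 hρ₀
          rw [hρ₀]
          exact (Ne.isUnit hρ₀0).map MvPolynomial.C
        · rcases div_lin (fun v₂ : Fin n₂ → Bool => Fin.append (fun _ => true) v₂)
              (fun v₂ => d u₁ (Fin.append (fun _ => true) v₂))
              (hLf'u₁ ▸ hLu₁') (hLf'u₁ ▸ hρL' u₁) with ⟨ρ₀, hρ₀⟩ | ⟨t', ht'0, htL'⟩
          · have hρ₀0 : ρ₀ ≠ 0 := by rintro rfl; rw [map_zero] at hρ₀; exact hρ0 hρ₀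
            rw [hρ₀]
            exact (Ne.isUnit hρ₀0).map MvPolynomial.C
          · exfalso
            have hbig : C t * (∑ v₂ : Fin n₂ → Bool,
                C (d u₁ (Fin.append (fun _ => true) v₂)) * X (Fin.append (fun _ => true) v₂))
                = C t' * ∑ v, C (d u₀ v) * X v := by
              rw [htL', htL]
              ring
            have hco' := congrArg (coeff (Finsupp.single v' 1)) hbig
            rw [coeff_C_mul, coeff_C_mul,
              coeff_linsum_zero (fun v₂ => d u₁ (Fin.append (fun _ => true) v₂))
                (fun v₂ => append_ne hv₁' v₂ v₂'),
              coeff_linsum_id (fun v => d u₀ v) v', mul_zero] at hco'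
            rcases mul_eq_zero.1 hco'.symm with h | h
            · exact ht'0 h
            · exact hd3 h
      rw [hρ]
      exact hρunit.map MvPolynomial.C
    · -- F = C t * e₂ r
      rcases div_lin_id (fun u => Lf' m₁ m₂ n₁ n₂ d u) hG0 hrG with ⟨ρ, hρ⟩ | ⟨t', ht'0, htG⟩
      · exfalso
        rw [hρ] at htF
        have hth := congrArg (coeff (Finsupp.single u' 1)) htF
        rw [hcoF u', ← map_mul, coeff_C,
          if_neg (fun h => one_ne_zero (Finsupp.single_eq_zero.1 h.symm))] at hth
        exact hLu' hth
      · exfalso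
        have hbig : C t' * (∑ u, C (Lf m₁ m₂ n₁ n₂ d u) * X u)
            = C t * ∑ u, C (Lf' m₁ m₂ n₁ n₂ d u) * X u := by
          rw [htF, htG]; ring
        have hco' := congrArg (coeff (Finsupp.single u' 1)) hbig
        rw [coeff_C_mul, coeff_C_mul, hcoF u', hcoG u', hLf'u', mul_zero] at hco'
        rcases mul_eq_zero.1 hco' with h | h
        · exact ht'0 h
        · exact hLu' h
  have := hunit.map e₂.symm.toRingHom
  simpa using this

end Stage2

end Stmt5Aux

namespace Stmt5Aux

noncomputable section Stage1

variable (k₁ k₂ m₁ m₂ n₁ n₂ : ℕ)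
  (c : (Fin (k₁ + k₂) → Bool) → ℂ)
  (d : (Fin (m₁ + m₂) → Bool) → (Fin (n₁ + n₂) → Bool) → ℂ)
  (α : ℂ)

def qs (s : Fin (k₁ + k₂) → Bool) :
    MvPolynomial ((Fin (m₁ + m₂) → Bool) ⊕ (Fin (n₁ + n₂) → Bool)) ℂ :=
  C (c s) * T2v m₁ m₂ n₁ n₂ d -
    if ∀ i : Fin k₁, s (Fin.castAdd k₂ i) = true then
      C (α * c s) * SSv m₁ m₂ n₁ n₂ d
    else 0

lemma hPcalc :
    sumToIter ℂ (Fin (k₁ + k₂) → Bool)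
        ((Fin (m₁ + m₂) → Bool) ⊕ (Fin (n₁ + n₂) → Bool))
      ((∑ s : Fin (k₁ + k₂) → Bool, MvPolynomial.C (c s) * MvPolynomial.X (Sum.inl s)) *
        (∑ u : Fin (m₁ + m₂) → Bool, ∑ v : Fin (n₁ + n₂) → Bool,
          MvPolynomial.C (d u v) * MvPolynomial.X (Sum.inr (Sum.inl u)) *
            MvPolynomial.X (Sum.inr (Sum.inr v))) -
      MvPolynomial.C α *
        ∑ s₂ : Fin k₂ → Bool, ∑ u₂ : Fin m₂ → Bool, ∑ v₂ : Fin n₂ → Bool,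
          MvPolynomial.C (c (Fin.append (fun _ => true) s₂) *
              d (Fin.append (fun _ => true) u₂) (Fin.append (fun _ => true) v₂)) *
            MvPolynomial.X (Sum.inl (Fin.append (fun _ => true) s₂)) *
            MvPolynomial.X (Sum.inr (Sum.inl (Fin.append (fun _ => true) u₂))) *
            MvPolynomial.X (Sum.inr (Sum.inr (Fin.append (fun _ => true) v₂))))
    = ∑ s : Fin (k₁ + k₂) → Bool, C (qs k₁ k₂ m₁ m₂ n₁ n₂ c d α s) * X s := by
  classical
  have h1 : sumToIter ℂ (Fin (k₁ + k₂) → Bool)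
        ((Fin (m₁ + m₂) → Bool) ⊕ (Fin (n₁ + n₂) → Bool))
      (∑ s : Fin (k₁ + k₂) → Bool, MvPolynomial.C (c s) * MvPolynomial.X (Sum.inl s))
      = ∑ s : Fin (k₁ + k₂) → Bool, C (C (c s)) * X s := by
    rw [map_sum]
    exact Finset.sum_congr rfl fun s _ => by rw [map_mul, sumToIter_C, sumToIter_Xl]
  have h2 : sumToIter ℂ (Fin (k₁ + k₂) → Bool)
        ((Fin (m₁ + m₂) → Bool) ⊕ (Fin (n₁ + n₂) → Bool))
      (∑ u : Fin (m₁ + m₂) → Bool, ∑ v : Fin (n₁ + n₂) → Bool,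
        MvPolynomial.C (d u v) * MvPolynomial.X (Sum.inr (Sum.inl u)) *
          MvPolynomial.X (Sum.inr (Sum.inr v)))
      = C (T2v m₁ m₂ n₁ n₂ d) := by
    rw [T2v, map_sum, map_sum]
    refine Finset.sum_congr rfl fun u _ => ?_
    rw [map_sum, map_sum]
    refine Finset.sum_congr rfl fun v _ => ?_
    rw [map_mul, map_mul, sumToIter_C, sumToIter_Xr, sumToIter_Xr, map_mul, map_mul]
  have h3 : sumToIter ℂ (Fin (k₁ + k₂) → Bool)
        ((Fin (m₁ + m₂) → Bool) ⊕ (Fin (n₁ + n₂) → Bool))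
      (∑ s₂ : Fin k₂ → Bool, ∑ u₂ : Fin m₂ → Bool, ∑ v₂ : Fin n₂ → Bool,
        MvPolynomial.C (c (Fin.append (fun _ => true) s₂) *
            d (Fin.append (fun _ => true) u₂) (Fin.append (fun _ => true) v₂)) *
          MvPolynomial.X (Sum.inl (Fin.append (fun _ => true) s₂)) *
          MvPolynomial.X (Sum.inr (Sum.inl (Fin.append (fun _ => true) u₂))) *
          MvPolynomial.X (Sum.inr (Sum.inr (Fin.append (fun _ => true) v₂))))
      = ∑ s₂ : Fin k₂ → Bool,
          C (C (c (Fin.append (fun _ => true) s₂)) * SSv m₁ m₂ n₁ n₂ d) *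
            X (Fin.append (fun _ => true) s₂) := by
    rw [map_sum]
    refine Finset.sum_congr rfl fun s₂ _ => ?_
    rw [map_sum, SSv]
    simp only [map_sum, map_mul, sumToIter_C, sumToIter_Xl, sumToIter_Xr,
      Finset.mul_sum, Finset.sum_mul]
    refine Finset.sum_congr rfl fun u₂ _ => ?_
    refine Finset.sum_congr rfl fun v₂ _ => ?_
    ring
  rw [map_sub, map_mul, map_mul, h1, h2, sumToIter_C, h3, Finset.mul_sum]
  have happ := sum_append_eq (k₁ := k₁) (k₂ := k₂)
    (M := MvPolynomial (Fin (k₁ + k₂) → Bool)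
      (MvPolynomial ((Fin (m₁ + m₂) → Bool) ⊕ (Fin (n₁ + n₂) → Bool)) ℂ))
    (F := fun s => C (C α) * (C (C (c s) * SSv m₁ m₂ n₁ n₂ d) * X s))
  beta_reduce at happ
  rw [happ, Finset.sum_mul, ← Finset.sum_sub_distrib]
  refine Finset.sum_congr rfl fun s _ => ?_
  rw [qs]
  by_cases hp : ∀ i : Fin k₁, s (Fin.castAdd k₂ i) = true
  · rw [if_pos hp, if_pos hp]
    simp only [map_sub, map_mul, sub_mul]
    ring
  · rw [if_neg hp, if_neg hp, sub_zero, sub_zero]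
    simp only [map_mul]
    ring

lemma dvd_of_unit_mul {M : Type*} [CommMonoid M] {u x r : M} (hu : IsUnit u)
    (h : r ∣ u * x) : r ∣ x := by
  refine dvd_trans h ⟨↑hu.unit⁻¹, ?_⟩
  rw [mul_comm u x, mul_assoc, IsUnit.mul_val_inv, mul_one]

end Stage1

end Stmt5Aux

theorem stmt5 (k₁ k₂ m₁ m₂ n₁ n₂ : ℕ) (hk : 1 ≤ k₁) (hm : 1 ≤ m₁) (hn : 1 ≤ n₁)
    (c : (Fin (k₁ + k₂) → Bool) → ℂ)
    (d : (Fin (m₁ + m₂) → Bool) → (Fin (n₁ + n₂) → Bool) → ℂ)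
    (hc1 : ∃ s₂ : Fin k₂ → Bool, c (Fin.append (fun _ => true) s₂) ≠ 0)
    (hd1 : ∃ (u₂ : Fin m₂ → Bool) (v₂ : Fin n₂ → Bool),
      d (Fin.append (fun _ => true) u₂) (Fin.append (fun _ => true) v₂) ≠ 0)
    (hc2 : ∃ (s₁ : Fin k₁ → Bool) (s₂ : Fin k₂ → Bool),
      s₁ ≠ (fun _ => true) ∧ c (Fin.append s₁ s₂) ≠ 0)
    (hd2 : ∃ (u₁ : Fin m₁ → Bool) (u₂ : Fin m₂ → Bool) (v : Fin (n₁ + n₂) → Bool),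
      u₁ ≠ (fun _ => true) ∧ d (Fin.append u₁ u₂) v ≠ 0)
    (hd3 : ∃ (u : Fin (m₁ + m₂) → Bool) (v₁ : Fin n₁ → Bool) (v₂ : Fin n₂ → Bool),
      v₁ ≠ (fun _ => true) ∧ d u (Fin.append v₁ v₂) ≠ 0)
    (α : ℂ) (hα : α ≠ 0)
    (P : MvPolynomial
      ((Fin (k₁ + k₂) → Bool) ⊕ (Fin (m₁ + m₂) → Bool) ⊕ (Fin (n₁ + n₂) → Bool)) ℂ)
    (hP : P =
      (∑ s : Fin (k₁ + k₂) → Bool, MvPolynomial.C (c s) * MvPolynomial.X (Sum.inl s)) *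
        (∑ u : Fin (m₁ + m₂) → Bool, ∑ v : Fin (n₁ + n₂) → Bool,
          MvPolynomial.C (d u v) * MvPolynomial.X (Sum.inr (Sum.inl u)) *
            MvPolynomial.X (Sum.inr (Sum.inr v))) -
      MvPolynomial.C α *
        ∑ s₂ : Fin k₂ → Bool, ∑ u₂ : Fin m₂ → Bool, ∑ v₂ : Fin n₂ → Bool,
          MvPolynomial.C (c (Fin.append (fun _ => true) s₂) *
              d (Fin.append (fun _ => true) u₂) (Fin.append (fun _ => true) v₂)) *
            MvPolynomial.X (Sum.inl (Fin.append (fun _ => true) s₂)) *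
            MvPolynomial.X (Sum.inr (Sum.inl (Fin.append (fun _ => true) u₂))) *
            MvPolynomial.X (Sum.inr (Sum.inr (Fin.append (fun _ => true) v₂)))) :
    Irreducible P ∧ ¬ Decomposable P := by
  classical
  open Stmt5Aux in
  have hT2ne : T2v m₁ m₂ n₁ n₂ d ≠ 0 := by
    intro h
    obtain ⟨u₁', u₂', v₀, hu₁', hd2'⟩ := hd2
    have h' := congrArg (sumToIter ℂ (Fin (m₁ + m₂) → Bool) (Fin (n₁ + n₂) → Bool)) h
    rw [hFcalc, map_zero] at h'
    have h1 := congrArg (MvPolynomial.coeff (Finsupp.single (Fin.append u₁' u₂') 1)) h'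
    rw [coeff_linsum_id (fun u => Lf m₁ m₂ n₁ n₂ d u) (Fin.append u₁' u₂'),
      MvPolynomial.coeff_zero] at h1
    have h2 := congrArg (MvPolynomial.coeff (Finsupp.single v₀ 1)) h1
    rw [Lf, coeff_linsum_id (fun v => d (Fin.append u₁' u₂') v) v₀,
      MvPolynomial.coeff_zero] at h2
    exact hd2' h2
  have hirr : Irreducible P := by
    apply irreducible_of_map (sumRingEquiv ℂ (Fin (k₁ + k₂) → Bool)
      ((Fin (m₁ + m₂) → Bool) ⊕ (Fin (n₁ + n₂) → Bool)))
    have happ : (sumRingEquiv ℂ (Fin (k₁ + k₂) → Bool)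
        ((Fin (m₁ + m₂) → Bool) ⊕ (Fin (n₁ + n₂) → Bool))) P
        = sumToIter ℂ (Fin (k₁ + k₂) → Bool)
          ((Fin (m₁ + m₂) → Bool) ⊕ (Fin (n₁ + n₂) → Bool)) P :=
      Stmt5Aux.sumRingEquiv_eq_sumToIter P
    rw [happ, hP, hPcalc k₁ k₂ m₁ m₂ n₁ n₂ c d α]
    apply key
    · obtain ⟨s₁', s₂', hs₁', hcs'⟩ := hc2
      refine ⟨Fin.append s₁' s₂', ?_⟩
      rw [qs, if_neg (not_pk_append hs₁' s₂'), sub_zero]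
      refine mul_ne_zero (fun h => hcs' ?_) hT2ne
      have := congrArg (MvPolynomial.coeff 0) h
      simpa using this
    · intro r hr
      obtain ⟨s₂₀, hc1'⟩ := hc1
      obtain ⟨s₁', s₂', hs₁', hcs'⟩ := hc2
      have h1 := hr (Fin.append s₁' s₂')
      rw [qs, if_neg (not_pk_append hs₁' s₂'), sub_zero] at h1
      have hrT : r ∣ T2v m₁ m₂ n₁ n₂ d :=
        dvd_of_unit_mul ((Ne.isUnit hcs').map MvPolynomial.C) h1
      have h2 := hr (Fin.append (fun _ => true) s₂₀)
      rw [qs, if_pos (pk_append_true s₂₀)] at h2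
      have hrS : r ∣ SSv m₁ m₂ n₁ n₂ d := by
        have h3 := (Dvd.dvd.mul_left hrT
          (MvPolynomial.C (c (Fin.append (fun _ => true) s₂₀)))).sub h2
        rw [sub_sub_cancel] at h3
        exact dvd_of_unit_mul ((Ne.isUnit (mul_ne_zero hα hc1')).map MvPolynomial.C) h3
      exact stage2 m₁ m₂ n₁ n₂ d hd1 hd2 hd3 r hrT hrS
  refine ⟨hirr, ?_⟩
  rintro ⟨g, h, hg, hh, -, hfact⟩
  rcases hirr.isUnit_or_isUnit hfact with hu | hu
  · exact hg ⟨MvPolynomial.constantCoeff g, eq_C_of_isUnit hu⟩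
  · exact hh ⟨MvPolynomial.constantCoeff h, eq_C_of_isUnit hu⟩
end
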